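/- arXiv:1911.06119 — 8 statements merged into one kernel-verified Lean document; each statement's English description precedes it below -/
import Mathlib

section
/- Suppose J is symmetric with respect to each component. If (λ, φ) is a principal eigenpair of −L (for given parameters D > 0, σ > 0, k ≥ 0), then λ ≤ −(1/(|Ω|·T)) ∫₀^T ∫_Ω a(t,x) dx dt. -/
open MeasureTheory Filter Topology

noncomputable def nlOp {N : ℕ} (Ω : Set (EuclideanSpace ℝ (Fin N)))
    (J : EuclideanSpace ℝ (Fin N) → ℝ) (a : ℝ → EuclideanSpace ℝ (Fin N) → ℝ)
    (D σ k : ℝ) (u : ℝ → EuclideanSpace ℝ (Fin N) → ℝ)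
    (t : ℝ) (x : EuclideanSpace ℝ (Fin N)) : ℝ :=
  -(deriv (fun s => u s x) t)
    + (D / σ ^ ((N : ℝ) + k)) * (∫ y in Ω, J (σ⁻¹ • (x - y)) * (u t y - u t x))
    + a t x * u t x

def memX {N : ℕ} (Ω : Set (EuclideanSpace ℝ (Fin N))) (T : ℝ)
    (u : ℝ → EuclideanSpace ℝ (Fin N) → ℝ) : Prop :=
  ContinuousOn (fun p : ℝ × EuclideanSpace ℝ (Fin N) => u p.1 p.2)
    (Set.univ ×ˢ closure Ω) ∧
  (∀ x ∈ closure Ω, ContDiff ℝ 1 fun t => u t x) ∧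
  (∀ t x, u (t + T) x = u t x)

def memXpp {N : ℕ} (Ω : Set (EuclideanSpace ℝ (Fin N))) (T : ℝ)
    (u : ℝ → EuclideanSpace ℝ (Fin N) → ℝ) : Prop :=
  memX Ω T u ∧ ∀ t : ℝ, ∀ x ∈ closure Ω, 0 < u t x

def isPEigenpair {N : ℕ} (Ω : Set (EuclideanSpace ℝ (Fin N)))
    (J : EuclideanSpace ℝ (Fin N) → ℝ) (a : ℝ → EuclideanSpace ℝ (Fin N) → ℝ)
    (T D σ k : ℝ) (lam : ℝ) (u : ℝ → EuclideanSpace ℝ (Fin N) → ℝ) : Prop :=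
  memXpp Ω T u ∧
    ∀ t : ℝ, ∀ x ∈ closure Ω, nlOp Ω J a D σ k u t x + lam * u t x = 0

lemma J_neg {N : ℕ} (J : EuclideanSpace ℝ (Fin N) → ℝ)
    (hJsym : ∀ (i : Fin N) (x : EuclideanSpace ℝ (Fin N)),
      J (WithLp.toLp 2 (Function.update x i (-(x i)))) = J x) (z : EuclideanSpace ℝ (Fin N)) :
    J (-z) = J z := by
  classical
  have key : ∀ S : Finset (Fin N), J (WithLp.toLp 2 (S.piecewise (⇑(-z)) ⇑z)) = J z := by
    intro S
    induction S using Finset.induction_on with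
    | empty => rw [Finset.piecewise_empty, WithLp.toLp_ofLp]
    | @insert j S hj ih =>
      rw [Finset.piecewise_insert]
      have hzj : (-z) j = -(S.piecewise (⇑(-z)) ⇑z) j := by
        rw [Finset.piecewise_eq_of_notMem _ _ _ hj]; rfl
      have hJ' := hJsym j (WithLp.toLp 2 (S.piecewise (⇑(-z)) ⇑z))
      simp only [WithLp.ofLp_toLp] at hJ'
      rw [hzj, hJ', ih]
  have := key Finset.univ
  rwa [Finset.piecewise_univ, WithLp.toLp_ofLp] at this

set_option maxHeartbeats 2000000 in
theorem eigenvalue_upper_bound_average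
    (N : ℕ) (hN : 1 ≤ N)
    (Ω : Set (EuclideanSpace ℝ (Fin N)))
    (hΩne : Ω.Nonempty) (hΩopen : IsOpen Ω) (hΩbdd : Bornology.IsBounded Ω)
    (hΩconn : IsConnected Ω)
    (J : EuclideanSpace ℝ (Fin N) → ℝ)
    (hJcont : Continuous J) (hJnonneg : ∀ x, 0 ≤ J x)
    (γ : ℝ) (hγ : 0 < γ)
    (hJsupp : Function.support J ⊆ Metric.ball (0 : EuclideanSpace ℝ (Fin N)) γ)
    (hJ0 : 0 < J 0) (hJint : ∫ x, J x = 1)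
    (hJsym : ∀ (i : Fin N) (x : EuclideanSpace ℝ (Fin N)),
      J (WithLp.toLp 2 (Function.update x i (-(x i)))) = J x)
    (T : ℝ) (hT : 0 < T)
    (a : ℝ → EuclideanSpace ℝ (Fin N) → ℝ)
    (hacont : Continuous fun p : ℝ × EuclideanSpace ℝ (Fin N) => a p.1 p.2)
    (haper : ∀ t x, a (t + T) x = a t x)
    (D σ k : ℝ) (hD : 0 < D) (hσ : 0 < σ) (hk : 0 ≤ k)
    (lam : ℝ) (φ : ℝ → EuclideanSpace ℝ (Fin N) → ℝ)
    (heig : isPEigenpair Ω J a T D σ k lam φ) :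
    lam ≤ -(1 / ((volume Ω).toReal * T)) * ∫ t in (0:ℝ)..T, ∫ x in Ω, a t x := by
  obtain ⟨⟨⟨hφcont, hφC1, hφper⟩, hφpos⟩, heq⟩ := heig
  -- basic facts
  have hclcomp : IsCompact (closure Ω) := hΩbdd.isCompact_closure
  have hΩsub : Ω ⊆ closure Ω := subset_closure
  have hΩmeas : MeasurableSet Ω := hΩopen.measurableSet
  have hΩfin : volume Ω < ⊤ := hΩbdd.measure_lt_top
  have hΩvpos : 0 < volume Ω := hΩopen.measure_pos volume hΩne
  set V : ℝ := (volume Ω).toReal with hVdef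
  have hV : 0 < V := ENNReal.toReal_pos hΩvpos.ne' hΩfin.ne
  set c : ℝ := D / σ ^ ((N : ℝ) + k) with hcdef
  have hc : 0 < c := div_pos hD (Real.rpow_pos_of_pos hσ _)
  set I : ℝ → EuclideanSpace ℝ (Fin N) → ℝ := fun t x => ∫ y in Ω, J (σ⁻¹ • (x - y)) * (φ t y - φ t x) with hIdef
  set h : ℝ → EuclideanSpace ℝ (Fin N) → ℝ := fun t x => c * I t x / φ t x with hhdef
  -- the eigen-equation, restated
  have hkey : ∀ t : ℝ, ∀ x ∈ closure Ω,
      deriv (fun s => φ s x) t = c * I t x + (a t x + lam) * φ t x := by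
    intro t x hx
    have := heq t x hx
    simp only [nlOp] at this
    simp only [hIdef, hcdef]
    linarith
  have hHdef : ∀ t : ℝ, ∀ x ∈ closure Ω,
      h t x = deriv (fun s => φ s x) t / φ t x - a t x - lam := by
    intro t x hx
    have hp := hφpos t x hx
    rw [hkey t x hx]
    simp only [hhdef]
    field_simp
    ring
  
  -- continuity of a in t for fixed x
  have hacx : ∀ x : EuclideanSpace ℝ (Fin N), Continuous fun t => a t x := fun x =>
    hacont.comp (continuous_id.prodMk continuous_const)
  -- per-x time integral identity
  have hTime : ∀ x ∈ closure Ω,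
      ∫ t in (0:ℝ)..T, h t x = -(∫ t in (0:ℝ)..T, a t x) - lam * T := by
    intro x hx
    have hC1 := hφC1 x hx
    have hfpos : ∀ t, 0 < φ t x := fun t => hφpos t x hx
    have hder : ∀ t : ℝ, HasDerivAt (fun s => φ s x) (deriv (fun s => φ s x) t) t :=
      fun t => ((hC1.differentiable one_ne_zero) t).hasDerivAt
    have hdc : Continuous (deriv (fun s => φ s x)) := hC1.continuous_deriv le_rfl
    have hcontq : Continuous fun t => deriv (fun s => φ s x) t / φ t x :=
      hdc.div hC1.continuous fun t => (hfpos t).ne'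
    have hFTC : ∫ t in (0:ℝ)..T, deriv (fun s => φ s x) t / φ t x
        = Real.log (φ T x) - Real.log (φ 0 x) := by
      apply intervalIntegral.integral_eq_sub_of_hasDerivAt
      · intro t _
        exact (hder t).log (hfpos t).ne'
      · exact hcontq.intervalIntegrable 0 T
    have hfT : φ T x = φ 0 x := by simpa using hφper 0 x
    have hzero : ∫ t in (0:ℝ)..T, deriv (fun s => φ s x) t / φ t x = 0 := by
      rw [hFTC, hfT, sub_self]
    have h1 : ∫ t in (0:ℝ)..T, h t x
        = ∫ t in (0:ℝ)..T, (deriv (fun s => φ s x) t / φ t x - a t x - lam) :=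
      intervalIntegral.integral_congr fun t _ => hHdef t x hx
    rw [h1, intervalIntegral.integral_sub (show
        IntervalIntegrable (fun t => deriv (fun s => φ s x) t / φ t x - a t x) volume 0 T from
        (hcontq.sub (hacx x)).intervalIntegrable 0 T)
      intervalIntegrable_const, intervalIntegral.integral_sub (hcontq.intervalIntegrable 0 T)
      ((hacx x).intervalIntegrable 0 T), hzero, intervalIntegral.integral_const, smul_eq_mul]
    ring
  -- extrema of φ on [0,T] × closure Ω
  obtain ⟨x₀, hx₀⟩ := hΩne
  have hKcomp : IsCompact (Set.Icc (0:ℝ) T ×ˢ closure Ω) := isCompact_Icc.prod hclcomp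
  have hKne : (Set.Icc (0:ℝ) T ×ˢ closure Ω).Nonempty :=
    ⟨(0, x₀), Set.mem_prod.2 ⟨Set.left_mem_Icc.2 hT.le, hΩsub hx₀⟩⟩
  have hφconK : ContinuousOn (fun p : ℝ × EuclideanSpace ℝ (Fin N) => φ p.1 p.2)
      (Set.Icc (0:ℝ) T ×ˢ closure Ω) :=
    hφcont.mono (Set.prod_mono_left (Set.subset_univ _))
  obtain ⟨pm, hpmK, hpm⟩ := hKcomp.exists_isMinOn hKne hφconK
  obtain ⟨pM, hpMK, hpM⟩ := hKcomp.exists_isMaxOn hKne hφconK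
  set m : ℝ := φ pm.1 pm.2 with hmdef
  set M : ℝ := φ pM.1 pM.2 with hMdef
  have hm : 0 < m := hφpos pm.1 pm.2 hpmK.2
  have hbounds : ∀ t ∈ Set.Icc (0:ℝ) T, ∀ x ∈ closure Ω, m ≤ φ t x ∧ φ t x ≤ M := by
    intro t ht x hxcl
    constructor
    · simpa using hpm (Set.mk_mem_prod ht hxcl)
    · simpa using hpM (Set.mk_mem_prod ht hxcl)
  have hM : 0 < M := by
    have h0 := hbounds 0 (Set.left_mem_Icc.2 hT.le) x₀ (hΩsub hx₀)
    linarith [h0.1, h0.2, hm]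
  -- bound for J
  obtain ⟨z₀, hz₀K, hz₀⟩ := (isCompact_closedBall (0 : EuclideanSpace ℝ (Fin N)) γ).exists_isMaxOn
    ⟨0, Metric.mem_closedBall_self hγ.le⟩ hJcont.continuousOn
  set CJ : ℝ := J z₀ with hCJdef
  have hCJ0 : 0 ≤ CJ := (hJnonneg 0).trans (hz₀ (Metric.mem_closedBall_self hγ.le))
  have hJbd : ∀ z, J z ≤ CJ := by
    intro z
    by_cases hz : z ∈ Metric.closedBall (0 : EuclideanSpace ℝ (Fin N)) γ
    · exact hz₀ hz
    · have hz0 : J z = 0 := by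
        by_contra hne
        exact hz (Metric.ball_subset_closedBall (hJsupp (Function.mem_support.2 hne)))
      rw [hz0]; exact hCJ0
  -- bound for I and h
  have hIbd : ∀ t ∈ Set.Icc (0:ℝ) T, ∀ x ∈ closure Ω, |I t x| ≤ CJ * M * V := by
    intro t ht x hxcl
    have hnorm : ‖∫ y in Ω, J (σ⁻¹ • (x - y)) * (φ t y - φ t x)‖
        ≤ CJ * M * (volume Ω).toReal := by
      apply norm_setIntegral_le_of_norm_le_const hΩfin
      intro y hy
      have h1 := hbounds t ht x hxcl
      have h2 := hbounds t ht y (hΩsub hy)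
      have h3 := hφpos t x hxcl
      have h4 := hφpos t y (hΩsub hy)
      have hd : |φ t y - φ t x| ≤ M := abs_le.2 ⟨by linarith [h1.2, h4], by linarith [h2.2, h3]⟩
      rw [Real.norm_eq_abs, abs_mul, abs_of_nonneg (hJnonneg _)]
      exact mul_le_mul (hJbd _) hd (abs_nonneg _) hCJ0
    simpa [hIdef, Real.norm_eq_abs, hVdef] using hnorm
  set C : ℝ := c * (CJ * M * V) / m with hCdef
  have hhbd : ∀ t ∈ Set.Icc (0:ℝ) T, ∀ x ∈ closure Ω, |h t x| ≤ C := by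
    intro t ht x hxcl
    have h3 := hφpos t x hxcl
    have habs : |h t x| = c * |I t x| / φ t x := by
      simp only [hhdef]
      rw [abs_div, abs_mul, abs_of_pos hc, abs_of_pos h3]
    rw [habs, hCdef]
    exact div_le_div₀ (by positivity)
      (mul_le_mul_of_nonneg_left (hIbd t ht x hxcl) hc.le) hm (hbounds t ht x hxcl).1
  -- measure-theoretic setup
  haveI hfinΩ : IsFiniteMeasure (volume.restrict Ω) :=
    ⟨by rwa [Measure.restrict_apply_univ]⟩
  haveI hfinT : IsFiniteMeasure (volume.restrict (Set.Ioc (0:ℝ) T)) :=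
    ⟨by rw [Measure.restrict_apply_univ]; exact measure_Ioc_lt_top⟩
  have hprodrw : (volume.restrict Ω).prod (volume.restrict (Set.Ioc (0:ℝ) T))
      = ((volume : Measure (EuclideanSpace ℝ (Fin N))).prod (volume : Measure ℝ)).restrict
        (Ω ×ˢ Set.Ioc (0:ℝ) T) := Measure.prod_restrict Ω (Set.Ioc 0 T)
  have hSclosed : IsClosed (closure Ω ×ˢ (Set.univ : Set ℝ)) :=
    isClosed_closure.prod isClosed_univ
  have hmono : ((volume : Measure (EuclideanSpace ℝ (Fin N))).prod volume).restrict
        (Ω ×ˢ Set.Ioc (0:ℝ) T)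
      ≤ ((volume : Measure (EuclideanSpace ℝ (Fin N))).prod volume).restrict
        (closure Ω ×ˢ (Set.univ : Set ℝ)) :=
    Measure.restrict_mono (Set.prod_mono hΩsub (Set.subset_univ _)) le_rfl
  have haesm_of_contOn : ∀ F : EuclideanSpace ℝ (Fin N) × ℝ → ℝ,
      ContinuousOn F (closure Ω ×ˢ (Set.univ : Set ℝ)) →
      AEStronglyMeasurable F
        ((volume.restrict Ω).prod (volume.restrict (Set.Ioc (0:ℝ) T))) := by
    intro F hF
    rw [hprodrw]
    exact (hF.aestronglyMeasurable hSclosed.measurableSet).mono_measure hmono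
  have hΦ'cont : ContinuousOn (fun p : EuclideanSpace ℝ (Fin N) × ℝ => φ p.2 p.1)
      (closure Ω ×ˢ (Set.univ : Set ℝ)) := by
    apply hφcont.comp continuous_swap.continuousOn
    intro p hp
    exact ⟨Set.mem_univ _, hp.1⟩
  have hdq : ∀ n : ℕ, AEStronglyMeasurable
      (fun p : EuclideanSpace ℝ (Fin N) × ℝ =>
        (φ (p.2 + ((n:ℝ)+1)⁻¹) p.1 - φ p.2 p.1) * ((n:ℝ)+1))
      ((volume.restrict Ω).prod (volume.restrict (Set.Ioc (0:ℝ) T))) := by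
    intro n
    apply haesm_of_contOn
    apply ContinuousOn.mul _ continuousOn_const
    apply ContinuousOn.sub _ hΦ'cont
    have hcsh : Continuous fun p : EuclideanSpace ℝ (Fin N) × ℝ =>
        ((p.1, p.2 + ((n:ℝ)+1)⁻¹) : EuclideanSpace ℝ (Fin N) × ℝ) := by fun_prop
    exact hΦ'cont.comp hcsh.continuousOn fun p hp => ⟨hp.1, Set.mem_univ _⟩
  have hderaesm : AEStronglyMeasurable
      (fun p : EuclideanSpace ℝ (Fin N) × ℝ => deriv (fun s => φ s p.1) p.2)
      ((volume.restrict Ω).prod (volume.restrict (Set.Ioc (0:ℝ) T))) := by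
    apply aestronglyMeasurable_of_tendsto_ae atTop hdq
    rw [hprodrw]
    filter_upwards [ae_restrict_mem (hΩmeas.prod measurableSet_Ioc)] with p hp
    have hx := hΩsub hp.1
    have hDer : HasDerivAt (fun s => φ s p.1) (deriv (fun s => φ s p.1) p.2) p.2 :=
      (((hφC1 p.1 hx).differentiable one_ne_zero) p.2).hasDerivAt
    have hslope := hasDerivAt_iff_tendsto_slope.1 hDer
    have hu : Tendsto (fun n : ℕ => p.2 + ((n:ℝ)+1)⁻¹) atTop (𝓝[≠] p.2) := by
      apply tendsto_nhdsWithin_of_tendsto_nhds_of_eventually_within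
      · have hinv : Tendsto (fun n : ℕ => ((n:ℝ)+1)⁻¹) atTop (𝓝 0) := by
          simpa only [one_div] using (show Tendsto (fun n : ℕ => 1 / ((n:ℝ) + 1)) atTop (𝓝 0) from
            tendsto_one_div_add_atTop_nhds_zero_nat)
        simpa using tendsto_const_nhds.add hinv
      · filter_upwards with n
        have hlt : (0:ℝ) < ((n:ℝ)+1)⁻¹ := by positivity
        exact ne_of_gt (lt_add_of_pos_right _ hlt)
    have hcomp := hslope.comp hu
    convert hcomp using 1
    funext n
    rw [Function.comp_apply, slope_def_field, add_sub_cancel_left]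
    field_simp
  have hPaesm : AEStronglyMeasurable
      (fun p : EuclideanSpace ℝ (Fin N) × ℝ => h p.2 p.1)
      ((volume.restrict Ω).prod (volume.restrict (Set.Ioc (0:ℝ) T))) := by
    have haesm2 : AEStronglyMeasurable
        (fun p : EuclideanSpace ℝ (Fin N) × ℝ =>
          deriv (fun s => φ s p.1) p.2 / φ p.2 p.1 - a p.2 p.1 - lam)
        ((volume.restrict Ω).prod (volume.restrict (Set.Ioc (0:ℝ) T))) := by
      apply AEStronglyMeasurable.sub
      apply AEStronglyMeasurable.sub
      · exact (hderaesm.aemeasurable.div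
          (haesm_of_contOn _ hΦ'cont).aemeasurable).aestronglyMeasurable
      · exact (hacont.comp continuous_swap).aestronglyMeasurable
      · exact aestronglyMeasurable_const
    apply haesm2.congr
    rw [hprodrw]
    filter_upwards [ae_restrict_mem (hΩmeas.prod measurableSet_Ioc)] with p hp
    exact (hHdef p.2 p.1 (hΩsub hp.1)).symm
  have hPint : Integrable (fun p : EuclideanSpace ℝ (Fin N) × ℝ => h p.2 p.1)
      ((volume.restrict Ω).prod (volume.restrict (Set.Ioc (0:ℝ) T))) := by
    refine ⟨hPaesm, HasFiniteIntegral.of_bounded (C := C) ?_⟩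
    rw [hprodrw]
    filter_upwards [ae_restrict_mem (hΩmeas.prod measurableSet_Ioc)] with p hp
    rw [Real.norm_eq_abs]
    exact hhbd p.2 (Set.Ioc_subset_Icc_self hp.2) p.1 (hΩsub hp.1)
  have hswap : ∫ x in Ω, ∫ t in Set.Ioc (0:ℝ) T, h t x
      = ∫ t in Set.Ioc (0:ℝ) T, ∫ x in Ω, h t x :=
    integral_integral_swap hPint
  -- per-time nonnegativity via symmetry
  have hpos : ∀ t : ℝ, 0 ≤ ∫ x in Ω, h t x := by
    intro t
    have hψcont : ContinuousOn (fun x : EuclideanSpace ℝ (Fin N) => φ t x) (closure Ω) := by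
      have hcs : Continuous fun x : EuclideanSpace ℝ (Fin N) =>
          ((t, x) : ℝ × EuclideanSpace ℝ (Fin N)) := by fun_prop
      exact hφcont.comp hcs.continuousOn fun x hx => ⟨Set.mem_univ _, hx⟩
    set G : EuclideanSpace ℝ (Fin N) → EuclideanSpace ℝ (Fin N) → ℝ :=
      fun x y => J (σ⁻¹ • (x - y)) * (φ t y - φ t x) / φ t x with hGdef
    have hGu : Function.uncurry G
        = fun p : EuclideanSpace ℝ (Fin N) × EuclideanSpace ℝ (Fin N) =>
          J (σ⁻¹ • (p.1 - p.2)) * (φ t p.2 - φ t p.1) / φ t p.1 := by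
      funext p; rw [hGdef]; rfl
    have hGcont : ContinuousOn (Function.uncurry G) (closure Ω ×ˢ closure Ω) := by
      rw [hGu]
      apply ContinuousOn.div
      · apply ContinuousOn.mul
        · have : Continuous fun p : EuclideanSpace ℝ (Fin N) × EuclideanSpace ℝ (Fin N) =>
              J (σ⁻¹ • (p.1 - p.2)) := by
            apply hJcont.comp; fun_prop
          exact this.continuousOn
        · exact ContinuousOn.sub
            (hψcont.comp continuous_snd.continuousOn fun p hp => hp.2)
            (hψcont.comp continuous_fst.continuousOn fun p hp => hp.1)
      · exact hψcont.comp continuous_fst.continuousOn fun p hp => hp.1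
      · intro p hp; exact (hφpos t p.1 hp.1).ne'
    obtain ⟨pG, hpGmem, hpGmax⟩ := (hclcomp.prod hclcomp).exists_isMaxOn
      ⟨(x₀, x₀), ⟨hΩsub hx₀, hΩsub hx₀⟩⟩ hGcont.norm
    have hGaesm : AEStronglyMeasurable (Function.uncurry G)
        ((volume.restrict Ω).prod (volume.restrict Ω)) := by
      rw [Measure.prod_restrict]
      exact (hGcont.aestronglyMeasurable
        (isClosed_closure.prod isClosed_closure).measurableSet).mono_measure
        (Measure.restrict_mono (Set.prod_mono hΩsub hΩsub) le_rfl)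
    have hGint : Integrable (Function.uncurry G)
        ((volume.restrict Ω).prod (volume.restrict Ω)) := by
      refine ⟨hGaesm, HasFiniteIntegral.of_bounded (C := ‖Function.uncurry G pG‖) ?_⟩
      rw [Measure.prod_restrict]
      filter_upwards [ae_restrict_mem (hΩmeas.prod hΩmeas)] with p hp
      exact hpGmax ⟨hΩsub hp.1, hΩsub hp.2⟩
    have hS : ∫ x in Ω, ∫ y in Ω, G x y = ∫ y in Ω, ∫ x in Ω, G x y :=
      integral_integral_swap hGint
    have hm1 : Integrable (fun x => ∫ y in Ω, G x y) (volume.restrict Ω) :=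
      hGint.integral_prod_left
    have hm2 : Integrable (fun x => ∫ y in Ω, G y x) (volume.restrict Ω) :=
      hGint.swap.integral_prod_left
    have hSS2 : ∫ x in Ω, ((∫ y in Ω, G x y) + ∫ y in Ω, G y x)
        = ∫ x in Ω, ∫ y in Ω, (G x y + G y x) := by
      apply integral_congr_ae
      filter_upwards [hGint.prod_right_ae, hGint.swap.prod_right_ae] with x h1 h2
      exact (integral_add h1 h2).symm
    have hptwise : 0 ≤ ∫ x in Ω, ∫ y in Ω, (G x y + G y x) := by
      apply setIntegral_nonneg hΩmeas
      intro x hx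
      apply setIntegral_nonneg hΩmeas
      intro y hy
      have hpx := hφpos t x (hΩsub hx)
      have hpy := hφpos t y (hΩsub hy)
      have hsymK : J (σ⁻¹ • (y - x)) = J (σ⁻¹ • (x - y)) := by
        rw [show σ⁻¹ • (y - x) = -(σ⁻¹ • (x - y)) by rw [← smul_neg, neg_sub]]
        exact J_neg J hJsym _
      have hKnn := hJnonneg (σ⁻¹ • (x - y))
      simp only [hGdef]
      rw [hsymK]
      have heqq : J (σ⁻¹ • (x - y)) * (φ t y - φ t x) / φ t x
          + J (σ⁻¹ • (x - y)) * (φ t x - φ t y) / φ t y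
          = J (σ⁻¹ • (x - y)) * (φ t y - φ t x)^2 / (φ t x * φ t y) := by
        field_simp
        ring
      rw [heqq]
      positivity
    have hSnn : 0 ≤ ∫ x in Ω, ∫ y in Ω, G x y := by
      have e1 : (∫ x in Ω, ∫ y in Ω, G x y) + (∫ x in Ω, ∫ y in Ω, G y x)
          = ∫ x in Ω, ∫ y in Ω, (G x y + G y x) := (integral_add hm1 hm2).symm.trans hSS2
      have e2 : (∫ x in Ω, ∫ y in Ω, G x y) = ∫ x in Ω, ∫ y in Ω, G y x := hS
      linarith [hptwise, e1, e2]
    have hrepr : Set.EqOn (fun x => h t x) (fun x => c * ∫ y in Ω, G x y) Ω := by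
      intro x hx
      have hp := hφpos t x (hΩsub hx)
      have hGi : ∫ y in Ω, G x y
          = (∫ y in Ω, J (σ⁻¹ • (x - y)) * (φ t y - φ t x)) / φ t x := by
        simp only [hGdef]
        exact integral_div _ _
      simp only [hhdef, hIdef]
      rw [hGi, mul_div_assoc]
    calc (0:ℝ) ≤ c * ∫ x in Ω, ∫ y in Ω, G x y := by positivity
      _ = ∫ x in Ω, c * ∫ y in Ω, G x y := by rw [integral_const_mul]
      _ = ∫ x in Ω, h t x := (setIntegral_congr_fun hΩmeas hrepr).symm
  have hIocnn : 0 ≤ ∫ t in Set.Ioc (0:ℝ) T, ∫ x in Ω, h t x :=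
    setIntegral_nonneg measurableSet_Ioc fun t _ => hpos t
  have hA : 0 ≤ ∫ x in Ω, ∫ t in Set.Ioc (0:ℝ) T, h t x := by
    rw [hswap]; exact hIocnn
  -- integrability of x ↦ ∫₀ᵀ a
  have hGacont : Continuous fun x : EuclideanSpace ℝ (Fin N) => ∫ s in (0:ℝ)..T, a s x := by
    apply intervalIntegral.continuous_parametric_intervalIntegral_of_continuous'
    exact hacont.comp continuous_swap
  obtain ⟨xa, hxa, hxam⟩ := hclcomp.exists_isMaxOn ⟨x₀, hΩsub hx₀⟩
    hGacont.norm.continuousOn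
  have hGaint : Integrable (fun x => ∫ s in (0:ℝ)..T, a s x) (volume.restrict Ω) := by
    refine ⟨hGacont.aestronglyMeasurable, HasFiniteIntegral.of_bounded
      (C := ‖∫ s in (0:ℝ)..T, a s xa‖) ?_⟩
    filter_upwards [ae_restrict_mem hΩmeas] with x hx
    exact hxam (hΩsub hx)
  have hstep : ∫ x in Ω, ∫ t in Set.Ioc (0:ℝ) T, h t x
      = -(∫ x in Ω, ∫ s in (0:ℝ)..T, a s x) - V * (lam * T) := by
    have heqon : Set.EqOn (fun x => ∫ t in Set.Ioc (0:ℝ) T, h t x)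
        (fun x => -(∫ s in (0:ℝ)..T, a s x) - lam * T) Ω := by
      intro x hx
      have h1 : ∫ t in Set.Ioc (0:ℝ) T, h t x = ∫ t in (0:ℝ)..T, h t x :=
        (intervalIntegral.integral_of_le hT.le).symm
      show ∫ t in Set.Ioc (0:ℝ) T, h t x = -(∫ s in (0:ℝ)..T, a s x) - lam * T
      rw [h1, hTime x (hΩsub hx)]
    have hnegint : Integrable (fun x => -(∫ s in (0:ℝ)..T, a s x)) (volume.restrict Ω) :=
      hGaint.neg
    rw [setIntegral_congr_fun hΩmeas heqon, integral_sub hnegint (integrable_const _),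
      integral_neg, setIntegral_const, smul_eq_mul, measureReal_def, ← hVdef]
  -- Fubini for a
  have haint : Integrable (fun p : EuclideanSpace ℝ (Fin N) × ℝ => a p.2 p.1)
      ((volume.restrict Ω).prod (volume.restrict (Set.Ioc (0:ℝ) T))) := by
    obtain ⟨pa, hpamem, hpam⟩ := (hclcomp.prod isCompact_Icc).exists_isMaxOn
      ⟨(x₀, 0), ⟨hΩsub hx₀, Set.left_mem_Icc.2 hT.le⟩⟩
      (hacont.comp continuous_swap).norm.continuousOn
    refine ⟨(hacont.comp continuous_swap).aestronglyMeasurable,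
      HasFiniteIntegral.of_bounded (C := ‖a pa.2 pa.1‖) ?_⟩
    rw [hprodrw]
    filter_upwards [ae_restrict_mem (hΩmeas.prod measurableSet_Ioc)] with p hp
    exact hpam ⟨hΩsub hp.1, Set.Ioc_subset_Icc_self hp.2⟩
  have hafub : ∫ x in Ω, ∫ s in Set.Ioc (0:ℝ) T, a s x
      = ∫ s in Set.Ioc (0:ℝ) T, ∫ x in Ω, a s x := integral_integral_swap haint
  have haint2 : ∫ x in Ω, ∫ s in (0:ℝ)..T, a s x = ∫ s in (0:ℝ)..T, ∫ x in Ω, a s x := by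
    rw [intervalIntegral.integral_of_le hT.le, ← hafub]
    apply setIntegral_congr_fun hΩmeas
    intro x hx
    show ∫ s in (0:ℝ)..T, a s x = ∫ s in Set.Ioc (0:ℝ) T, a s x
    exact intervalIntegral.integral_of_le hT.le
  set B : ℝ := ∫ s in (0:ℝ)..T, ∫ x in Ω, a s x with hBdef
  have hineq : 0 ≤ -B - V * (lam * T) := by
    have htmp := hA
    rw [hstep, haint2] at htmp
    exact htmp
  have hVT : 0 < V * T := mul_pos hV hT
  have hlamB : lam * (V * T) ≤ -B := by
    have hrng : V * (lam * T) = lam * (V * T) := by ring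
    linarith [hineq, hrng.le, hrng.ge]
  have hfin : lam ≤ (-B) / (V * T) := (le_div_iff₀ hVT).2 hlamB
  calc lam ≤ (-B) / (V * T) := hfin
    _ = -(1 / (V * T)) * B := by ring
end

section
/- Fix σ > 0 and k ≥ 0, and suppose J is symmetric with respect to each component. Suppose that for every D > 0 there is a principal eigenpair (λ_D, φ_D) of −L_D, where L_D is the nonlocal Neumann operator with dispersal rate D. Then λ_D converges, as D → 0⁺, to −max_{x ∈ cl(Ω)} a_T(x). -/
open MeasureTheory Filter Topology

/-- The time average `a_T(x) = (1/T) ∫₀ᵀ a(t,x) dt`. -/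
noncomputable def timeAvg {N : ℕ} (T : ℝ) (a : ℝ → EuclideanSpace ℝ (Fin N) → ℝ)
    (x : EuclideanSpace ℝ (Fin N)) : ℝ :=
  (1 / T) * ∫ t in (0:ℝ)..T, a t x

set_option maxHeartbeats 2000000 in
theorem eigenvalue_limit_small_dispersal_rate
    (N : ℕ) (hN : 1 ≤ N)
    (Ω : Set (EuclideanSpace ℝ (Fin N)))
    (hΩne : Ω.Nonempty) (hΩopen : IsOpen Ω) (hΩbdd : Bornology.IsBounded Ω)
    (hΩconn : IsConnected Ω)
    (J : EuclideanSpace ℝ (Fin N) → ℝ)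
    (hJcont : Continuous J) (hJnonneg : ∀ x, 0 ≤ J x)
    (γ : ℝ) (hγ : 0 < γ)
    (hJsupp : Function.support J ⊆ Metric.ball (0 : EuclideanSpace ℝ (Fin N)) γ)
    (hJ0 : 0 < J 0) (hJint : ∫ x, J x = 1)
    (T : ℝ) (hT : 0 < T)
    (a : ℝ → EuclideanSpace ℝ (Fin N) → ℝ)
    (hacont : Continuous fun p : ℝ × EuclideanSpace ℝ (Fin N) => a p.1 p.2)
    (haper : ∀ t x, a (t + T) x = a t x)
    (hJsym : ∀ (i : Fin N) (x : EuclideanSpace ℝ (Fin N)),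
      J (WithLp.toLp 2 (Function.update x i (-(x i)))) = J x)
    (σ k : ℝ) (hσ : 0 < σ) (hk : 0 ≤ k)
    (lam : ℝ → ℝ) (φ : ℝ → ℝ → EuclideanSpace ℝ (Fin N) → ℝ)
    (heig : ∀ D : ℝ, 0 < D → isPEigenpair Ω J a T D σ k (lam D) (φ D)) :
    Tendsto lam (𝓝[>] (0:ℝ)) (𝓝 (-(sSup (timeAvg T a '' closure Ω)))) := by
  classical
  -- Notation
  set aT : EuclideanSpace ℝ (Fin N) → ℝ := timeAvg T a with haT_def
  set K : Set (EuclideanSpace ℝ (Fin N)) := closure Ω with hK_def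
  set M : ℝ := sSup (aT '' K) with hM_def
  have hKne : K.Nonempty := hΩne.closure
  have hKcomp : IsCompact K :=
    Metric.isCompact_of_isClosed_isBounded isClosed_closure hΩbdd.closure
  have hΩK : Ω ⊆ K := subset_closure
  have hΩmeas : MeasurableSet Ω := hΩopen.measurableSet
  have hΩvol : volume Ω < ⊤ := hΩbdd.measure_lt_top
  set μΩ : ℝ := (volume Ω).toReal with hμΩ_def
  have hμΩ0 : 0 ≤ μΩ := ENNReal.toReal_nonneg
  have hax : ∀ x : EuclideanSpace ℝ (Fin N), Continuous fun t => a t x := fun x =>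
    hacont.comp (continuous_id.prodMk continuous_const)
  -- continuity of the time average
  have haTcont : Continuous aT := by
    have h1 : Continuous fun x : EuclideanSpace ℝ (Fin N) => ∫ t in (0:ℝ)..T, a t x := by
      apply intervalIntegral.continuous_parametric_intervalIntegral_of_continuous'
        (f := fun (x : EuclideanSpace ℝ (Fin N)) (t : ℝ) => a t x)
      exact hacont.comp (continuous_snd.prodMk continuous_fst)
    exact continuous_const.mul h1
  have haTval : ∀ x, ∫ t in (0:ℝ)..T, a t x = T * aT x := by
    intro x
    rw [haT_def]
    simp only [timeAvg]
    field_simp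
  -- max point of aT
  obtain ⟨x₀, hx₀K, hx₀max⟩ := hKcomp.exists_isMaxOn hKne haTcont.continuousOn
  have hx₀max' : ∀ y ∈ K, aT y ≤ aT x₀ := hx₀max
  have hMeq : aT x₀ = M := by
    refine (IsGreatest.csSup_eq ⟨Set.mem_image_of_mem _ hx₀K, ?_⟩).symm
    rintro r ⟨y, hy, rfl⟩
    exact hx₀max' y hy
  have haTleM : ∀ y ∈ K, aT y ≤ M := fun y hy => hMeq ▸ hx₀max' y hy
  -- bound on J
  obtain ⟨J₀, hJ₀⟩ :=
    (isCompact_closedBall (0 : EuclideanSpace ℝ (Fin N)) γ).exists_bound_of_continuousOn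
      hJcont.continuousOn
  set Jm : ℝ := max J₀ 0 with hJm_def
  have hJm0 : 0 ≤ Jm := le_max_right _ _
  have hJle : ∀ z, J z ≤ Jm := by
    intro z
    by_cases hz : z ∈ Metric.closedBall (0 : EuclideanSpace ℝ (Fin N)) γ
    · have := hJ₀ z hz
      rw [Real.norm_eq_abs] at this
      exact le_trans (le_abs_self _) (le_trans this (le_max_left _ _))
    · have hz0 : J z = 0 := by
        by_contra h
        exact hz (Metric.ball_subset_closedBall (hJsupp h))
      rw [hz0]; exact hJm0
  -- bound on a
  obtain ⟨A₀, hA₀⟩ :=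
    (isCompact_Icc.prod hKcomp).exists_bound_of_continuousOn
      (hacont.continuousOn (s := Set.Icc (0:ℝ) T ×ˢ K))
  set A : ℝ := max A₀ 0 with hA_def
  have hA0 : 0 ≤ A := le_max_right _ _
  have haabs : ∀ t ∈ Set.Icc (0:ℝ) T, ∀ x ∈ K, |a t x| ≤ A := by
    intro t ht x hx
    have := hA₀ (t, x) ⟨ht, hx⟩
    rw [Real.norm_eq_abs] at this
    exact le_trans this (le_max_left _ _)
  have haTabs : ∀ x ∈ K, |aT x| ≤ A := by
    intro x hx
    have h1 : |∫ t in (0:ℝ)..T, a t x| ≤ ∫ t in (0:ℝ)..T, |a t x| :=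
      intervalIntegral.abs_integral_le_integral_abs hT.le
    have h2 : ∫ t in (0:ℝ)..T, |a t x| ≤ ∫ t in (0:ℝ)..T, A := by
      apply intervalIntegral.integral_mono_on hT.le
        ((hax x).abs.intervalIntegrable 0 T) (intervalIntegrable_const)
      intro s hs
      exact haabs s hs x hx
    rw [intervalIntegral.integral_const, smul_eq_mul, sub_zero] at h2
    have h3 := haTval x
    have h4 : |aT x| * T ≤ A * T := by
      calc |aT x| * T = |T * aT x| := by
            rw [abs_mul, abs_of_pos hT]; ring
        _ = |∫ t in (0:ℝ)..T, a t x| := by rw [h3]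
        _ ≤ T * A := le_trans h1 h2
        _ = A * T := by ring
    exact le_of_mul_le_mul_right h4 hT
  -- the function b and its properties
  set b : ℝ → EuclideanSpace ℝ (Fin N) → ℝ :=
    fun t x => ∫ s in (0:ℝ)..t, (a s x - aT x) with hb_def
  have hbcont : Continuous fun p : ℝ × EuclideanSpace ℝ (Fin N) => b p.1 p.2 := by
    apply intervalIntegral.continuous_parametric_intervalIntegral_of_continuous
      (f := fun (p : ℝ × EuclideanSpace ℝ (Fin N)) (s : ℝ) => a s p.2 - aT p.2)
      ?_ continuous_fst
    exact (hacont.comp (continuous_snd.prodMk (continuous_snd.comp continuous_fst))).sub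
      (haTcont.comp (continuous_snd.comp continuous_fst))
  have hbx : ∀ (x : EuclideanSpace ℝ (Fin N)) (t : ℝ),
      HasDerivAt (fun s => b s x) (a t x - aT x) t := by
    intro x t
    exact intervalIntegral.integral_hasDerivAt_right
      (((hax x).sub continuous_const).intervalIntegrable 0 t)
      (((hax x).sub continuous_const).stronglyMeasurableAtFilter _ _)
      (((hax x).sub continuous_const).continuousAt)
  have hbper : ∀ (t : ℝ) (x), b (t + T) x = b t x := by
    intro t x
    have hper : Function.Periodic (fun s => a s x - aT x) T := fun s => by
      simp [haper s x]
    have h1 : b t x + ∫ s in t..t + T, (a s x - aT x) = b (t + T) x :=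
      intervalIntegral.integral_add_adjacent_intervals
        (((hax x).sub continuous_const).intervalIntegrable 0 t)
        (((hax x).sub continuous_const).intervalIntegrable t (t + T))
    have h2 : ∫ s in t..t + T, (a s x - aT x) = ∫ s in (0:ℝ)..(0:ℝ) + T, (a s x - aT x) :=
      hper.intervalIntegral_add_eq t 0
    have h3 : ∫ s in (0:ℝ)..T, (a s x - aT x) = 0 := by
      rw [intervalIntegral.integral_sub ((hax x).intervalIntegrable 0 T)
        intervalIntegrable_const, intervalIntegral.integral_const, haTval x]
      simp
    rw [← h1, h2, zero_add, h3, add_zero]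
  have hbabs : ∀ t ∈ Set.Icc (0:ℝ) T, ∀ x ∈ K, |b t x| ≤ 2 * A * T := by
    intro t ht x hx
    have h1 : |b t x| ≤ ∫ s in (0:ℝ)..t, |a s x - aT x| :=
      intervalIntegral.abs_integral_le_integral_abs ht.1
    have h2 : ∫ s in (0:ℝ)..t, |a s x - aT x| ≤ ∫ s in (0:ℝ)..t, (2 * A) := by
      apply intervalIntegral.integral_mono_on ht.1
        (((hax x).sub continuous_const).abs.intervalIntegrable 0 t) intervalIntegrable_const
      intro s hs
      have h3 := haabs s ⟨hs.1, hs.2.trans ht.2⟩ x hx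
      have h4 := haTabs x hx
      have h5 := abs_sub (a s x) (aT x)
      calc |a s x - aT x| ≤ |a s x| + |aT x| := abs_sub _ _
        _ ≤ 2 * A := by linarith
    rw [intervalIntegral.integral_const, smul_eq_mul, sub_zero] at h2
    have : t * (2 * A) ≤ 2 * A * T := by nlinarith [ht.1, ht.2]
    linarith
  -- constants
  have hσp : 0 < σ ^ ((N:ℝ) + k) := Real.rpow_pos_of_pos hσ _
  set Ee : ℝ := Real.exp (4 * A * T) with hEe_def
  have hEe1 : 1 ≤ Ee := Real.one_le_exp (by positivity)
  set Cc : ℝ := Jm * μΩ * Ee / σ ^ ((N:ℝ) + k) with hCc_def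
  have hCc0 : 0 ≤ Cc := by
    apply div_nonneg _ hσp.le
    have : (0:ℝ) < Ee := lt_of_lt_of_le one_pos hEe1
    positivity
  -- the key two-sided bound
  have key : ∀ D : ℝ, 0 < D → -M - Cc * D ≤ lam D ∧ lam D ≤ -M + Cc * D := by
    intro D hD
    obtain ⟨⟨⟨hu_cont, hu_C1, hu_per⟩, hu_pos⟩, heqn⟩ := heig D hD
    set u := φ D with hu_def
    set P : ℝ := D / σ ^ ((N:ℝ) + k) with hP_def
    have hP0 : 0 < P := div_pos hD hσp
    set I : ℝ → EuclideanSpace ℝ (Fin N) → ℝ :=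
      fun t x => ∫ y in Ω, J (σ⁻¹ • (x - y)) * (u t y - u t x) with hI_def
    have heq' : ∀ t : ℝ, ∀ x ∈ K, deriv (fun s => u s x) t
        = P * I t x + (a t x + lam D) * u t x := by
      intro t x hx
      have h := heqn t x hx
      have hexp : nlOp Ω J a D σ k u t x
          = -(deriv (fun s => u s x) t) + P * I t x + a t x * u t x := rfl
      rw [hexp] at h
      linarith
    have hu_contx : ∀ t : ℝ, ContinuousOn (fun y => u t y) K := by
      intro t
      exact hu_cont.comp ((continuous_const.prodMk continuous_id).continuousOn)
        (fun y hy => ⟨Set.mem_univ _, hy⟩)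
    have hconst : ∀ c : ℝ, IntegrableOn (fun _ => c) Ω volume := fun c =>
      integrableOn_const hΩvol.ne
    have hIint : ∀ (t : ℝ) (x : EuclideanSpace ℝ (Fin N)),
        IntegrableOn (fun y => J (σ⁻¹ • (x - y)) * (u t y - u t x)) Ω volume := by
      intro t x
      apply IntegrableOn.mono_set _ hΩK
      apply ContinuousOn.integrableOn_compact hKcomp
      exact ((hJcont.comp ((continuous_const.sub continuous_id).const_smul σ⁻¹)).continuousOn).mul
        ((hu_contx t).sub continuousOn_const)
    have hIlow : ∀ t : ℝ, ∀ x ∈ K, -(Jm * u t x * μΩ) ≤ I t x := by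
      intro t x hx
      have h1 : ∫ y in Ω, (-(Jm * u t x)) ≤ I t x := by
        apply setIntegral_mono_on (hconst _) (hIint t x) hΩmeas
        intro y hy
        have hJz := hJnonneg (σ⁻¹ • (x - y))
        have hJz' := hJle (σ⁻¹ • (x - y))
        have huy := hu_pos t y (hΩK hy)
        have hux := hu_pos t x hx
        nlinarith [mul_nonneg hJz huy.le, mul_nonneg (sub_nonneg.2 hJz') hux.le]
      rw [setIntegral_const, smul_eq_mul, measureReal_def] at h1
      have h2 : (volume Ω).toReal * (-(Jm * u t x)) = -(Jm * u t x * μΩ) := by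
        rw [hμΩ_def]; ring
      linarith
    constructor
    · -- lower bound via the maximum point of w = u * exp(-b)
      have hwcont : ContinuousOn
          (fun p : ℝ × EuclideanSpace ℝ (Fin N) => u p.1 p.2 * Real.exp (-(b p.1 p.2)))
          (Set.Icc (0:ℝ) T ×ˢ K) := by
        apply ContinuousOn.mul
        · exact hu_cont.mono (Set.prod_mono (Set.subset_univ _) subset_rfl)
        · exact (Real.continuous_exp.comp hbcont.neg).continuousOn
      obtain ⟨⟨ts, xs⟩, hmemS, hmaxS⟩ :=
        (isCompact_Icc.prod hKcomp).exists_isMaxOn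
          ⟨((0:ℝ), x₀), ⟨Set.mem_Icc.2 ⟨le_rfl, hT.le⟩, hx₀K⟩⟩ hwcont
      have htsI : ts ∈ Set.Icc (0:ℝ) T := hmemS.1
      have hxsK : xs ∈ K := hmemS.2
      have hwper : Function.Periodic (fun t => u t xs * Real.exp (-(b t xs))) T := by
        intro t
        simp only [hu_per, hbper]
      have hglob : ∀ t : ℝ,
          u t xs * Real.exp (-(b t xs)) ≤ u ts xs * Real.exp (-(b ts xs)) := by
        intro t
        obtain ⟨y, hy, hyeq⟩ := hwper.exists_mem_Ico₀ hT t
        have hyeq' : u t xs * Real.exp (-(b t xs)) = u y xs * Real.exp (-(b y xs)) := hyeq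
        rw [hyeq']
        exact hmaxS (Set.mk_mem_prod ⟨hy.1, hy.2.le⟩ hxsK)
      have hbd := hbx xs ts
      have hud : HasDerivAt (fun t => u t xs) (deriv (fun t => u t xs) ts) ts :=
        (((hu_C1 xs hxsK).differentiable one_ne_zero) ts).hasDerivAt
      have hwd : HasDerivAt (fun t => u t xs * Real.exp (-(b t xs)))
          (deriv (fun t => u t xs) ts * Real.exp (-(b ts xs))
            + u ts xs * (Real.exp (-(b ts xs)) * -(a ts xs - aT xs))) ts :=
        hud.mul (hbd.neg.exp)
      have hlocmax : IsLocalMax (fun t => u t xs * Real.exp (-(b t xs))) ts :=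
        Filter.Eventually.of_forall hglob
      have hd0 := hlocmax.hasDerivAt_eq_zero hwd
      have hexp0 : (0:ℝ) < Real.exp (-(b ts xs)) := Real.exp_pos _
      have hderiv_eq : deriv (fun t => u t xs) ts = u ts xs * (a ts xs - aT xs) := by
        have h2 : (deriv (fun t => u t xs) ts - u ts xs * (a ts xs - aT xs))
            * Real.exp (-(b ts xs)) = 0 := by linear_combination hd0
        rcases mul_eq_zero.1 h2 with h3 | h3
        · linarith
        · exact absurd h3 hexp0.ne'
      have hux := hu_pos ts xs hxsK
      have hEnonneg : 0 ≤ u ts xs * (Ee - 1) := by nlinarith [hEe1]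
      have hIup : I ts xs ≤ Jm * (u ts xs * (Ee - 1)) * μΩ := by
        have hkey : ∀ y ∈ Ω, J (σ⁻¹ • (xs - y)) * (u ts y - u ts xs)
            ≤ Jm * (u ts xs * (Ee - 1)) := by
          intro y hy
          have hyK := hΩK hy
          have h1 : u ts y * Real.exp (-(b ts y)) ≤ u ts xs * Real.exp (-(b ts xs)) :=
            hmaxS (Set.mk_mem_prod htsI hyK)
          have hey : (0:ℝ) < Real.exp (b ts y) := Real.exp_pos _
          have h2 : u ts y ≤ u ts xs * Real.exp (b ts y - b ts xs) := by
            have h1' := mul_le_mul_of_nonneg_right h1 hey.le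
            rw [mul_assoc, mul_assoc, ← Real.exp_add, ← Real.exp_add] at h1'
            simp only [neg_add_cancel, Real.exp_zero, mul_one] at h1'
            calc u ts y ≤ u ts xs * Real.exp (-(b ts xs) + b ts y) := h1'
              _ = u ts xs * Real.exp (b ts y - b ts xs) := by rw [add_comm, ← sub_eq_add_neg]
          have h3 : Real.exp (b ts y - b ts xs) ≤ Ee := by
            rw [hEe_def]
            apply Real.exp_le_exp.2
            have i1 := abs_le.1 (hbabs ts htsI y hyK)
            have i2 := abs_le.1 (hbabs ts htsI xs hxsK)
            linarith [i1.2, i2.1]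
          have huy := hu_pos ts y hyK
          have h4 : u ts y - u ts xs ≤ u ts xs * (Ee - 1) := by nlinarith
          have hJz := hJnonneg (σ⁻¹ • (xs - y))
          have hJz' := hJle (σ⁻¹ • (xs - y))
          calc J (σ⁻¹ • (xs - y)) * (u ts y - u ts xs)
              ≤ J (σ⁻¹ • (xs - y)) * (u ts xs * (Ee - 1)) :=
                mul_le_mul_of_nonneg_left h4 hJz
            _ ≤ Jm * (u ts xs * (Ee - 1)) := mul_le_mul_of_nonneg_right hJz' hEnonneg
        have hmono := setIntegral_mono_on (hIint ts xs) (hconst _) hΩmeas hkey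
        rw [setIntegral_const, smul_eq_mul, measureReal_def] at hmono
        calc I ts xs ≤ (volume Ω).toReal * (Jm * (u ts xs * (Ee - 1))) := hmono
          _ = Jm * (u ts xs * (Ee - 1)) * μΩ := by rw [hμΩ_def]; ring
      have heqs := heq' ts xs hxsK
      rw [hderiv_eq] at heqs
      have heq2 : (aT xs + lam D) * u ts xs = -(P * I ts xs) := by linear_combination -heqs
      have h5 : (-(P * (Jm * (Ee - 1) * μΩ))) * u ts xs ≤ (aT xs + lam D) * u ts xs := by
        rw [heq2]
        nlinarith [mul_le_mul_of_nonneg_left hIup hP0.le]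
      have h6 : -(P * (Jm * (Ee - 1) * μΩ)) ≤ aT xs + lam D :=
        le_of_mul_le_mul_right h5 hux
      have h7 : P * (Jm * (Ee - 1) * μΩ) ≤ Cc * D := by
        rw [hP_def, hCc_def, div_mul_eq_mul_div, div_mul_eq_mul_div,
          div_le_div_iff₀ hσp hσp]
        nlinarith [mul_nonneg (mul_nonneg (mul_nonneg hJm0 hμΩ0) hD.le) hσp.le]
      have h8 := haTleM xs hxsK
      linarith
    · -- upper bound via integrating the logarithmic derivative at x₀
      have hu0C1 : ContDiff ℝ 1 (fun t => u t x₀) := hu_C1 x₀ hx₀K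
      have hu0pos : ∀ t, 0 < u t x₀ := fun t => hu_pos t x₀ hx₀K
      have hu0d : ∀ t : ℝ, HasDerivAt (fun s => u s x₀) (deriv (fun s => u s x₀) t) t :=
        fun t => ((hu0C1.differentiable one_ne_zero) t).hasDerivAt
      have hgd : ∀ t : ℝ, HasDerivAt (fun s => Real.log (u s x₀))
          (deriv (fun s => u s x₀) t / u t x₀) t := fun t => (hu0d t).log (hu0pos t).ne'
      have hg'cont : Continuous fun t => deriv (fun s => u s x₀) t / u t x₀ :=
        (hu0C1.continuous_deriv le_rfl).div hu0C1.continuous fun t => (hu0pos t).ne'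
      have hzero : ∫ t in (0:ℝ)..T, deriv (fun s => u s x₀) t / u t x₀ = 0 := by
        rw [intervalIntegral.integral_eq_sub_of_hasDerivAt (fun t _ => hgd t)
          (hg'cont.intervalIntegrable 0 T)]
        have hTeq : u T x₀ = u 0 x₀ := by
          have := hu_per 0 x₀
          rwa [zero_add] at this
        rw [hTeq, sub_self]
      have hlow2 : ∀ t ∈ Set.Icc (0:ℝ) T,
          a t x₀ + (lam D - P * (Jm * μΩ)) ≤ deriv (fun s => u s x₀) t / u t x₀ := by
        intro t ht
        have hd := heq' t x₀ hx₀K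
        have hIl := hIlow t x₀ hx₀K
        have hpos := hu0pos t
        rw [le_div_iff₀ hpos, hd]
        nlinarith [mul_le_mul_of_nonneg_left hIl hP0.le]
      have hmono : ∫ t in (0:ℝ)..T, (a t x₀ + (lam D - P * (Jm * μΩ)))
          ≤ ∫ t in (0:ℝ)..T, deriv (fun s => u s x₀) t / u t x₀ :=
        intervalIntegral.integral_mono_on hT.le
          (((hax x₀).add continuous_const).intervalIntegrable 0 T)
          (hg'cont.intervalIntegrable 0 T) hlow2
      rw [hzero, intervalIntegral.integral_add ((hax x₀).intervalIntegrable 0 T)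
        intervalIntegrable_const, intervalIntegral.integral_const, haTval x₀,
        smul_eq_mul, sub_zero] at hmono
      have hstep : aT x₀ + (lam D - P * (Jm * μΩ)) ≤ 0 := by nlinarith [hmono, hT]
      have hPC : P * (Jm * μΩ) ≤ Cc * D := by
        rw [hP_def, hCc_def, div_mul_eq_mul_div, div_mul_eq_mul_div,
          div_le_div_iff₀ hσp hσp]
        nlinarith [mul_nonneg (mul_nonneg (mul_nonneg (mul_nonneg hJm0 hμΩ0) hD.le) hσp.le)
          (sub_nonneg.2 hEe1)]
      rw [hMeq] at hstep
      linarith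
  -- conclusion by squeezing
  rw [← tendsto_sub_nhds_zero_iff]
  apply squeeze_zero_norm' (a := fun D : ℝ => Cc * D)
  · filter_upwards [self_mem_nhdsWithin] with D hD
    obtain ⟨h1, h2⟩ := key D hD
    rw [Real.norm_eq_abs, sub_neg_eq_add, abs_le]
    exact ⟨by linarith, by linarith⟩
  · have h : Tendsto (fun D : ℝ => Cc * D) (𝓝 0) (𝓝 (Cc * 0)) :=
      (continuous_const.mul continuous_id).tendsto 0
    rw [mul_zero] at h
    exact h.mono_left nhdsWithin_le_nhds
end

section
/- Fix D > 0 and k ≥ 0. Suppose that for every σ > 0 there is a principal eigenpair (λ_σ, φ_σ) of −L_{σ,k}, where L_{σ,k} is the nonlocal Neumann operator with dispersal range σ and exponent k. Then λ_σ converges, as σ → ∞, to −max_{x ∈ cl(Ω)} a_T(x). -/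
open MeasureTheory Filter Topology

set_option maxHeartbeats 1600000 in
theorem eigenvalue_limit_large_dispersal_range
    (N : ℕ) (hN : 1 ≤ N)
    (Ω : Set (EuclideanSpace ℝ (Fin N)))
    (hΩne : Ω.Nonempty) (hΩopen : IsOpen Ω) (hΩbdd : Bornology.IsBounded Ω)
    (hΩconn : IsConnected Ω)
    (J : EuclideanSpace ℝ (Fin N) → ℝ)
    (hJcont : Continuous J) (hJnonneg : ∀ x, 0 ≤ J x)
    (γ : ℝ) (hγ : 0 < γ)
    (hJsupp : Function.support J ⊆ Metric.ball (0 : EuclideanSpace ℝ (Fin N)) γ)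
    (hJ0 : 0 < J 0) (hJint : ∫ x, J x = 1)
    (T : ℝ) (hT : 0 < T)
    (a : ℝ → EuclideanSpace ℝ (Fin N) → ℝ)
    (hacont : Continuous fun p : ℝ × EuclideanSpace ℝ (Fin N) => a p.1 p.2)
    (haper : ∀ t x, a (t + T) x = a t x)
    (D k : ℝ) (hD : 0 < D) (hk : 0 ≤ k)
    (lam : ℝ → ℝ) (φ : ℝ → ℝ → EuclideanSpace ℝ (Fin N) → ℝ)
    (heig : ∀ σ : ℝ, 0 < σ → isPEigenpair Ω J a T D σ k (lam σ) (φ σ)) :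
    Tendsto lam atTop (𝓝 (-(sSup (timeAvg T a '' closure Ω)))) := by
  classical
  obtain ⟨x₀, hx₀⟩ := hΩne
  have hx₀c : x₀ ∈ closure Ω := subset_closure hx₀
  have hclcp : IsCompact (closure Ω) := hΩbdd.isCompact_closure
  have hclne : (closure Ω).Nonempty := ⟨x₀, hx₀c⟩
  have hΩmeas : MeasurableSet Ω := hΩopen.measurableSet
  have hvollt : volume Ω < ⊤ := hΩbdd.measure_lt_top
  set volΩ : ℝ := (volume Ω).toReal with hvolΩ_def
  have hvolnn : 0 ≤ volΩ := ENNReal.toReal_nonneg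
  -- bound for J
  obtain ⟨z, hzmem, hzmax⟩ :=
    (isCompact_closedBall (0 : EuclideanSpace ℝ (Fin N)) γ).exists_isMaxOn
      ⟨0, Metric.mem_closedBall_self hγ.le⟩ hJcont.continuousOn
  set MJ : ℝ := J z with hMJ_def
  have hMJ : ∀ w, J w ≤ MJ := by
    intro w
    by_cases hw : w ∈ Metric.closedBall (0 : EuclideanSpace ℝ (Fin N)) γ
    · exact hzmax hw
    · have hw0 : J w = 0 := by
        by_contra h
        exact hw (Metric.ball_subset_closedBall (hJsupp h))
      rw [hw0]
      exact le_trans hJ0.le (hzmax (Metric.mem_closedBall_self hγ.le))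
  have hMJnn : 0 ≤ MJ := le_trans hJ0.le (hMJ 0)
  -- bound for a
  have hKcp : IsCompact ((Set.Icc (0:ℝ) T) ×ˢ closure Ω) := isCompact_Icc.prod hclcp
  have hKne : ((Set.Icc (0:ℝ) T) ×ˢ closure Ω).Nonempty :=
    ⟨(0, x₀), Set.mem_prod.mpr ⟨⟨le_refl 0, hT.le⟩, hx₀c⟩⟩
  obtain ⟨pa, hpamem, hpamax⟩ := hKcp.exists_isMaxOn hKne hacont.abs.continuousOn
  set A : ℝ := |a pa.1 pa.2| with hA_def
  have hAnn : 0 ≤ A := abs_nonneg _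
  have haA : ∀ (t : ℝ), ∀ x ∈ closure Ω, |a t x| ≤ A := by
    intro t x hx
    have hap : Function.Periodic (fun r => a r x) T := fun r => haper r x
    obtain ⟨s, hs, hfs⟩ := hap.exists_mem_Ico₀ hT t
    calc |a t x| = |a s x| := by rw [hfs]
      _ ≤ A := hpamax (Set.mk_mem_prod ⟨hs.1, hs.2.le⟩ hx)
  have hacontx : ∀ x, Continuous fun t => a t x := fun x =>
    hacont.comp (continuous_id.prodMk continuous_const)
  -- time-average bounds
  have htAbd : ∀ x ∈ closure Ω, -A ≤ timeAvg T a x ∧ timeAvg T a x ≤ A := by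
    intro x hx
    have hint : IntervalIntegrable (fun t => a t x) volume 0 T :=
      (hacontx x).intervalIntegrable 0 T
    have h1 : (∫ t in (0:ℝ)..T, a t x) ≤ ∫ _t in (0:ℝ)..T, A :=
      intervalIntegral.integral_mono_on hT.le hint intervalIntegrable_const
        (fun t _ => (abs_le.1 (haA t x hx)).2)
    have h2 : (∫ _t in (0:ℝ)..T, (-A)) ≤ ∫ t in (0:ℝ)..T, a t x :=
      intervalIntegral.integral_mono_on hT.le intervalIntegrable_const hint
        (fun t _ => (abs_le.1 (haA t x hx)).1)
    rw [intervalIntegral.integral_const] at h1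
    rw [intervalIntegral.integral_const] at h2
    simp only [sub_zero, smul_eq_mul] at h1 h2
    constructor
    · have : (1/T) * (T * (-A)) ≤ (1/T) * ∫ t in (0:ℝ)..T, a t x :=
        mul_le_mul_of_nonneg_left h2 (le_of_lt (one_div_pos.2 hT))
      calc -A = (1/T) * (T * (-A)) := by field_simp <;> ring
        _ ≤ timeAvg T a x := this
    · have : (1/T) * (∫ t in (0:ℝ)..T, a t x) ≤ (1/T) * (T * A) :=
        mul_le_mul_of_nonneg_left h1 (le_of_lt (one_div_pos.2 hT))
      calc timeAvg T a x ≤ (1/T) * (T * A) := this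
        _ = A := by field_simp <;> ring
  set S : ℝ := sSup (timeAvg T a '' closure Ω) with hS_def
  have hSbdd : BddAbove (timeAvg T a '' closure Ω) :=
    ⟨A, by rintro _ ⟨x, hx, rfl⟩; exact (htAbd x hx).2⟩
  have htAleS : ∀ x ∈ closure Ω, timeAvg T a x ≤ S := fun x hx => le_csSup hSbdd ⟨x, hx, rfl⟩
  have hSA : -A ≤ S := le_trans (htAbd x₀ hx₀c).1 (htAleS x₀ hx₀c)
  -- epsilon
  have hNpos : (0:ℝ) < (N:ℝ) := by exact_mod_cast Nat.lt_of_lt_of_le Nat.zero_lt_one hN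
  have hp : 0 < (N:ℝ) + k := by linarith
  set ε : ℝ → ℝ := fun σ => D * MJ * volΩ / σ ^ ((N:ℝ) + k) with hε_def
  set ε₁ : ℝ := D * MJ * volΩ with hε₁_def
  have hε₁nn : 0 ≤ ε₁ := by
    rw [hε₁_def]; exact mul_nonneg (mul_nonneg hD.le hMJnn) hvolnn
  have hεbd : ∀ σ : ℝ, 1 ≤ σ → 0 ≤ ε σ ∧ ε σ ≤ ε₁ := by
    intro σ hσ
    have h1 : (1:ℝ) ≤ σ ^ ((N:ℝ) + k) := Real.one_le_rpow hσ hp.le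
    have h0 : (0:ℝ) < σ ^ ((N:ℝ) + k) := lt_of_lt_of_le one_pos h1
    have hnum : 0 ≤ D * MJ * volΩ := by rw [← hε₁_def]; exact hε₁nn
    constructor
    · rw [hε_def]; exact div_nonneg hnum h0.le
    · rw [hε_def, hε₁_def]; exact div_le_self hnum h1
  set C₀ : ℝ := 2 * A + 2 * ε₁ with hC₀_def
  have hC₀nn : 0 ≤ C₀ := by rw [hC₀_def]; linarith
  -- the key two-sided estimate
  have key : ∀ σ : ℝ, 1 ≤ σ →
      -S - ε σ * Real.exp (C₀ * T) ≤ lam σ ∧ lam σ ≤ -S + ε σ := by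
    intro σ hσ1
    have hσ0 : (0:ℝ) < σ := lt_of_lt_of_le one_pos hσ1
    obtain ⟨⟨⟨hcont, hC1, hper⟩, hpos⟩, heqn⟩ := heig σ hσ0
    set l : ℝ := lam σ with hl_def
    set u : ℝ → EuclideanSpace ℝ (Fin N) → ℝ := φ σ with hu_def
    obtain ⟨hεσnn, hεσ₁⟩ := hεbd σ hσ1
    have hσp : (0:ℝ) < σ ^ ((N:ℝ) + k) :=
      lt_of_lt_of_le one_pos (Real.one_le_rpow hσ1 hp.le)
    set co : ℝ := D / σ ^ ((N:ℝ) + k) with hco_def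
    have hco0 : 0 < co := by rw [hco_def]; exact div_pos hD hσp
    have hcoε : co * (MJ * volΩ) = ε σ := by
      rw [hco_def, hε_def]; ring
    -- continuity helpers
    have hut : ∀ x ∈ closure Ω, Continuous fun t => u t x := fun x hx => (hC1 x hx).continuous
    have hut' : ∀ x ∈ closure Ω, Continuous (deriv fun t => u t x) :=
      fun x hx => (hC1 x hx).continuous_deriv le_rfl
    have hud : ∀ x ∈ closure Ω, ∀ t, HasDerivAt (fun r => u r x) (deriv (fun r => u r x) t) t :=
      fun x hx t => (((hC1 x hx).differentiable one_ne_zero) t).hasDerivAt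
    have huy : ∀ t : ℝ, ContinuousOn (fun y => u t y) (closure Ω) := by
      intro t
      exact hcont.comp ((continuous_const.prodMk continuous_id).continuousOn)
        (fun y hy => ⟨Set.mem_univ _, hy⟩)
    have hψpos : ∀ x ∈ closure Ω, ∀ t, (0:ℝ) < u t x := fun x hx t => hpos t x hx
    -- kernel integrability and bounds
    have hJs : ∀ x : EuclideanSpace ℝ (Fin N), Continuous fun y => J (σ⁻¹ • (x - y)) :=
      fun x => hJcont.comp ((continuous_const.sub continuous_id).const_smul σ⁻¹)
    have hJint : ∀ x, IntegrableOn (fun y => J (σ⁻¹ • (x - y))) Ω volume :=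
      fun x => (((hJs x).continuousOn).integrableOn_compact hclcp).mono_set subset_closure
    have hJuint : ∀ (t : ℝ) (x), IntegrableOn (fun y => J (σ⁻¹ • (x - y)) * u t y) Ω volume :=
      fun t x => ((((hJs x).continuousOn).mul (huy t)).integrableOn_compact hclcp).mono_set
        subset_closure
    have hQb : ∀ x, 0 ≤ (∫ y in Ω, J (σ⁻¹ • (x - y))) ∧
        (∫ y in Ω, J (σ⁻¹ • (x - y))) ≤ MJ * volΩ := by
      intro x
      constructor
      · exact setIntegral_nonneg hΩmeas fun y _ => hJnonneg _
      · calc (∫ y in Ω, J (σ⁻¹ • (x - y))) ≤ ∫ _y in Ω, MJ :=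
              setIntegral_mono_on (hJint x) (integrableOn_const hvollt.ne) hΩmeas
                (fun y _ => hMJ _)
          _ = MJ * volΩ := by rw [setIntegral_const, smul_eq_mul, hvolΩ_def, Measure.real]; ring
    -- maximum of u
    obtain ⟨q0, hq0mem, hq0max⟩ := hKcp.exists_isMaxOn hKne
      (hcont.mono (Set.prod_mono (Set.subset_univ _) le_rfl))
    obtain ⟨t₀, x₁⟩ := q0
    have hx₁ : x₁ ∈ closure Ω := hq0mem.2
    set Mu : ℝ := u t₀ x₁ with hMu_def
    have hMupos : 0 < Mu := hpos t₀ x₁ hx₁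
    have huM : ∀ (t : ℝ), ∀ y ∈ closure Ω, u t y ≤ Mu := by
      intro t y hy
      have hupx : Function.Periodic (fun r => u r y) T := fun r => hper r y
      obtain ⟨s, hs, hfs⟩ := hupx.exists_mem_Ico₀ hT t
      calc u t y = u s y := hfs
        _ ≤ Mu := hq0max (Set.mk_mem_prod ⟨hs.1, hs.2.le⟩ hy)
    have hPb : ∀ (t : ℝ) (x), x ∈ closure Ω →
        0 ≤ (∫ y in Ω, J (σ⁻¹ • (x - y)) * u t y) ∧
        (∫ y in Ω, J (σ⁻¹ • (x - y)) * u t y) ≤ MJ * volΩ * Mu := by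
      intro t x hx
      constructor
      · exact setIntegral_nonneg hΩmeas fun y hy =>
          mul_nonneg (hJnonneg _) (hpos t y (subset_closure hy)).le
      · calc (∫ y in Ω, J (σ⁻¹ • (x - y)) * u t y) ≤ ∫ _y in Ω, MJ * Mu :=
              setIntegral_mono_on (hJuint t x) (integrableOn_const hvollt.ne) hΩmeas
                (fun y hy => mul_le_mul (hMJ _) (huM t y (subset_closure hy))
                  (hpos t y (subset_closure hy)).le hMJnn)
          _ = MJ * volΩ * Mu := by rw [setIntegral_const, smul_eq_mul, hvolΩ_def, Measure.real]; ring
    -- splitting the nonlocal integral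
    have hIsplit : ∀ (t : ℝ) (x), x ∈ closure Ω →
        (∫ y in Ω, J (σ⁻¹ • (x - y)) * (u t y - u t x))
          = (∫ y in Ω, J (σ⁻¹ • (x - y)) * u t y) - u t x * (∫ y in Ω, J (σ⁻¹ • (x - y))) := by
      intro t x hx
      have e : (fun y => J (σ⁻¹ • (x - y)) * (u t y - u t x))
          = fun y => J (σ⁻¹ • (x - y)) * u t y - J (σ⁻¹ • (x - y)) * u t x := by
        funext y; ring
      rw [e, integral_sub (hJuint t x) ((hJint x).mul_const _), integral_mul_const]
      ring
    -- eigen-equation rearranged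
    have hderiv_eq : ∀ x ∈ closure Ω, ∀ t : ℝ, deriv (fun r => u r x) t
        = co * (∫ y in Ω, J (σ⁻¹ • (x - y)) * (u t y - u t x)) + (a t x + l) * u t x := by
      intro x hx t
      have h := heqn t x hx
      simp only [nlOp] at h
      rw [← hco_def] at h
      linear_combination -h
    -- log-derivative facts
    have hGcont : ∀ x ∈ closure Ω, Continuous fun t => deriv (fun r => u r x) t / u t x :=
      fun x hx => (hut' x hx).div (hut x hx) (fun t => (hψpos x hx t).ne')
    have hlogd : ∀ x ∈ closure Ω, ∀ t : ℝ,
        HasDerivAt (fun r => Real.log (u r x)) (deriv (fun r => u r x) t / u t x) t := by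
      intro x hx t
      have h := (Real.hasDerivAt_log (hψpos x hx t).ne').comp t (hud x hx t)
      simpa [div_eq_inv_mul, Function.comp_def] using h
    have hFTC : ∀ x ∈ closure Ω, ∀ s : ℝ,
        (∫ t in s..s+T, deriv (fun r => u r x) t / u t x) = 0 := by
      intro x hx s
      rw [intervalIntegral.integral_eq_sub_of_hasDerivAt (fun t _ => hlogd x hx t)
        ((hGcont x hx).intervalIntegrable s (s+T))]
      rw [hper s x, sub_self]
    -- the main identity
    have hmain : ∀ x ∈ closure Ω, ∀ s : ℝ,
        (∫ t in s..s+T, (deriv (fun r => u r x) t / u t x - a t x - l))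
          = -(T * timeAvg T a x + T * l) := by
      intro x hx s
      have hGint : IntervalIntegrable (fun t => deriv (fun r => u r x) t / u t x)
          volume s (s+T) := (hGcont x hx).intervalIntegrable _ _
      have haint : IntervalIntegrable (fun t => a t x + l) volume s (s+T) :=
        ((hacontx x).add continuous_const).intervalIntegrable _ _
      have e : (fun t => deriv (fun r => u r x) t / u t x - a t x - l)
          = fun t => (deriv (fun r => u r x) t / u t x) - (a t x + l) := by
        funext t; ring
      rw [e, intervalIntegral.integral_sub hGint haint, hFTC x hx s]
      have hap : Function.Periodic (fun r => a r x) T := fun r => haper r x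
      have hpa : (∫ t in s..s+T, (a t x + l)) = T * timeAvg T a x + T * l := by
        rw [intervalIntegral.integral_add ((hacontx x).intervalIntegrable _ _)
          intervalIntegrable_const]
        rw [intervalIntegral.integral_const]
        have hshift : (∫ t in s..s+T, a t x) = ∫ t in (0:ℝ)..(0+T), a t x :=
          hap.intervalIntegral_add_eq s 0
        rw [hshift]
        simp only [zero_add, timeAvg, smul_eq_mul, add_sub_cancel_left]
        field_simp
      rw [hpa]; ring
    -- pointwise representation of q
    have hqrep : ∀ x ∈ closure Ω, ∀ t : ℝ,
        deriv (fun r => u r x) t / u t x - a t x - l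
          = co * ((∫ y in Ω, J (σ⁻¹ • (x - y)) * u t y)
              - u t x * (∫ y in Ω, J (σ⁻¹ • (x - y)))) / u t x := by
      intro x hx t
      rw [hderiv_eq x hx t, hIsplit t x hx]
      field_simp [(hψpos x hx t).ne'] <;> ring
    -- lower bound on q
    have hqlb : ∀ x ∈ closure Ω, ∀ t : ℝ,
        -(ε σ) ≤ deriv (fun r => u r x) t / u t x - a t x - l := by
      intro x hx t
      rw [hqrep x hx t, le_div_iff₀ (hψpos x hx t), ← hcoε]
      obtain ⟨hP0, hP1⟩ := hPb t x hx
      obtain ⟨hQ0, hQ1⟩ := hQb x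
      have h1 : 0 ≤ co * (∫ y in Ω, J (σ⁻¹ • (x - y)) * u t y) := mul_nonneg hco0.le hP0
      have h2 : 0 ≤ co * (u t x * (MJ * volΩ - (∫ y in Ω, J (σ⁻¹ • (x - y))))) :=
        mul_nonneg hco0.le (mul_nonneg (hψpos x hx t).le (sub_nonneg.2 hQ1))
      nlinarith [h1, h2]
    -- upper bound on lam
    have hub : l ≤ -S + ε σ := by
      have hx : ∀ x ∈ closure Ω, timeAvg T a x ≤ ε σ - l := by
        intro x hx
        have hid := hmain x hx 0
        have hqc : Continuous fun t => deriv (fun r => u r x) t / u t x - a t x - l :=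
          ((hGcont x hx).sub (hacontx x)).sub continuous_const
        have hmono : (∫ _t in (0:ℝ)..0+T, (-(ε σ)))
            ≤ ∫ t in (0:ℝ)..0+T, (deriv (fun r => u r x) t / u t x - a t x - l) :=
          intervalIntegral.integral_mono_on (by linarith) intervalIntegrable_const
            (hqc.intervalIntegrable _ _) (fun t _ => hqlb x hx t)
        rw [hid, intervalIntegral.integral_const] at hmono
        simp only [zero_add, sub_zero, smul_eq_mul] at hmono
        have h2 : T * (-(ε σ)) ≤ T * (-(timeAvg T a x + l)) := by linarith [hmono]
        have h3 := le_of_mul_le_mul_left h2 hT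
        linarith
      have hS2 : S ≤ ε σ - l :=
        csSup_le (hclne.image _) (by rintro _ ⟨x, hx', rfl⟩; exact hx x hx')
      linarith
    -- crude lower bound on lam
    have hl_lb : -A ≤ l := by
      have hloc : IsLocalMax (fun t => u t x₁) t₀ :=
        Filter.Eventually.of_forall (fun t => huM t x₁ hx₁)
      have hd0 : deriv (fun t => u t x₁) t₀ = 0 := hloc.deriv_eq_zero
      have hI : (∫ y in Ω, J (σ⁻¹ • (x₁ - y)) * (u t₀ y - u t₀ x₁)) ≤ 0 := by
        have h0 : 0 ≤ ∫ y in Ω, -(J (σ⁻¹ • (x₁ - y)) * (u t₀ y - u t₀ x₁)) :=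
          setIntegral_nonneg hΩmeas (fun y hy => by
            have h1 := huM t₀ y (subset_closure hy)
            nlinarith [hJnonneg (σ⁻¹ • (x₁ - y))])
        rw [integral_neg] at h0; linarith
      have he := hderiv_eq x₁ hx₁ t₀
      rw [hd0] at he
      have h5 : 0 ≤ (a t₀ x₁ + l) * Mu := by
        have h6 := mul_nonneg hco0.le (neg_nonneg.2 hI)
        linarith [he, h6]
      have h6 : 0 ≤ a t₀ x₁ + l := by nlinarith [h5, hMupos]
      have haa : a t₀ x₁ ≤ A := (abs_le.1 (haA t₀ x₁ hx₁)).2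
      linarith
    -- Harnack-type lower bound for u t x₁
    have hlin : ∀ t : ℝ, HasDerivAt (fun r : ℝ => C₀ * r) C₀ t := fun t => by
      simpa using (hasDerivAt_id t).const_mul C₀
    have hh : ∀ t : ℝ, HasDerivAt (fun r => Real.log (u r x₁) + C₀ * r)
        (deriv (fun r => u r x₁) t / u t x₁ + C₀) t :=
      fun t => (hlogd x₁ hx₁ t).add (hlin t)
    have hmono : Monotone fun t => Real.log (u t x₁) + C₀ * t := by
      apply monotone_of_deriv_nonneg
      · exact fun t => (hh t).differentiableAt
      · intro t
        rw [(hh t).deriv]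
        have hq := hqlb x₁ hx₁ t
        have ha1 := (abs_le.1 (haA t x₁ hx₁)).1
        linarith [hC₀_def.le, hC₀_def.ge, hεσ₁, hε₁nn]
    have hψge : ∀ t ∈ Set.Icc t₀ (t₀+T), Mu * Real.exp (-(C₀*T)) ≤ u t x₁ := by
      intro t ht
      have h1 := hmono ht.1
      simp only at h1
      rw [← hMu_def] at h1
      have h2 : Real.log Mu - C₀ * T ≤ Real.log (u t x₁) := by
        have h3 : C₀ * (t - t₀) ≤ C₀ * T := mul_le_mul_of_nonneg_left (by linarith [ht.2]) hC₀nn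
        nlinarith [h1, h3]
      calc Mu * Real.exp (-(C₀*T)) = Real.exp (Real.log Mu - C₀*T) := by
            rw [Real.exp_sub, Real.exp_log hMupos, Real.exp_neg, div_eq_mul_inv]
        _ ≤ Real.exp (Real.log (u t x₁)) := Real.exp_le_exp.2 h2
        _ = u t x₁ := Real.exp_log (hψpos x₁ hx₁ t)
    -- upper bound on q on the interval
    have hqub : ∀ t ∈ Set.Icc t₀ (t₀+T),
        deriv (fun r => u r x₁) t / u t x₁ - a t x₁ - l ≤ ε σ * Real.exp (C₀*T) := by
      intro t ht
      rw [hqrep x₁ hx₁ t, div_le_iff₀ (hψpos x₁ hx₁ t)]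
      obtain ⟨hP0, hP1⟩ := hPb t x₁ hx₁
      obtain ⟨hQ0, hQ1⟩ := hQb x₁
      have hψ := hψge t ht
      have hexp : Real.exp (C₀*T) * Real.exp (-(C₀*T)) = 1 := by
        rw [← Real.exp_add]; simp
      have e1 : co * ((∫ y in Ω, J (σ⁻¹ • (x₁ - y)) * u t y)
          - u t x₁ * (∫ y in Ω, J (σ⁻¹ • (x₁ - y)))) ≤ co * (MJ * volΩ * Mu) := by
        have i1 : co * (∫ y in Ω, J (σ⁻¹ • (x₁ - y)) * u t y) ≤ co * (MJ * volΩ * Mu) :=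
          mul_le_mul_of_nonneg_left hP1 hco0.le
        have i2 : 0 ≤ co * (u t x₁ * (∫ y in Ω, J (σ⁻¹ • (x₁ - y)))) :=
          mul_nonneg hco0.le (mul_nonneg (hψpos x₁ hx₁ t).le hQ0)
        nlinarith [i1, i2]
      have e2 : co * (MJ * volΩ * Mu) = ε σ * Mu := by rw [← hcoε]; ring
      have e3 : ε σ * Real.exp (C₀*T) * (Mu * Real.exp (-(C₀*T))) = ε σ * Mu := by
        rw [show ε σ * Real.exp (C₀*T) * (Mu * Real.exp (-(C₀*T)))
            = ε σ * Mu * (Real.exp (C₀*T) * Real.exp (-(C₀*T))) from by ring, hexp, mul_one]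
      have e4 : ε σ * Real.exp (C₀*T) * (Mu * Real.exp (-(C₀*T)))
          ≤ ε σ * Real.exp (C₀*T) * u t x₁ :=
        mul_le_mul_of_nonneg_left hψ (mul_nonneg hεσnn (Real.exp_pos _).le)
      linarith [e1, e2, e3, e4]
    -- lower bound on lam
    have hlb : -S - ε σ * Real.exp (C₀ * T) ≤ l := by
      have hqc : Continuous fun t => deriv (fun r => u r x₁) t / u t x₁ - a t x₁ - l :=
        ((hGcont x₁ hx₁).sub (hacontx x₁)).sub continuous_const
      have hmono2 : (∫ t in t₀..t₀+T, (deriv (fun r => u r x₁) t / u t x₁ - a t x₁ - l))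
          ≤ ∫ _t in t₀..t₀+T, (ε σ * Real.exp (C₀*T)) :=
        intervalIntegral.integral_mono_on (by linarith) (hqc.intervalIntegrable _ _)
          intervalIntegrable_const hqub
      rw [hmain x₁ hx₁ t₀, intervalIntegral.integral_const] at hmono2
      simp only [add_sub_cancel_left, smul_eq_mul] at hmono2
      have h2 : T * (-(timeAvg T a x₁ + l)) ≤ T * (ε σ * Real.exp (C₀*T)) := by
        linarith [hmono2]
      have h3 := le_of_mul_le_mul_left h2 hT
      have h4 := htAleS x₁ hx₁
      linarith
    exact ⟨hlb, hub⟩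
  -- pass to the limit
  have hεlim : Tendsto ε atTop (𝓝 0) := by
    have h := (tendsto_rpow_atTop hp).const_div_atTop (D * MJ * volΩ)
    rw [hε_def]
    exact h
  have hup : Tendsto (fun σ => -S + ε σ) atTop (𝓝 (-S)) := by
    have h := (tendsto_const_nhds (x := -S) (f := atTop)).add hεlim
    simpa using h
  have hlo : Tendsto (fun σ => -S - ε σ * Real.exp (C₀*T)) atTop (𝓝 (-S)) := by
    have h1 := hεlim.mul_const (Real.exp (C₀*T))
    have h := (tendsto_const_nhds (x := -S) (f := atTop)).sub h1
    simpa using h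
  refine tendsto_of_tendsto_of_tendsto_of_le_of_le' hlo hup ?_ ?_
  · filter_upwards [eventually_ge_atTop (1:ℝ)] with σ hσ using (key σ hσ).1
  · filter_upwards [eventually_ge_atTop (1:ℝ)] with σ hσ using (key σ hσ).2
end

section
/- Fix D > 0 and 0 ≤ k < 1. Suppose that a is Lipschitz continuous in x uniformly in t, i.e., there is M > 0 with |a(t,x) − a(t,y)| ≤ M|x − y| for all t ∈ ℝ and x, y ∈ cl(Ω). Suppose that for every σ > 0 there is a principal eigenpair (λ_σ, φ_σ) of −L_{σ,k}. Then liminf_{σ → 0⁺} λ_σ ≥ −max_{x ∈ cl(Ω)} a_T(x). -/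
open MeasureTheory Filter Topology

set_option maxHeartbeats 2000000 in
theorem eigenvalue_liminf_small_dispersal_range
    (N : ℕ) (hN : 1 ≤ N)
    (Ω : Set (EuclideanSpace ℝ (Fin N)))
    (hΩne : Ω.Nonempty) (hΩopen : IsOpen Ω) (hΩbdd : Bornology.IsBounded Ω)
    (hΩconn : IsConnected Ω)
    (J : EuclideanSpace ℝ (Fin N) → ℝ)
    (hJcont : Continuous J) (hJnonneg : ∀ x, 0 ≤ J x)
    (γ : ℝ) (hγ : 0 < γ)
    (hJsupp : Function.support J ⊆ Metric.ball (0 : EuclideanSpace ℝ (Fin N)) γ)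
    (hJ0 : 0 < J 0) (hJint : ∫ x, J x = 1)
    (T : ℝ) (hT : 0 < T)
    (a : ℝ → EuclideanSpace ℝ (Fin N) → ℝ)
    (hacont : Continuous fun p : ℝ × EuclideanSpace ℝ (Fin N) => a p.1 p.2)
    (haper : ∀ t x, a (t + T) x = a t x)
    (D k : ℝ) (hD : 0 < D) (hk0 : 0 ≤ k) (hk1 : k < 1)
    (M : ℝ) (hM : 0 < M)
    (haLip : ∀ t : ℝ, ∀ x ∈ closure Ω, ∀ y ∈ closure Ω,
      |a t x - a t y| ≤ M * ‖x - y‖)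
    (lam : ℝ → ℝ) (φ : ℝ → ℝ → EuclideanSpace ℝ (Fin N) → ℝ)
    (heig : ∀ σ : ℝ, 0 < σ → isPEigenpair Ω J a T D σ k (lam σ) (φ σ)) :
    -(sSup (timeAvg T a '' closure Ω)) ≤ Filter.liminf lam (𝓝[>] (0:ℝ)) := by

  classical
  have hclK : IsCompact (closure Ω) := hΩbdd.isCompact_closure
  have hclne : (closure Ω).Nonempty := hΩne.closure
  obtain ⟨x₀, hx₀⟩ := hclne
  have haslice : ∀ x : EuclideanSpace ℝ (Fin N), Continuous fun s => a s x := fun x =>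
    hacont.comp (continuous_id.prodMk continuous_const)
  obtain ⟨P, hPdef⟩ : ∃ P : ℝ → EuclideanSpace ℝ (Fin N) → ℝ,
      P = fun t x => ∫ s in (0:ℝ)..t, a s x := ⟨_, rfl⟩
  have hPcont : Continuous fun p : EuclideanSpace ℝ (Fin N) × ℝ => P p.2 p.1 := by
    simp only [hPdef]
    have hu : Continuous
        (Function.uncurry fun (x : EuclideanSpace ℝ (Fin N)) (t : ℝ) => a t x) := by
      exact hacont.comp continuous_swap
    exact intervalIntegral.continuous_parametric_primitive_of_continuous hu
  have haTcont : Continuous (timeAvg T a) := by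
    have h1 : Continuous fun x : EuclideanSpace ℝ (Fin N) => P T x :=
      hPcont.comp (continuous_id.prodMk continuous_const)
    have h2 : timeAvg T a = fun x => (1 / T) * P T x := by
      funext x; simp only [timeAvg, hPdef]
    rw [h2]
    exact continuous_const.mul h1
  obtain ⟨S, hSdef⟩ : ∃ S : ℝ, S = sSup (timeAvg T a '' closure Ω) := ⟨_, rfl⟩
  rw [← hSdef]
  have hS : ∀ x ∈ closure Ω, timeAvg T a x ≤ S := by
    intro x hx
    rw [hSdef]
    exact le_csSup (hclK.image haTcont).bddAbove ⟨x, hx, rfl⟩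
  obtain ⟨A, hAdef⟩ : ∃ A : ℝ → EuclideanSpace ℝ (Fin N) → ℝ,
      A = fun t x => P t x - t * timeAvg T a x := ⟨_, rfl⟩
  have hAcont : Continuous fun p : ℝ × EuclideanSpace ℝ (Fin N) => A p.1 p.2 := by
    simp only [hAdef]
    exact (hPcont.comp continuous_swap).sub (continuous_fst.mul (haTcont.comp continuous_snd))
  have hTavg : ∀ x, T * timeAvg T a x = ∫ s in (0:ℝ)..T, a s x := by
    intro x
    simp only [timeAvg]
    field_simp
  have hAper : ∀ t x, A (t + T) x = A t x := by
    intro t x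
    have hsplit : P (t + T) x = P t x + ∫ s in t..(t + T), a s x := by
      simp only [hPdef]
      exact (intervalIntegral.integral_add_adjacent_intervals
        ((haslice x).intervalIntegrable _ _) ((haslice x).intervalIntegrable _ _)).symm
    have hper : Function.Periodic (fun s => a s x) T := fun s => haper s x
    have h2 : ∫ s in t..(t + T), a s x = ∫ s in (0:ℝ)..T, a s x := by
      have := hper.intervalIntegral_add_eq t 0
      simpa using this
    have h3 := hTavg x
    have h4 : (t + T) * timeAvg T a x = t * timeAvg T a x + T * timeAvg T a x := by ring
    simp only [hAdef]
    rw [hsplit, h2, h4]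
    linarith
  have hAderiv : ∀ (x : EuclideanSpace ℝ (Fin N)) (t : ℝ),
      HasDerivAt (fun s => A s x) (a t x - timeAvg T a x) t := by
    intro x t
    have h1 : HasDerivAt (fun u => ∫ s in (0:ℝ)..u, a s x) (a t x) t := by
      exact intervalIntegral.integral_hasDerivAt_right
        ((haslice x).intervalIntegrable _ _)
        ((haslice x).stronglyMeasurableAtFilter _ _)
        (haslice x).continuousAt
    have h2 : HasDerivAt (fun u : ℝ => u * timeAvg T a x) (timeAvg T a x) t := by
      simpa using (hasDerivAt_id t).mul_const (timeAvg T a x)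
    simp only [hAdef, hPdef]
    exact h1.sub h2
  have hAdiff : ∀ t ∈ Set.Icc (0:ℝ) T, ∀ x ∈ closure Ω, ∀ y ∈ closure Ω,
      |A t y - A t x| ≤ 2 * T * M * ‖y - x‖ := by
    intro t ht x hx y hy
    have hIb : ∀ b ∈ Set.Icc (0:ℝ) T,
        |∫ s in (0:ℝ)..b, (a s y - a s x)| ≤ M * ‖y - x‖ * T := by
      intro b hb
      have h1 : ∀ s ∈ Set.uIoc (0:ℝ) b, ‖a s y - a s x‖ ≤ M * ‖y - x‖ := by
        intro s _
        rw [Real.norm_eq_abs]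
        exact haLip s y hy x hx
      have h2 := intervalIntegral.norm_integral_le_of_norm_le_const h1
      rw [Real.norm_eq_abs] at h2
      have h3 : |b - 0| ≤ T := by
        rw [sub_zero, abs_of_nonneg hb.1]; exact hb.2
      calc |∫ s in (0:ℝ)..b, (a s y - a s x)| ≤ M * ‖y - x‖ * |b - 0| := h2
        _ ≤ M * ‖y - x‖ * T := by
            have hMn : 0 ≤ M * ‖y - x‖ := mul_nonneg hM.le (norm_nonneg _)
            exact mul_le_mul_of_nonneg_left h3 hMn
    have hsub : ∀ b : ℝ, P b y - P b x = ∫ s in (0:ℝ)..b, (a s y - a s x) := by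
      intro b
      simp only [hPdef]
      rw [intervalIntegral.integral_sub ((haslice y).intervalIntegrable _ _)
        ((haslice x).intervalIntegrable _ _)]
    have haT : timeAvg T a y - timeAvg T a x
        = (1 / T) * ∫ s in (0:ℝ)..T, (a s y - a s x) := by
      simp only [timeAvg]
      rw [intervalIntegral.integral_sub ((haslice y).intervalIntegrable _ _)
        ((haslice x).intervalIntegrable _ _)]
      ring
    have hA1 : A t y - A t x
        = (P t y - P t x) - t * (timeAvg T a y - timeAvg T a x) := by
      simp only [hAdef]; ring
    rw [hA1, hsub t, haT]
    have h2 := hIb t ht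
    have h3 := hIb T ⟨hT.le, le_rfl⟩
    have ht0 : |t| ≤ T := by rw [abs_of_nonneg ht.1]; exact ht.2
    have h4 : |t * ((1 / T) * ∫ s in (0:ℝ)..T, (a s y - a s x))| ≤ T * (M * ‖y - x‖) := by
      rw [abs_mul, abs_mul]
      have h1T : |1 / T| = 1 / T := abs_of_pos (by positivity)
      rw [h1T]
      calc |t| * (1 / T * |∫ s in (0:ℝ)..T, (a s y - a s x)|)
          ≤ T * (1 / T * (M * ‖y - x‖ * T)) := by
            apply mul_le_mul ht0 _ (by positivity) hT.le
            exact mul_le_mul_of_nonneg_left h3 (by positivity)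
        _ = T * (M * ‖y - x‖) := by field_simp
    calc |(∫ s in (0:ℝ)..t, (a s y - a s x))
          - t * ((1 / T) * ∫ s in (0:ℝ)..T, (a s y - a s x))|
        ≤ |∫ s in (0:ℝ)..t, (a s y - a s x)|
          + |t * ((1 / T) * ∫ s in (0:ℝ)..T, (a s y - a s x))| := abs_sub _ _
      _ ≤ M * ‖y - x‖ * T + T * (M * ‖y - x‖) := add_le_add h2 h4
      _ = 2 * T * M * ‖y - x‖ := by ring
  -- the error term
  obtain ⟨C, hCdef⟩ : ∃ C : ℝ, C = 2 * T * M * γ := ⟨_, rfl⟩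
  have hC : 0 < C := by rw [hCdef]; positivity
  obtain ⟨err, herrdef⟩ : ∃ err : ℝ → ℝ,
      err = fun σ => D * (Real.exp (C * σ) - 1) / σ ^ k := ⟨_, rfl⟩
  obtain ⟨B, hBdef⟩ : ∃ B : ℝ,
      B = sSup ((fun x => -timeAvg T a x) '' closure Ω) := ⟨_, rfl⟩
  have hB : ∀ x ∈ closure Ω, -timeAvg T a x ≤ B := by
    intro x hx
    rw [hBdef]
    exact le_csSup (hclK.image haTcont.neg).bddAbove ⟨x, hx, rfl⟩
  obtain ⟨err2, herr2def⟩ : ∃ err2 : ℝ → ℝ,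
      err2 = fun σ => D * (1 - Real.exp (-(C * σ))) / σ ^ k := ⟨_, rfl⟩
  -- MAIN KEY INEQUALITY
  have key : ∀ σ : ℝ, 0 < σ → -S - err σ ≤ lam σ := by
    intro σ hσ
    obtain ⟨⟨⟨hφc, hφC1, hφper⟩, hφpos⟩, heq⟩ := heig σ hσ
    obtain ⟨ψ, hψdef⟩ : ∃ ψ : ℝ → EuclideanSpace ℝ (Fin N) → ℝ,
      ψ = fun t x => φ σ t x * Real.exp (-(A t x)) := ⟨_, rfl⟩
    have hψcontOn : ContinuousOn (fun p : ℝ × EuclideanSpace ℝ (Fin N) => ψ p.1 p.2)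
        (Set.univ ×ˢ closure Ω) := by
      simp only [hψdef]
      exact hφc.mul ((Real.continuous_exp.comp hAcont.neg).continuousOn)
    have hK : IsCompact (Set.Icc (0:ℝ) T ×ˢ closure Ω) := isCompact_Icc.prod hclK
    have hKne : (Set.Icc (0:ℝ) T ×ˢ closure Ω).Nonempty :=
      ⟨(0, x₀), ⟨⟨le_rfl, hT.le⟩, hx₀⟩⟩
    obtain ⟨⟨t₁, x₁⟩, hmem, hmax⟩ := hK.exists_isMaxOn hKne
      (hψcontOn.mono (Set.prod_mono (Set.subset_univ _) subset_rfl))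
    obtain ⟨ht₁, hx₁⟩ := hmem
    have hψper : ∀ t x, ψ (t + T) x = ψ t x := by
      intro t x
      simp only [hψdef]
      rw [hφper, hAper]
    have hglobal : ∀ t : ℝ, ∀ y ∈ closure Ω, ψ t y ≤ ψ t₁ x₁ := by
      intro t y hy
      have hper : Function.Periodic (fun t => ψ t y) T := fun t => hψper t y
      obtain ⟨t', ht', heqt⟩ := hper.exists_mem_Ico₀ hT t
      rw [heqt]
      exact hmax (Set.mk_mem_prod ⟨ht'.1, ht'.2.le⟩ hy)
    have hc : 0 < φ σ t₁ x₁ := hφpos t₁ x₁ hx₁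
    -- derivative identity
    have hdiff : DifferentiableAt ℝ (fun s => φ σ s x₁) t₁ :=
      ((hφC1 x₁ hx₁).differentiable one_ne_zero) t₁
    have hgd : HasDerivAt (fun t => ψ t x₁)
        (deriv (fun s => φ σ s x₁) t₁ * Real.exp (-(A t₁ x₁))
          + φ σ t₁ x₁ * (Real.exp (-(A t₁ x₁)) * -(a t₁ x₁ - timeAvg T a x₁))) t₁ := by
      simp only [hψdef]
      exact hdiff.hasDerivAt.mul ((hAderiv x₁ t₁).neg.exp)
    have hloc : IsLocalMax (fun t => ψ t x₁) t₁ :=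
      Filter.Eventually.of_forall (fun t => hglobal t x₁ hx₁)
    have hzero : deriv (fun s => φ σ s x₁) t₁ * Real.exp (-(A t₁ x₁))
          + φ σ t₁ x₁ * (Real.exp (-(A t₁ x₁)) * -(a t₁ x₁ - timeAvg T a x₁)) = 0 := by
      rw [← hgd.deriv]
      exact hloc.deriv_eq_zero
    have hdval : deriv (fun s => φ σ s x₁) t₁
        = φ σ t₁ x₁ * (a t₁ x₁ - timeAvg T a x₁) := by
      have hE := Real.exp_pos (-(A t₁ x₁))
      have h2 : (deriv (fun s => φ σ s x₁) t₁
          - φ σ t₁ x₁ * (a t₁ x₁ - timeAvg T a x₁)) * Real.exp (-(A t₁ x₁)) = 0 := by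
        linear_combination hzero
      rcases mul_eq_zero.mp h2 with h | h
      · linarith
      · exact absurd h hE.ne'
    -- pointwise estimate in the nonlocal term
    have hnormlt : ∀ y, J (σ⁻¹ • (x₁ - y)) ≠ 0 → ‖x₁ - y‖ < γ * σ := by
      intro y h
      have hb := mem_ball_zero_iff.mp (hJsupp (Function.mem_support.mpr h))
      rw [norm_smul, Real.norm_eq_abs, abs_of_pos (inv_pos.mpr hσ)] at hb
      calc ‖x₁ - y‖ = σ * (σ⁻¹ * ‖x₁ - y‖) := by field_simp
        _ < σ * γ := mul_lt_mul_of_pos_left hb hσ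
        _ = γ * σ := mul_comm _ _
    have hE0 : 0 ≤ Real.exp (C * σ) - 1 := by
      have h1 : (0:ℝ) ≤ C * σ := mul_nonneg hC.le hσ.le
      have := Real.add_one_le_exp (C * σ)
      linarith
    have hpt : ∀ y ∈ Ω, J (σ⁻¹ • (x₁ - y)) * (φ σ t₁ y - φ σ t₁ x₁)
        ≤ J (σ⁻¹ • (x₁ - y)) * ((Real.exp (C * σ) - 1) * φ σ t₁ x₁) := by
      intro y hy
      have hycl : y ∈ closure Ω := subset_closure hy
      rcases (hJnonneg (σ⁻¹ • (x₁ - y))).eq_or_lt with h0 | h0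
      · rw [← h0]; simp
      · have hnorm := hnormlt y h0.ne'
        have hAd : |A t₁ y - A t₁ x₁| ≤ 2 * T * M * ‖y - x₁‖ := hAdiff t₁ ht₁ x₁ hx₁ y hycl
        have hexp : φ σ t₁ y ≤ φ σ t₁ x₁ * Real.exp (C * σ) := by
          have hle := hglobal t₁ y hycl
          simp only [hψdef] at hle
          have h1 : φ σ t₁ y ≤ φ σ t₁ x₁ * Real.exp (A t₁ y - A t₁ x₁) := by
            have h := mul_le_mul_of_nonneg_right hle (Real.exp_pos (A t₁ y)).le
            rw [mul_assoc, mul_assoc, ← Real.exp_add, ← Real.exp_add] at h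
            simpa [neg_add_cancel, neg_add_eq_sub] using h
          have h2 : Real.exp (A t₁ y - A t₁ x₁) ≤ Real.exp (C * σ) := by
            apply Real.exp_le_exp.mpr
            have hyx : ‖y - x₁‖ = ‖x₁ - y‖ := norm_sub_rev _ _
            calc A t₁ y - A t₁ x₁ ≤ |A t₁ y - A t₁ x₁| := le_abs_self _
              _ ≤ 2 * T * M * ‖y - x₁‖ := hAd
              _ ≤ 2 * T * M * (γ * σ) := by
                  rw [hyx]
                  exact mul_le_mul_of_nonneg_left hnorm.le (by positivity)
              _ = C * σ := by rw [hCdef]; ring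
          calc φ σ t₁ y ≤ φ σ t₁ x₁ * Real.exp (A t₁ y - A t₁ x₁) := h1
            _ ≤ φ σ t₁ x₁ * Real.exp (C * σ) := mul_le_mul_of_nonneg_left h2 hc.le
        have hsub : φ σ t₁ y - φ σ t₁ x₁ ≤ (Real.exp (C * σ) - 1) * φ σ t₁ x₁ := by
          nlinarith
        exact mul_le_mul_of_nonneg_left hsub h0.le
    -- integrability
    have hφt₁cont : ContinuousOn (fun y => φ σ t₁ y) (closure Ω) := by
      have := hφc.comp (Continuous.continuousOn
        (continuous_const.prodMk continuous_id : Continuous fun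
          y : EuclideanSpace ℝ (Fin N) => (t₁, y)))
        (fun y hy => ⟨Set.mem_univ _, hy⟩)
      exact this
    have hJy : Continuous fun y : EuclideanSpace ℝ (Fin N) => J (σ⁻¹ • (x₁ - y)) :=
      hJcont.comp ((continuous_const.sub continuous_id).const_smul σ⁻¹)
    have hfint : IntegrableOn
        (fun y => J (σ⁻¹ • (x₁ - y)) * (φ σ t₁ y - φ σ t₁ x₁)) Ω volume := by
      apply (ContinuousOn.integrableOn_compact hclK ?_).mono_set subset_closure
      exact hJy.continuousOn.mul (hφt₁cont.sub continuousOn_const)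
    have hgint : IntegrableOn
        (fun y => J (σ⁻¹ • (x₁ - y)) * ((Real.exp (C * σ) - 1) * φ σ t₁ x₁)) Ω volume := by
      apply (ContinuousOn.integrableOn_compact hclK ?_).mono_set subset_closure
      exact hJy.continuousOn.mul continuousOn_const
    have hIle1 := setIntegral_mono_on hfint hgint hΩopen.measurableSet hpt
    -- total mass of the kernel
    have hJcs : HasCompactSupport (fun y : EuclideanSpace ℝ (Fin N) => J (σ⁻¹ • (x₁ - y))) := by
      apply HasCompactSupport.intro (isCompact_closedBall x₁ (γ * σ))
      intro y hy
      by_contra h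
      apply hy
      have := (hnormlt y h).le
      rw [Metric.mem_closedBall, dist_eq_norm, ← norm_sub_rev]
      exact this
    have hJσint : Integrable (fun y : EuclideanSpace ℝ (Fin N) => J (σ⁻¹ • (x₁ - y))) :=
      hJy.integrable_of_hasCompactSupport hJcs
    have hJtotal : ∫ y : EuclideanSpace ℝ (Fin N), J (σ⁻¹ • (x₁ - y)) = σ ^ N := by
      rw [show (fun y : EuclideanSpace ℝ (Fin N) => J (σ⁻¹ • (x₁ - y)))
          = fun y => (fun z => J (σ⁻¹ • z)) (x₁ - y) from rfl]
      rw [integral_sub_left_eq_self (fun z => J (σ⁻¹ • z)) volume x₁]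
      rw [MeasureTheory.Measure.integral_comp_smul, hJint]
      simp only [finrank_euclideanSpace_fin, smul_eq_mul, mul_one, inv_pow, inv_inv]
      exact abs_of_pos (pow_pos hσ N)
    have hJΩ : ∫ y in Ω, J (σ⁻¹ • (x₁ - y)) ≤ σ ^ N :=
      hJtotal ▸ setIntegral_le_integral hJσint (ae_of_all _ fun y => hJnonneg _)
    have e3 : (∫ y in Ω, J (σ⁻¹ • (x₁ - y)) * (φ σ t₁ y - φ σ t₁ x₁))
        ≤ σ ^ N * ((Real.exp (C * σ) - 1) * φ σ t₁ x₁) := by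
      refine hIle1.trans ?_
      rw [integral_mul_const]
      exact mul_le_mul_of_nonneg_right hJΩ (mul_nonneg hE0 hc.le)
    -- rpow algebra
    have hσN : (0:ℝ) < σ ^ N := pow_pos hσ N
    have hσk : (0:ℝ) < σ ^ k := Real.rpow_pos_of_pos hσ k
    have hσpow : σ ^ ((N:ℝ) + k) = σ ^ N * σ ^ k := by
      rw [Real.rpow_add hσ, Real.rpow_natCast]
    have e5 : D / σ ^ ((N:ℝ) + k) * σ ^ N = D / σ ^ k := by
      rw [hσpow]
      field_simp
    have hQ : 0 < D / σ ^ ((N:ℝ) + k) := by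
      apply div_pos hD
      rw [hσpow]; positivity
    -- eigen equation at (t₁, x₁)
    have heq1 := heq t₁ x₁ hx₁
    simp only [nlOp] at heq1
    have h8 : D / σ ^ ((N:ℝ) + k) * (∫ y in Ω, J (σ⁻¹ • (x₁ - y)) * (φ σ t₁ y - φ σ t₁ x₁))
        ≤ D / σ ^ k * ((Real.exp (C * σ) - 1) * φ σ t₁ x₁) := by
      calc D / σ ^ ((N:ℝ) + k) * (∫ y in Ω, J (σ⁻¹ • (x₁ - y)) * (φ σ t₁ y - φ σ t₁ x₁))
          ≤ D / σ ^ ((N:ℝ) + k) * (σ ^ N * ((Real.exp (C * σ) - 1) * φ σ t₁ x₁)) :=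
            mul_le_mul_of_nonneg_left e3 hQ.le
        _ = (D / σ ^ ((N:ℝ) + k) * σ ^ N) * ((Real.exp (C * σ) - 1) * φ σ t₁ x₁) := by ring
        _ = D / σ ^ k * ((Real.exp (C * σ) - 1) * φ σ t₁ x₁) := by rw [e5]
    have h9 : lam σ * φ σ t₁ x₁
        = -(timeAvg T a x₁ * φ σ t₁ x₁)
          - D / σ ^ ((N:ℝ) + k) * (∫ y in Ω, J (σ⁻¹ • (x₁ - y)) * (φ σ t₁ y - φ σ t₁ x₁)) := by
      rw [hdval] at heq1
      linarith [heq1]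
    have hSx : -(S * φ σ t₁ x₁) ≤ -(timeAvg T a x₁ * φ σ t₁ x₁) := by
      have := mul_le_mul_of_nonneg_right (hS x₁ hx₁) hc.le
      linarith
    have h10 : (-S - err σ) * φ σ t₁ x₁ ≤ lam σ * φ σ t₁ x₁ := by
      have herr_eq : err σ * φ σ t₁ x₁
          = D / σ ^ k * ((Real.exp (C * σ) - 1) * φ σ t₁ x₁) := by
        simp only [herrdef]
        ring
      nlinarith [h8, h9, hSx, herr_eq]
    exact le_of_mul_le_mul_right h10 hc
  -- UPPER BOUND (needed for coboundedness)
  have key2 : ∀ σ : ℝ, 0 < σ → lam σ ≤ B + err2 σ := by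
    intro σ hσ
    obtain ⟨⟨⟨hφc, hφC1, hφper⟩, hφpos⟩, heq⟩ := heig σ hσ
    obtain ⟨ψ, hψdef⟩ : ∃ ψ : ℝ → EuclideanSpace ℝ (Fin N) → ℝ,
      ψ = fun t x => φ σ t x * Real.exp (-(A t x)) := ⟨_, rfl⟩
    have hψcontOn : ContinuousOn (fun p : ℝ × EuclideanSpace ℝ (Fin N) => ψ p.1 p.2)
        (Set.univ ×ˢ closure Ω) := by
      simp only [hψdef]
      exact hφc.mul ((Real.continuous_exp.comp hAcont.neg).continuousOn)
    have hK : IsCompact (Set.Icc (0:ℝ) T ×ˢ closure Ω) := isCompact_Icc.prod hclK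
    have hKne : (Set.Icc (0:ℝ) T ×ˢ closure Ω).Nonempty :=
      ⟨(0, x₀), ⟨⟨le_rfl, hT.le⟩, hx₀⟩⟩
    obtain ⟨⟨t₁, x₁⟩, hmem, hmax⟩ := hK.exists_isMinOn hKne
      (hψcontOn.mono (Set.prod_mono (Set.subset_univ _) subset_rfl))
    obtain ⟨ht₁, hx₁⟩ := hmem
    have hψper : ∀ t x, ψ (t + T) x = ψ t x := by
      intro t x
      simp only [hψdef]
      rw [hφper, hAper]
    have hglobal : ∀ t : ℝ, ∀ y ∈ closure Ω, ψ t₁ x₁ ≤ ψ t y := by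
      intro t y hy
      have hper : Function.Periodic (fun t => ψ t y) T := fun t => hψper t y
      obtain ⟨t', ht', heqt⟩ := hper.exists_mem_Ico₀ hT t
      rw [heqt]
      exact hmax (Set.mk_mem_prod ⟨ht'.1, ht'.2.le⟩ hy)
    have hc : 0 < φ σ t₁ x₁ := hφpos t₁ x₁ hx₁
    have hdiff : DifferentiableAt ℝ (fun s => φ σ s x₁) t₁ :=
      ((hφC1 x₁ hx₁).differentiable one_ne_zero) t₁
    have hgd : HasDerivAt (fun t => ψ t x₁)
        (deriv (fun s => φ σ s x₁) t₁ * Real.exp (-(A t₁ x₁))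
          + φ σ t₁ x₁ * (Real.exp (-(A t₁ x₁)) * -(a t₁ x₁ - timeAvg T a x₁))) t₁ := by
      simp only [hψdef]
      exact hdiff.hasDerivAt.mul ((hAderiv x₁ t₁).neg.exp)
    have hloc : IsLocalMin (fun t => ψ t x₁) t₁ :=
      Filter.Eventually.of_forall (fun t => hglobal t x₁ hx₁)
    have hzero : deriv (fun s => φ σ s x₁) t₁ * Real.exp (-(A t₁ x₁))
          + φ σ t₁ x₁ * (Real.exp (-(A t₁ x₁)) * -(a t₁ x₁ - timeAvg T a x₁)) = 0 := by
      rw [← hgd.deriv]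
      exact hloc.deriv_eq_zero
    have hdval : deriv (fun s => φ σ s x₁) t₁
        = φ σ t₁ x₁ * (a t₁ x₁ - timeAvg T a x₁) := by
      have hE := Real.exp_pos (-(A t₁ x₁))
      have h2 : (deriv (fun s => φ σ s x₁) t₁
          - φ σ t₁ x₁ * (a t₁ x₁ - timeAvg T a x₁)) * Real.exp (-(A t₁ x₁)) = 0 := by
        linear_combination hzero
      rcases mul_eq_zero.mp h2 with h | h
      · linarith
      · exact absurd h hE.ne'
    have hnormlt : ∀ y, J (σ⁻¹ • (x₁ - y)) ≠ 0 → ‖x₁ - y‖ < γ * σ := by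
      intro y h
      have hb := mem_ball_zero_iff.mp (hJsupp (Function.mem_support.mpr h))
      rw [norm_smul, Real.norm_eq_abs, abs_of_pos (inv_pos.mpr hσ)] at hb
      calc ‖x₁ - y‖ = σ * (σ⁻¹ * ‖x₁ - y‖) := by field_simp
        _ < σ * γ := mul_lt_mul_of_pos_left hb hσ
        _ = γ * σ := mul_comm _ _
    have hE0 : Real.exp (-(C * σ)) - 1 ≤ 0 := by
      have h1 : -(C * σ) ≤ 0 := by
        have : (0:ℝ) ≤ C * σ := mul_nonneg hC.le hσ.le
        linarith
      have := Real.exp_le_one_iff.mpr h1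
      linarith
    have hpt : ∀ y ∈ Ω, J (σ⁻¹ • (x₁ - y)) * ((Real.exp (-(C * σ)) - 1) * φ σ t₁ x₁)
        ≤ J (σ⁻¹ • (x₁ - y)) * (φ σ t₁ y - φ σ t₁ x₁) := by
      intro y hy
      have hycl : y ∈ closure Ω := subset_closure hy
      rcases (hJnonneg (σ⁻¹ • (x₁ - y))).eq_or_lt with h0 | h0
      · rw [← h0]; simp
      · have hnorm := hnormlt y h0.ne'
        have hAd : |A t₁ y - A t₁ x₁| ≤ 2 * T * M * ‖y - x₁‖ := hAdiff t₁ ht₁ x₁ hx₁ y hycl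
        have hexp : φ σ t₁ x₁ * Real.exp (-(C * σ)) ≤ φ σ t₁ y := by
          have hle := hglobal t₁ y hycl
          simp only [hψdef] at hle
          have h1 : φ σ t₁ x₁ * Real.exp (A t₁ y - A t₁ x₁) ≤ φ σ t₁ y := by
            have h := mul_le_mul_of_nonneg_right hle (Real.exp_pos (A t₁ y)).le
            rw [mul_assoc, mul_assoc, ← Real.exp_add, ← Real.exp_add] at h
            simpa [neg_add_cancel, neg_add_eq_sub] using h
          have h2 : Real.exp (-(C * σ)) ≤ Real.exp (A t₁ y - A t₁ x₁) := by
            apply Real.exp_le_exp.mpr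
            have hyx : ‖y - x₁‖ = ‖x₁ - y‖ := norm_sub_rev _ _
            have h3 : |A t₁ y - A t₁ x₁| ≤ C * σ := by
              calc |A t₁ y - A t₁ x₁| ≤ 2 * T * M * ‖y - x₁‖ := hAd
                _ ≤ 2 * T * M * (γ * σ) := by
                    rw [hyx]
                    exact mul_le_mul_of_nonneg_left hnorm.le (by positivity)
                _ = C * σ := by rw [hCdef]; ring
            have := neg_abs_le (A t₁ y - A t₁ x₁)
            linarith
          calc φ σ t₁ x₁ * Real.exp (-(C * σ))
              ≤ φ σ t₁ x₁ * Real.exp (A t₁ y - A t₁ x₁) :=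
                mul_le_mul_of_nonneg_left h2 hc.le
            _ ≤ φ σ t₁ y := h1
        have hsub : (Real.exp (-(C * σ)) - 1) * φ σ t₁ x₁ ≤ φ σ t₁ y - φ σ t₁ x₁ := by
          nlinarith
        exact mul_le_mul_of_nonneg_left hsub h0.le
    have hφt₁cont : ContinuousOn (fun y => φ σ t₁ y) (closure Ω) := by
      have := hφc.comp (Continuous.continuousOn
        (continuous_const.prodMk continuous_id : Continuous fun
          y : EuclideanSpace ℝ (Fin N) => (t₁, y)))
        (fun y hy => ⟨Set.mem_univ _, hy⟩)
      exact this
    have hJy : Continuous fun y : EuclideanSpace ℝ (Fin N) => J (σ⁻¹ • (x₁ - y)) :=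
      hJcont.comp ((continuous_const.sub continuous_id).const_smul σ⁻¹)
    have hfint : IntegrableOn
        (fun y => J (σ⁻¹ • (x₁ - y)) * (φ σ t₁ y - φ σ t₁ x₁)) Ω volume := by
      apply (ContinuousOn.integrableOn_compact hclK ?_).mono_set subset_closure
      exact hJy.continuousOn.mul (hφt₁cont.sub continuousOn_const)
    have hgint : IntegrableOn
        (fun y => J (σ⁻¹ • (x₁ - y)) * ((Real.exp (-(C * σ)) - 1) * φ σ t₁ x₁)) Ω volume := by
      apply (ContinuousOn.integrableOn_compact hclK ?_).mono_set subset_closure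
      exact hJy.continuousOn.mul continuousOn_const
    have hIle1 := setIntegral_mono_on hgint hfint hΩopen.measurableSet hpt
    have hJcs : HasCompactSupport (fun y : EuclideanSpace ℝ (Fin N) => J (σ⁻¹ • (x₁ - y))) := by
      apply HasCompactSupport.intro (isCompact_closedBall x₁ (γ * σ))
      intro y hy
      by_contra h
      apply hy
      have := (hnormlt y h).le
      rw [Metric.mem_closedBall, dist_eq_norm, ← norm_sub_rev]
      exact this
    have hJσint : Integrable (fun y : EuclideanSpace ℝ (Fin N) => J (σ⁻¹ • (x₁ - y))) :=
      hJy.integrable_of_hasCompactSupport hJcs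
    have hJtotal : ∫ y : EuclideanSpace ℝ (Fin N), J (σ⁻¹ • (x₁ - y)) = σ ^ N := by
      rw [show (fun y : EuclideanSpace ℝ (Fin N) => J (σ⁻¹ • (x₁ - y)))
          = fun y => (fun z => J (σ⁻¹ • z)) (x₁ - y) from rfl]
      rw [integral_sub_left_eq_self (fun z => J (σ⁻¹ • z)) volume x₁]
      rw [MeasureTheory.Measure.integral_comp_smul, hJint]
      simp only [finrank_euclideanSpace_fin, smul_eq_mul, mul_one, inv_pow, inv_inv]
      exact abs_of_pos (pow_pos hσ N)
    have hJΩ : ∫ y in Ω, J (σ⁻¹ • (x₁ - y)) ≤ σ ^ N :=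
      hJtotal ▸ setIntegral_le_integral hJσint (ae_of_all _ fun y => hJnonneg _)
    have e3 : σ ^ N * ((Real.exp (-(C * σ)) - 1) * φ σ t₁ x₁)
        ≤ (∫ y in Ω, J (σ⁻¹ • (x₁ - y)) * (φ σ t₁ y - φ σ t₁ x₁)) := by
      refine le_trans ?_ hIle1
      rw [integral_mul_const]
      exact mul_le_mul_of_nonpos_right hJΩ (mul_nonpos_of_nonpos_of_nonneg hE0 hc.le)
    have hσN : (0:ℝ) < σ ^ N := pow_pos hσ N
    have hσk : (0:ℝ) < σ ^ k := Real.rpow_pos_of_pos hσ k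
    have hσpow : σ ^ ((N:ℝ) + k) = σ ^ N * σ ^ k := by
      rw [Real.rpow_add hσ, Real.rpow_natCast]
    have e5 : D / σ ^ ((N:ℝ) + k) * σ ^ N = D / σ ^ k := by
      rw [hσpow]
      field_simp
    have hQ : 0 < D / σ ^ ((N:ℝ) + k) := by
      apply div_pos hD
      rw [hσpow]; positivity
    have heq1 := heq t₁ x₁ hx₁
    simp only [nlOp] at heq1
    have h8 : D / σ ^ k * ((Real.exp (-(C * σ)) - 1) * φ σ t₁ x₁)
        ≤ D / σ ^ ((N:ℝ) + k) * (∫ y in Ω, J (σ⁻¹ • (x₁ - y)) * (φ σ t₁ y - φ σ t₁ x₁)) := by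
      calc D / σ ^ k * ((Real.exp (-(C * σ)) - 1) * φ σ t₁ x₁)
          = (D / σ ^ ((N:ℝ) + k) * σ ^ N) * ((Real.exp (-(C * σ)) - 1) * φ σ t₁ x₁) := by
            rw [e5]
        _ = D / σ ^ ((N:ℝ) + k) * (σ ^ N * ((Real.exp (-(C * σ)) - 1) * φ σ t₁ x₁)) := by ring
        _ ≤ D / σ ^ ((N:ℝ) + k)
            * (∫ y in Ω, J (σ⁻¹ • (x₁ - y)) * (φ σ t₁ y - φ σ t₁ x₁)) :=
            mul_le_mul_of_nonneg_left e3 hQ.le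
    have h9 : lam σ * φ σ t₁ x₁
        = -(timeAvg T a x₁ * φ σ t₁ x₁)
          - D / σ ^ ((N:ℝ) + k) * (∫ y in Ω, J (σ⁻¹ • (x₁ - y)) * (φ σ t₁ y - φ σ t₁ x₁)) := by
      rw [hdval] at heq1
      linarith [heq1]
    have hBx : -(timeAvg T a x₁) * φ σ t₁ x₁ ≤ B * φ σ t₁ x₁ :=
      mul_le_mul_of_nonneg_right (hB x₁ hx₁) hc.le
    have h10 : lam σ * φ σ t₁ x₁ ≤ (B + err2 σ) * φ σ t₁ x₁ := by
      have herr_eq : err2 σ * φ σ t₁ x₁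
          = -(D / σ ^ k * ((Real.exp (-(C * σ)) - 1) * φ σ t₁ x₁)) := by
        simp only [herr2def]
        ring
      nlinarith [h8, h9, hBx, herr_eq]
    exact le_of_mul_le_mul_right h10 hc
  -- limit argument
  have h1k : (0:ℝ) < 1 - k := by linarith
  have herr0 : Tendsto err (𝓝[>] (0:ℝ)) (𝓝 0) := by
    apply squeeze_zero'
    · filter_upwards [self_mem_nhdsWithin] with σ hσ
      have hσ' : (0:ℝ) < σ := hσ
      have h2 := Real.add_one_le_exp (C * σ)
      have h3 : 0 ≤ Real.exp (C * σ) - 1 := by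
        have h1 : (0:ℝ) ≤ C * σ := mul_nonneg hC.le hσ'.le
        linarith
      have h4 : (0:ℝ) < σ ^ k := Real.rpow_pos_of_pos hσ' k
      simp only [herrdef]
      exact div_nonneg (mul_nonneg hD.le h3) h4.le
    · show ∀ᶠ σ in 𝓝[>] (0:ℝ), err σ ≤ D * C * Real.exp C * σ ^ ((1:ℝ) - k)
      filter_upwards [Ioc_mem_nhdsGT (zero_lt_one)] with σ hσ
      obtain ⟨hσ0, hσ1⟩ := hσ
      have hσk : (0:ℝ) < σ ^ k := Real.rpow_pos_of_pos hσ0 k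
      have hEle : Real.exp (C * σ) - 1 ≤ C * σ * Real.exp (C * σ) := by
        have h1 := Real.add_one_le_exp (-(C * σ))
        have h2 := Real.exp_pos (C * σ)
        have h3 : Real.exp (-(C * σ)) * Real.exp (C * σ) = 1 := by
          rw [← Real.exp_add]; simp
        nlinarith
      have hEle2 : Real.exp (C * σ) - 1 ≤ C * σ * Real.exp C := by
        have h4 : Real.exp (C * σ) ≤ Real.exp C := by
          apply Real.exp_le_exp.mpr
          nlinarith [hC.le, hσ0.le]
        have h5 := mul_le_mul_of_nonneg_left h4 (mul_nonneg hC.le hσ0.le)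
        linarith
      have hrw : σ ^ ((1:ℝ) - k) = σ / σ ^ k := by
        rw [Real.rpow_sub hσ0, Real.rpow_one]
      have hnum : D * (Real.exp (C * σ) - 1) ≤ D * C * Real.exp C * σ := by
        nlinarith [hEle2, hD.le]
      simp only [herrdef]
      rw [hrw]
      calc D * (Real.exp (C * σ) - 1) / σ ^ k
          ≤ (D * C * Real.exp C * σ) / σ ^ k := by
            exact div_le_div_of_nonneg_right hnum hσk.le
        _ = D * C * Real.exp C * (σ / σ ^ k) := by ring
    · have hcont : ContinuousAt (fun σ : ℝ => σ ^ ((1:ℝ) - k)) 0 :=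
        Real.continuousAt_rpow_const 0 _ (Or.inr h1k.le)
      have h2 : Tendsto (fun σ : ℝ => σ ^ ((1:ℝ) - k)) (𝓝[>] 0) (𝓝 0) := by
        have := hcont.tendsto
        rw [Real.zero_rpow h1k.ne'] at this
        exact this.mono_left nhdsWithin_le_nhds
      simpa using h2.const_mul (D * C * Real.exp C)
  have hlim : Tendsto (fun σ => -S - err σ) (𝓝[>] (0:ℝ)) (𝓝 (-S)) := by
    have := (tendsto_const_nhds (x := -S) (f := 𝓝[>] (0:ℝ))).sub herr0
    simpa using this
  have hev : ∀ᶠ σ in 𝓝[>] (0:ℝ), -S - err σ ≤ lam σ := by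
    filter_upwards [self_mem_nhdsWithin] with σ hσ
    exact key σ hσ
  have herr2_0 : Tendsto err2 (𝓝[>] (0:ℝ)) (𝓝 0) := by
    apply squeeze_zero'
    · filter_upwards [self_mem_nhdsWithin] with σ hσ
      have hσ' : (0:ℝ) < σ := hσ
      have h1 : -(C * σ) ≤ 0 := by
        have : (0:ℝ) ≤ C * σ := mul_nonneg hC.le hσ'.le
        linarith
      have h3 : 0 ≤ 1 - Real.exp (-(C * σ)) := by
        have := Real.exp_le_one_iff.mpr h1
        linarith
      have h4 : (0:ℝ) < σ ^ k := Real.rpow_pos_of_pos hσ' k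
      simp only [herr2def]
      exact div_nonneg (mul_nonneg hD.le h3) h4.le
    · show ∀ᶠ σ in 𝓝[>] (0:ℝ), err2 σ ≤ D * C * σ ^ ((1:ℝ) - k)
      filter_upwards [self_mem_nhdsWithin] with σ hσ0
      have hσ0 : (0:ℝ) < σ := hσ0
      have hσk : (0:ℝ) < σ ^ k := Real.rpow_pos_of_pos hσ0 k
      have hEle : 1 - Real.exp (-(C * σ)) ≤ C * σ := by
        have h1 := Real.add_one_le_exp (-(C * σ))
        linarith
      have hrw : σ ^ ((1:ℝ) - k) = σ / σ ^ k := by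
        rw [Real.rpow_sub hσ0, Real.rpow_one]
      have hnum : D * (1 - Real.exp (-(C * σ))) ≤ D * C * σ := by
        nlinarith [hD.le]
      simp only [herr2def]
      rw [hrw]
      calc D * (1 - Real.exp (-(C * σ))) / σ ^ k
          ≤ (D * C * σ) / σ ^ k := div_le_div_of_nonneg_right hnum hσk.le
        _ = D * C * (σ / σ ^ k) := by ring
    · have hcont : ContinuousAt (fun σ : ℝ => σ ^ ((1:ℝ) - k)) 0 :=
        Real.continuousAt_rpow_const 0 _ (Or.inr h1k.le)
      have h2 : Tendsto (fun σ : ℝ => σ ^ ((1:ℝ) - k)) (𝓝[>] 0) (𝓝 0) := by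
        have := hcont.tendsto
        rw [Real.zero_rpow h1k.ne'] at this
        exact this.mono_left nhdsWithin_le_nhds
      simpa using h2.const_mul (D * C)
  have hub : ∀ᶠ σ in 𝓝[>] (0:ℝ), lam σ ≤ B + 1 := by
    filter_upwards [self_mem_nhdsWithin, herr2_0.eventually_le_const (zero_lt_one)]
      with σ hσ h2
    have := key2 σ hσ
    linarith
  have hcb : IsCoboundedUnder (· ≥ ·) (𝓝[>] (0:ℝ)) lam := by
    apply Filter.IsBoundedUnder.isCoboundedUnder_flip
    exact ⟨B + 1, by rwa [Filter.eventually_map]⟩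
  calc -S = liminf (fun σ => -S - err σ) (𝓝[>] (0:ℝ)) := hlim.liminf_eq.symm
    _ ≤ liminf lam (𝓝[>] (0:ℝ)) :=
        liminf_le_liminf hev hlim.isBoundedUnder_ge hcb
end

section
/- If (λ, φ) is a principal eigenpair of −L, then λ equals the generalized principal eigenvalue λ_p(−L) := sup{ μ ∈ ℝ : there exists ψ ∈ X^{++} such that L[ψ](t,x) + μ ψ(t,x) ≤ 0 for all (t,x) ∈ ℝ × cl(Ω) }. -/
open MeasureTheory Filter Topology

theorem eigenvalue_eq_generalized_principal_eigenvalue_sup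
    (N : ℕ) (hN : 1 ≤ N)
    (Ω : Set (EuclideanSpace ℝ (Fin N)))
    (hΩne : Ω.Nonempty) (hΩopen : IsOpen Ω) (hΩbdd : Bornology.IsBounded Ω)
    (hΩconn : IsConnected Ω)
    (J : EuclideanSpace ℝ (Fin N) → ℝ)
    (hJcont : Continuous J) (hJnonneg : ∀ x, 0 ≤ J x)
    (γ : ℝ) (hγ : 0 < γ)
    (hJsupp : Function.support J ⊆ Metric.ball (0 : EuclideanSpace ℝ (Fin N)) γ)
    (hJ0 : 0 < J 0) (hJint : ∫ x, J x = 1)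
    (T : ℝ) (hT : 0 < T)
    (a : ℝ → EuclideanSpace ℝ (Fin N) → ℝ)
    (hacont : Continuous fun p : ℝ × EuclideanSpace ℝ (Fin N) => a p.1 p.2)
    (haper : ∀ t x, a (t + T) x = a t x)
    (D σ k : ℝ) (hD : 0 < D) (hσ : 0 < σ) (hk : 0 ≤ k)
    (lam : ℝ) (φ : ℝ → EuclideanSpace ℝ (Fin N) → ℝ)
    (heig : isPEigenpair Ω J a T D σ k lam φ) :
    lam = sSup {μ : ℝ | ∃ ψ, memXpp Ω T ψ ∧
      ∀ t : ℝ, ∀ x ∈ closure Ω, nlOp Ω J a D σ k ψ t x + μ * ψ t x ≤ 0} := by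
  classical
  obtain ⟨⟨⟨hφc, hφd, hφper⟩, hφpos⟩, hφeq⟩ := heig
  have hclK : IsCompact (closure Ω) := hΩbdd.isCompact_closure
  -- The main point: any μ admissible in the sup is ≤ lam.
  have hub : ∀ μ : ℝ, (∃ ψ, memXpp Ω T ψ ∧ ∀ t : ℝ, ∀ x ∈ closure Ω,
      nlOp Ω J a D σ k ψ t x + μ * ψ t x ≤ 0) → μ ≤ lam := by
    rintro μ ⟨ψ, ⟨⟨hψc, hψd, hψper⟩, hψpos⟩, hψineq⟩
    set K : Set (ℝ × EuclideanSpace ℝ (Fin N)) := Set.Icc 0 T ×ˢ closure Ω with hK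
    have hKc : IsCompact K := isCompact_Icc.prod hclK
    have hKne : K.Nonempty :=
      ⟨(0, hΩne.choose), ⟨⟨le_refl 0, hT.le⟩, subset_closure hΩne.choose_spec⟩⟩
    have hsub : K ⊆ Set.univ ×ˢ closure Ω := fun p hp => ⟨trivial, hp.2⟩
    have hrc : ContinuousOn (fun p : ℝ × EuclideanSpace ℝ (Fin N) =>
        φ p.1 p.2 / ψ p.1 p.2) K :=
      (hφc.mono hsub).div (hψc.mono hsub) fun p hp => (hψpos p.1 p.2 hp.2).ne'
    obtain ⟨⟨t₀, x₀⟩, hp₀, hmax⟩ := hKc.exists_isMaxOn hKne hrc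
    have hx₀ : x₀ ∈ closure Ω := hp₀.2
    set θ : ℝ := φ t₀ x₀ / ψ t₀ x₀ with hθdef
    have hψ0 : 0 < ψ t₀ x₀ := hψpos _ _ hx₀
    have hφ0 : 0 < φ t₀ x₀ := hφpos _ _ hx₀
    have hθpos : 0 < θ := div_pos hφ0 hψ0
    have hθψ : θ * ψ t₀ x₀ = φ t₀ x₀ := div_mul_cancel₀ _ hψ0.ne'
    -- φ ≤ θ ψ on all of ℝ × closure Ω, by periodicity and maximality
    have hw : ∀ t : ℝ, ∀ x ∈ closure Ω, φ t x ≤ θ * ψ t x := by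
      intro t x hx
      have hper : Function.Periodic (fun s => φ s x / ψ s x) T := by
        intro s; simp only [hφper, hψper]
      obtain ⟨t', ht', heqr⟩ := hper.exists_mem_Ico₀ hT t
      have hmem : (t', x) ∈ K := ⟨⟨ht'.1, ht'.2.le⟩, hx⟩
      have hle : φ t' x / ψ t' x ≤ θ := hmax hmem
      have hle2 : φ t x / ψ t x ≤ θ := by rw [heqr]; exact hle
      have hψx : 0 < ψ t x := hψpos t x hx
      calc φ t x = φ t x / ψ t x * ψ t x := (div_mul_cancel₀ _ hψx.ne').symm
        _ ≤ θ * ψ t x := mul_le_mul_of_nonneg_right hle2 hψx.le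
    -- derivative of θψ - φ vanishes at the touching point
    have hdψ : Differentiable ℝ (fun s => ψ s x₀) := (hψd x₀ hx₀).differentiable one_ne_zero
    have hdφ : Differentiable ℝ (fun s => φ s x₀) := (hφd x₀ hx₀).differentiable one_ne_zero
    have hmin : IsLocalMin (fun s => θ * ψ s x₀ - φ s x₀) t₀ := by
      apply Filter.Eventually.of_forall
      intro s
      have h1 : φ s x₀ ≤ θ * ψ s x₀ := hw s x₀ hx₀
      simp only
      linarith [hθψ]
    have hder : deriv (fun s => θ * ψ s x₀ - φ s x₀) t₀ = 0 := hmin.deriv_eq_zero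
    have hderC : θ * deriv (fun s => ψ s x₀) t₀ - deriv (fun s => φ s x₀) t₀ = 0 := by
      rw [← hder, deriv_fun_sub ((hdψ t₀).const_mul θ) (hdφ t₀), deriv_const_mul θ (hdψ t₀)]
    -- integrals
    have hgc : Continuous fun y : EuclideanSpace ℝ (Fin N) => J (σ⁻¹ • (x₀ - y)) :=
      hJcont.comp (by fun_prop)
    have hψy : ContinuousOn (fun y => ψ t₀ y) (closure Ω) := by
      have := hψc.comp (f := fun y : EuclideanSpace ℝ (Fin N) => ((t₀ : ℝ), y))
        ((continuous_const.prodMk continuous_id).continuousOn) (fun y hy => ⟨trivial, hy⟩)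
      exact this
    have hφy : ContinuousOn (fun y => φ t₀ y) (closure Ω) := by
      have := hφc.comp (f := fun y : EuclideanSpace ℝ (Fin N) => ((t₀ : ℝ), y))
        ((continuous_const.prodMk continuous_id).continuousOn) (fun y hy => ⟨trivial, hy⟩)
      exact this
    have hIψint : IntegrableOn
        (fun y => J (σ⁻¹ • (x₀ - y)) * (ψ t₀ y - ψ t₀ x₀)) Ω volume :=
      ((hgc.continuousOn.mul (hψy.sub continuousOn_const)).integrableOn_compact
        hclK).mono_set subset_closure
    have hIφint : IntegrableOn
        (fun y => J (σ⁻¹ • (x₀ - y)) * (φ t₀ y - φ t₀ x₀)) Ω volume :=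
      ((hgc.continuousOn.mul (hφy.sub continuousOn_const)).integrableOn_compact
        hclK).mono_set subset_closure
    have hcomb : θ * (∫ y in Ω, J (σ⁻¹ • (x₀ - y)) * (ψ t₀ y - ψ t₀ x₀))
        - ∫ y in Ω, J (σ⁻¹ • (x₀ - y)) * (φ t₀ y - φ t₀ x₀)
        = ∫ y in Ω, J (σ⁻¹ • (x₀ - y))
            * ((θ * ψ t₀ y - φ t₀ y) - (θ * ψ t₀ x₀ - φ t₀ x₀)) := by
      rw [← MeasureTheory.integral_const_mul,
        ← MeasureTheory.integral_sub (hIψint.const_mul θ) hIφint]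
      congr 1
      funext y
      ring
    have hwnn : 0 ≤ ∫ y in Ω, J (σ⁻¹ • (x₀ - y))
        * ((θ * ψ t₀ y - φ t₀ y) - (θ * ψ t₀ x₀ - φ t₀ x₀)) := by
      apply MeasureTheory.setIntegral_nonneg hΩopen.measurableSet
      intro y hy
      have h1 : φ t₀ y ≤ θ * ψ t₀ y := hw t₀ y (subset_closure hy)
      have h2 : 0 ≤ J (σ⁻¹ • (x₀ - y)) := hJnonneg _
      have h3 : θ * ψ t₀ x₀ - φ t₀ x₀ = 0 := by linarith [hθψ]
      nlinarith
    -- assemble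
    have hc : 0 < D / σ ^ ((N : ℝ) + k) := div_pos hD (Real.rpow_pos_of_pos hσ _)
    have hB := hφeq t₀ x₀ hx₀
    have hA := hψineq t₀ x₀ hx₀
    rw [nlOp] at hB hA
    set Iψ : ℝ := ∫ y in Ω, J (σ⁻¹ • (x₀ - y)) * (ψ t₀ y - ψ t₀ x₀) with hIψdef
    set Iφ : ℝ := ∫ y in Ω, J (σ⁻¹ • (x₀ - y)) * (φ t₀ y - φ t₀ x₀) with hIφdef
    set c : ℝ := D / σ ^ ((N : ℝ) + k) with hcdef
    set dψ : ℝ := deriv (fun s => ψ s x₀) t₀ with hdψdef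
    set dφ : ℝ := deriv (fun s => φ s x₀) t₀ with hdφdef
    have hE : 0 ≤ c * (θ * Iψ - Iφ) := by
      rw [hcomb]
      exact mul_nonneg hc.le hwnn
    have hA2 : θ * (-dψ + c * Iψ + a t₀ x₀ * ψ t₀ x₀ + μ * ψ t₀ x₀) ≤ 0 := by
      have := mul_le_mul_of_nonneg_left hA hθpos.le
      simpa using this
    have hA3 : -(θ * dψ) + c * (θ * Iψ) + a t₀ x₀ * φ t₀ x₀ + μ * φ t₀ x₀ ≤ 0 := by
      have : θ * (-dψ + c * Iψ + a t₀ x₀ * ψ t₀ x₀ + μ * ψ t₀ x₀)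
          = -(θ * dψ) + c * (θ * Iψ) + a t₀ x₀ * (θ * ψ t₀ x₀)
            + μ * (θ * ψ t₀ x₀) := by ring
      rw [this, hθψ] at hA2
      exact hA2
    have hkey : (μ - lam) * φ t₀ x₀ ≤ 0 := by nlinarith [hA3, hB, hderC, hE]
    nlinarith [hkey, hφ0]
  -- lam itself is admissible
  have hmem : lam ∈ {μ : ℝ | ∃ ψ, memXpp Ω T ψ ∧
      ∀ t : ℝ, ∀ x ∈ closure Ω, nlOp Ω J a D σ k ψ t x + μ * ψ t x ≤ 0} :=
    ⟨φ, ⟨⟨hφc, hφd, hφper⟩, hφpos⟩, fun t x hx => le_of_eq (hφeq t x hx)⟩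
  symm
  exact le_antisymm (csSup_le ⟨lam, hmem⟩ fun μ hμ => hub μ hμ)
    (le_csSup ⟨lam, fun μ hμ => hub μ hμ⟩ hmem)
end

section
/- If (λ, φ) is a principal eigenpair of −L, then λ equals the generalized principal eigenvalue λ_p'(−L) := inf{ μ ∈ ℝ : there exists ψ ∈ X^{++} such that L[ψ](t,x) + μ ψ(t,x) ≥ 0 for all (t,x) ∈ ℝ × cl(Ω) }. -/
open MeasureTheory Filter Topology

theorem eigenvalue_eq_generalized_principal_eigenvalue_inf
    (N : ℕ) (hN : 1 ≤ N)
    (Ω : Set (EuclideanSpace ℝ (Fin N)))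
    (hΩne : Ω.Nonempty) (hΩopen : IsOpen Ω) (hΩbdd : Bornology.IsBounded Ω)
    (hΩconn : IsConnected Ω)
    (J : EuclideanSpace ℝ (Fin N) → ℝ)
    (hJcont : Continuous J) (hJnonneg : ∀ x, 0 ≤ J x)
    (γ : ℝ) (hγ : 0 < γ)
    (hJsupp : Function.support J ⊆ Metric.ball (0 : EuclideanSpace ℝ (Fin N)) γ)
    (hJ0 : 0 < J 0) (hJint : ∫ x, J x = 1)
    (T : ℝ) (hT : 0 < T)
    (a : ℝ → EuclideanSpace ℝ (Fin N) → ℝ)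
    (hacont : Continuous fun p : ℝ × EuclideanSpace ℝ (Fin N) => a p.1 p.2)
    (haper : ∀ t x, a (t + T) x = a t x)
    (D σ k : ℝ) (hD : 0 < D) (hσ : 0 < σ) (hk : 0 ≤ k)
    (lam : ℝ) (φ : ℝ → EuclideanSpace ℝ (Fin N) → ℝ)
    (heig : isPEigenpair Ω J a T D σ k lam φ) :
    lam = sInf {μ : ℝ | ∃ ψ, memXpp Ω T ψ ∧
      ∀ t : ℝ, ∀ x ∈ closure Ω, 0 ≤ nlOp Ω J a D σ k ψ t x + μ * ψ t x} := by
  obtain ⟨⟨⟨hφcont, hφC1, hφper⟩, hφpos⟩, hφeq⟩ := heig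
  have hmem : lam ∈ {μ : ℝ | ∃ ψ, memXpp Ω T ψ ∧
      ∀ t : ℝ, ∀ x ∈ closure Ω, 0 ≤ nlOp Ω J a D σ k ψ t x + μ * ψ t x} :=
    ⟨φ, ⟨⟨hφcont, hφC1, hφper⟩, hφpos⟩, fun t x hx => le_of_eq (hφeq t x hx).symm⟩
  have hlb : ∀ μ ∈ {μ : ℝ | ∃ ψ, memXpp Ω T ψ ∧
      ∀ t : ℝ, ∀ x ∈ closure Ω, 0 ≤ nlOp Ω J a D σ k ψ t x + μ * ψ t x}, lam ≤ μ := by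
    rintro μ ⟨ψ, ⟨⟨hψcont, hψC1, hψper⟩, hψpos⟩, hψineq⟩
    have hΩcl : IsCompact (closure Ω) := hΩbdd.isCompact_closure
    obtain ⟨x₁, hx₁⟩ := hΩne
    have hK : IsCompact (Set.Icc (0:ℝ) T ×ˢ closure Ω) := isCompact_Icc.prod hΩcl
    have hKne : (Set.Icc (0:ℝ) T ×ˢ closure Ω).Nonempty :=
      ⟨(0, x₁), ⟨⟨le_refl 0, hT.le⟩, subset_closure hx₁⟩⟩
    have hsub : (Set.Icc (0:ℝ) T ×ˢ closure Ω) ⊆ (Set.univ ×ˢ closure Ω) :=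
      fun p hp => ⟨trivial, hp.2⟩
    have hrcont : ContinuousOn
        (fun p : ℝ × EuclideanSpace ℝ (Fin N) => ψ p.1 p.2 / φ p.1 p.2)
        (Set.Icc (0:ℝ) T ×ˢ closure Ω) :=
      (hψcont.mono hsub).div (hφcont.mono hsub)
        (fun p hp => (hφpos p.1 p.2 hp.2).ne')
    obtain ⟨⟨t₀, x₀⟩, hp₀K, hmax⟩ := hK.exists_isMaxOn hKne hrcont
    have hx₀ : x₀ ∈ closure Ω := hp₀K.2
    have hP : 0 < φ t₀ x₀ := hφpos t₀ x₀ hx₀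
    set θ := ψ t₀ x₀ / φ t₀ x₀ with hθdef
    have hθ : 0 < θ := div_pos (hψpos t₀ x₀ hx₀) hP
    have hQθ : ψ t₀ x₀ = θ * φ t₀ x₀ := (div_mul_cancel₀ _ hP.ne').symm
    -- the comparison inequality on one period
    have hwIcc : ∀ t ∈ Set.Icc (0:ℝ) T, ∀ x ∈ closure Ω, ψ t x ≤ θ * φ t x := by
      intro t ht x hx
      have h1 : ψ t x / φ t x ≤ θ := hmax (Set.mk_mem_prod ht hx)
      have h2 : 0 < φ t x := hφpos t x hx
      calc ψ t x = (ψ t x / φ t x) * φ t x := (div_mul_cancel₀ _ h2.ne').symm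
        _ ≤ θ * φ t x := mul_le_mul_of_nonneg_right h1 h2.le
    -- extend to all times by periodicity
    have hw : ∀ t : ℝ, ∀ x ∈ closure Ω, ψ t x ≤ θ * φ t x := by
      intro t x hx
      have hpφ : Function.Periodic (fun s => φ s x) T := fun s => hφper s x
      have hpψ : Function.Periodic (fun s => ψ s x) T := fun s => hψper s x
      have h0 : 0 ≤ t - ⌊t / T⌋ * T := Int.sub_floor_div_mul_nonneg t hT
      have h1 : t - ⌊t / T⌋ * T < T := Int.sub_floor_div_mul_lt t hT
      have e1 : φ (t - ⌊t / T⌋ * T) x = φ t x := hpφ.sub_int_mul_eq _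
      have e2 : ψ (t - ⌊t / T⌋ * T) x = ψ t x := hpψ.sub_int_mul_eq _
      have := hwIcc _ ⟨h0, h1.le⟩ x hx
      rw [e1, e2] at this
      exact this
    -- derivative of θφ - ψ vanishes at the touching point
    have hφd : DifferentiableAt ℝ (fun s => φ s x₀) t₀ :=
      ((hφC1 x₀ hx₀).differentiable one_ne_zero).differentiableAt
    have hψd : DifferentiableAt ℝ (fun s => ψ s x₀) t₀ :=
      ((hψC1 x₀ hx₀).differentiable one_ne_zero).differentiableAt
    have hgmin : IsLocalMin (fun s => θ * φ s x₀ - ψ s x₀) t₀ := by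
      refine Filter.Eventually.of_forall fun s => ?_
      have h1 : ψ s x₀ ≤ θ * φ s x₀ := hw s x₀ hx₀
      simp only
      linarith [hQθ]
    have hder : HasDerivAt (fun s => θ * φ s x₀ - ψ s x₀)
        (θ * deriv (fun s => φ s x₀) t₀ - deriv (fun s => ψ s x₀) t₀) t₀ :=
      (hφd.hasDerivAt.const_mul θ).sub hψd.hasDerivAt
    have hd : θ * deriv (fun s => φ s x₀) t₀ - deriv (fun s => ψ s x₀) t₀ = 0 := by
      rw [← hder.deriv]; exact hgmin.deriv_eq_zero
    -- integrability of the kernel terms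
    have hfc : Continuous fun y : EuclideanSpace ℝ (Fin N) => J (σ⁻¹ • (x₀ - y)) :=
      hJcont.comp ((continuous_const.sub continuous_id).const_smul σ⁻¹)
    have hφt₀ : ContinuousOn (fun y => φ t₀ y) (closure Ω) :=
      hφcont.comp ((continuous_const.prodMk continuous_id).continuousOn)
        (fun y hy => ⟨trivial, hy⟩)
    have hψt₀ : ContinuousOn (fun y => ψ t₀ y) (closure Ω) :=
      hψcont.comp ((continuous_const.prodMk continuous_id).continuousOn)
        (fun y hy => ⟨trivial, hy⟩)
    have hgint : IntegrableOn
        (fun y => J (σ⁻¹ • (x₀ - y)) * (φ t₀ y - φ t₀ x₀)) Ω :=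
      ((hfc.continuousOn.mul (hφt₀.sub continuousOn_const)).integrableOn_compact
        hΩcl).mono_set subset_closure
    have hhint : IntegrableOn
        (fun y => J (σ⁻¹ • (x₀ - y)) * (ψ t₀ y - ψ t₀ x₀)) Ω :=
      ((hfc.continuousOn.mul (hψt₀.sub continuousOn_const)).integrableOn_compact
        hΩcl).mono_set subset_closure
    -- linear combination of the integrals
    have hIlin : θ * (∫ y in Ω, J (σ⁻¹ • (x₀ - y)) * (φ t₀ y - φ t₀ x₀))
        - (∫ y in Ω, J (σ⁻¹ • (x₀ - y)) * (ψ t₀ y - ψ t₀ x₀))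
        = ∫ y in Ω, J (σ⁻¹ • (x₀ - y)) * (θ * φ t₀ y - ψ t₀ y) := by
      have hpt : (fun y => J (σ⁻¹ • (x₀ - y)) * (θ * φ t₀ y - ψ t₀ y))
          = fun y => θ * (J (σ⁻¹ • (x₀ - y)) * (φ t₀ y - φ t₀ x₀))
            - J (σ⁻¹ • (x₀ - y)) * (ψ t₀ y - ψ t₀ x₀) := by
        funext y
        linear_combination (-(J (σ⁻¹ • (x₀ - y)))) * hQθ
      rw [hpt, integral_sub (hgint.const_mul θ) hhint, integral_const_mul]
    have hInn : 0 ≤ ∫ y in Ω, J (σ⁻¹ • (x₀ - y)) * (θ * φ t₀ y - ψ t₀ y) :=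
      setIntegral_nonneg hΩopen.measurableSet fun y hy =>
        mul_nonneg (hJnonneg _) (by linarith [hw t₀ y (subset_closure hy)])
    have hc : 0 < D / σ ^ ((N : ℝ) + k) := div_pos hD (Real.rpow_pos_of_pos hσ _)
    have hE1 := hφeq t₀ x₀ hx₀
    have hE2 := hψineq t₀ x₀ hx₀
    unfold nlOp at hE1 hE2
    have eA : a t₀ x₀ * ψ t₀ x₀ = a t₀ x₀ * (θ * φ t₀ x₀) := by rw [hQθ]
    have eμ : μ * ψ t₀ x₀ = μ * (θ * φ t₀ x₀) := by rw [hQθ]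
    have hkey : 0 ≤ (D / σ ^ ((N : ℝ) + k)) *
        (θ * (∫ y in Ω, J (σ⁻¹ • (x₀ - y)) * (φ t₀ y - φ t₀ x₀))
          - (∫ y in Ω, J (σ⁻¹ • (x₀ - y)) * (ψ t₀ y - ψ t₀ x₀))) := by
      rw [hIlin]; exact mul_nonneg hc.le hInn
    have hE1θ : θ * (-(deriv (fun s => φ s x₀) t₀)
        + (D / σ ^ ((N : ℝ) + k)) * (∫ y in Ω, J (σ⁻¹ • (x₀ - y)) * (φ t₀ y - φ t₀ x₀))
        + a t₀ x₀ * φ t₀ x₀ + lam * φ t₀ x₀) = 0 := by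
      rw [hE1, mul_zero]
    have hfinal : lam * (θ * φ t₀ x₀) ≤ μ * (θ * φ t₀ x₀) := by linarith [hE1θ, hE2, hd, hkey, eA, eμ]
    exact le_of_mul_le_mul_right (by linarith [hfinal]) (mul_pos hθ hP)
  exact le_antisymm (le_csInf ⟨lam, hmem⟩ hlb) (csInf_le ⟨lam, hlb⟩ hmem)
end

section
/- Let J be symmetric with respect to each component and let M[f](x) := −∫_Ω J(x−y)(f(y) − f(x)) dy. Then there exists a constant C > 0 such that for every f ∈ L²(Ω) with ∫_Ω f(x) dx = 0, one has ∫_Ω M[f](x) f(x) dx ≥ C ∫_Ω f(x)² dx. -/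
open MeasureTheory

lemma var_expand {α : Type*} [MeasurableSpace α] (μ : Measure α) [IsFiniteMeasure μ]
    (f : α → ℝ) (m : ℝ) (h1 : Integrable f μ) (h2 : Integrable (fun x => f x ^ 2) μ) :
    ∫ x, (f x - m)^2 ∂μ
      = (∫ x, f x ^ 2 ∂μ) - 2*m*(∫ x, f x ∂μ) + m^2 * (μ Set.univ).toReal := by
  have i1 : Integrable (fun x => f x ^ 2 - 2*m*f x) μ := h2.sub (h1.const_mul _)
  have h : (fun x => (f x - m)^2) = fun x => (f x ^ 2 - 2*m*f x) + m^2 := funext fun x => by ring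
  rw [h, integral_add i1 (integrable_const _), integral_sub h2 (h1.const_mul _),
    integral_const_mul, integral_const]
  simp [smul_eq_mul, mul_comm, measureReal_def]

lemma prod_var {α : Type*} [MeasurableSpace α] (μ : Measure α) [IsFiniteMeasure μ] [SFinite μ]
    (f : α → ℝ) (h1 : Integrable f μ) (h2 : Integrable (fun x => f x ^ 2) μ) :
    ∫ z : α × α, (f z.1 - f z.2)^2 ∂(μ.prod μ)
      = 2*(μ Set.univ).toReal*(∫ x, f x ^ 2 ∂μ) - 2*(∫ x, f x ∂μ)^2 := by
  have hfst : Integrable (fun z : α × α => f z.1 ^ 2) (μ.prod μ) := by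
    simpa using h2.mul_prod (integrable_const (1:ℝ))
  have hsnd : Integrable (fun z : α × α => f z.2 ^ 2) (μ.prod μ) := by
    simpa using (integrable_const (1:ℝ)).mul_prod h2
  have hcross : Integrable (fun z : α × α => f z.1 * f z.2) (μ.prod μ) := h1.mul_prod h1
  have i1 : Integrable (fun z : α × α => f z.1 ^ 2 + f z.2 ^ 2) (μ.prod μ) := hfst.add hsnd
  have i2 : Integrable (fun z : α × α => 2 * (f z.1 * f z.2)) (μ.prod μ) := hcross.const_mul _
  have h : (fun z : α × α => (f z.1 - f z.2)^2)
      = fun z : α × α => (f z.1 ^ 2 + f z.2 ^ 2) - 2*(f z.1 * f z.2) := funext fun z => by ring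
  rw [h, integral_sub i1 i2, integral_add hfst hsnd, integral_const_mul, integral_prod_mul]
  have e1 : ∫ z : α × α, f z.1 ^ 2 ∂(μ.prod μ) = (∫ x, f x ^ 2 ∂μ) * (μ Set.univ).toReal := by
    have := integral_prod_mul (μ := μ) (ν := μ) (fun x => f x ^ 2) (fun _ => (1:ℝ))
    simpa [smul_eq_mul, measureReal_def] using this
  have e2 : ∫ z : α × α, f z.2 ^ 2 ∂(μ.prod μ) = (∫ x, f x ^ 2 ∂μ) * (μ Set.univ).toReal := by
    have := integral_prod_mul (μ := μ) (ν := μ) (fun _ => (1:ℝ)) (fun x => f x ^ 2)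
    simpa [smul_eq_mul, mul_comm, measureReal_def] using this
  rw [e1, e2]; ring

lemma setIntegral_finset_biUnion_le {α ι : Type*} [MeasurableSpace α] (μ : Measure α)
    (t : Finset ι) (A : ι → Set α) (g : α → ℝ) (hg : ∀ x, 0 ≤ g x) :
    ∀ (_hA : ∀ i ∈ t, MeasurableSet (A i)) (_hint : IntegrableOn g (⋃ i ∈ t, A i) μ),
    ∫ x in (⋃ i ∈ t, A i), g x ∂μ ≤ ∑ i ∈ t, ∫ x in A i, g x ∂μ := by
  classical
  refine Finset.induction_on t ?_ ?_
  · intro _ _; simp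
  · intro a s ha ih hA hint
    rw [Finset.set_biUnion_insert] at hint ⊢
    rw [Finset.sum_insert ha]
    have hU : MeasurableSet (⋃ i ∈ s, A i) :=
      MeasurableSet.biUnion s.countable_toSet (fun i hi => hA i (Finset.mem_insert_of_mem hi))
    have hAa : MeasurableSet (A a) := hA a (Finset.mem_insert_self a s)
    have hIa : IntegrableOn g (A a) μ := hint.mono_set Set.subset_union_left
    have hIU : IntegrableOn g (⋃ i ∈ s, A i) μ := hint.mono_set Set.subset_union_right
    have hsplit : A a ∪ ⋃ i ∈ s, A i = A a ∪ ((⋃ i ∈ s, A i) \ A a) := by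
      rw [Set.union_diff_self]
    rw [hsplit]
    rw [setIntegral_union Set.disjoint_sdiff_right (hU.diff hAa) hIa (hIU.mono_set Set.diff_subset)]
    have h1 : ∫ x in (⋃ i ∈ s, A i) \ A a, g x ∂μ ≤ ∫ x in ⋃ i ∈ s, A i, g x ∂μ :=
      setIntegral_mono_set hIU (Filter.Eventually.of_forall (fun x => hg x))
        (Set.diff_subset).eventuallyLE
    have h2 := ih (fun i hi => hA i (Finset.mem_insert_of_mem hi)) hIU
    linarith

noncomputable section
set_option maxHeartbeats 2000000 in

theorem nonlocal_poincare_inequality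
    (N : ℕ) (hN : 1 ≤ N)
    (Ω : Set (EuclideanSpace ℝ (Fin N)))
    (hΩne : Ω.Nonempty) (hΩopen : IsOpen Ω) (hΩbdd : Bornology.IsBounded Ω)
    (hΩconn : IsConnected Ω)
    (J : EuclideanSpace ℝ (Fin N) → ℝ)
    (hJcont : Continuous J) (hJnonneg : ∀ x, 0 ≤ J x)
    (γ : ℝ) (hγ : 0 < γ)
    (hJsupp : Function.support J ⊆ Metric.ball (0 : EuclideanSpace ℝ (Fin N)) γ)
    (hJ0 : 0 < J 0) (hJint : ∫ x, J x = 1)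
    (hJsym : ∀ (i : Fin N) (x : EuclideanSpace ℝ (Fin N)),
      J (WithLp.toLp 2 (Function.update x i (-(x i)))) = J x) :
    ∃ C : ℝ, 0 < C ∧
      ∀ f : EuclideanSpace ℝ (Fin N) → ℝ, MemLp f 2 (volume.restrict Ω) →
        (∫ x in Ω, f x) = 0 →
        C * ∫ x in Ω, f x ^ 2 ≤ ∫ x in Ω, (-(∫ y in Ω, J (x - y) * (f y - f x))) * f x := by
  classical
  -- J is even
  have hJeven : ∀ w : EuclideanSpace ℝ (Fin N), J (-w) = J w := by
    have key : ∀ s : Finset (Fin N), ∀ x : EuclideanSpace ℝ (Fin N),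
        J (WithLp.toLp 2 (fun i => if i ∈ s then -(x i) else x i)) = J x := by
      intro s
      induction s using Finset.induction_on with
      | empty => intro x; exact congrArg J (by ext i; simp)
      | @insert a s ha ih =>
        intro x
        have h1 : (fun i => if i ∈ insert a s then -(x i) else x i)
            = Function.update (fun i => if i ∈ s then -(x i) else x i) a
              (-((fun i : Fin N => if i ∈ s then -(x i) else x i) a)) := by
          funext i
          by_cases hia : i = a
          · subst hia; simp [ha]
          · simp [Function.update_of_ne hia, hia, Finset.mem_insert]
        rw [h1]; exact (hJsym a (WithLp.toLp 2 _)).trans (ih x)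
    intro w
    have h2 := key Finset.univ w
    have h3 : WithLp.toLp 2 (fun i => if i ∈ Finset.univ then -(w i) else w i) = -w := by
      ext i; simp
    rwa [h3] at h2
  -- bound for J
  obtain ⟨Jmax, hJmax⟩ : ∃ Jmax : ℝ, ∀ z, J z ≤ Jmax := by
    obtain ⟨z₀, hz₀K, hz₀⟩ := (isCompact_closedBall (0 : EuclideanSpace ℝ (Fin N)) γ).exists_isMaxOn
      ⟨0, Metric.mem_closedBall_self hγ.le⟩ hJcont.continuousOn
    refine ⟨J z₀, fun z => ?_⟩
    by_cases hz : z ∈ Metric.closedBall (0 : EuclideanSpace ℝ (Fin N)) γ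
    · exact hz₀ hz
    · have hz0 : J z = 0 := by
        by_contra h
        exact hz (Metric.ball_subset_closedBall (hJsupp h))
      rw [hz0]
      exact (hJnonneg 0).trans (hz₀ (Metric.mem_closedBall_self hγ.le))
  -- small radius where J ≥ J 0 / 2
  obtain ⟨r, hr0, hrJ⟩ : ∃ r : ℝ, 0 < r ∧
      ∀ w : EuclideanSpace ℝ (Fin N), dist w 0 < r → J 0 / 2 ≤ J w := by
    have hopen : IsOpen {z : EuclideanSpace ℝ (Fin N) | J 0 / 2 < J z} :=
      isOpen_lt continuous_const hJcont
    obtain ⟨r, hr0, hball⟩ := Metric.isOpen_iff.mp hopen 0 (by simpa using half_lt_self hJ0)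
    exact ⟨r, hr0, fun w hw => (hball hw).le⟩
  -- finite cover of Ω by balls of radius r/2 centered in Ω
  have hcomp : IsCompact (closure Ω) := hΩbdd.isCompact_closure
  have hcov : closure Ω ⊆ ⋃ x ∈ Ω, Metric.ball x (r/2) := by
    intro z hz
    obtain ⟨y, hyΩ, hyd⟩ := Metric.mem_closure_iff.mp hz (r/2) (by positivity)
    exact Set.mem_biUnion hyΩ (by simpa [Metric.mem_ball, dist_comm] using hyd)
  obtain ⟨b, hbΩ, hbfin, hbcov⟩ := hcomp.elim_finite_subcover_image
    (fun x _ => Metric.isOpen_ball) hcov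
  set t : Finset (EuclideanSpace ℝ (Fin N)) := hbfin.toFinset with ht
  have htmem : ∀ c, c ∈ t ↔ c ∈ b := fun c => hbfin.mem_toFinset
  have htΩ : ∀ c ∈ t, c ∈ Ω := fun c hc => hbΩ ((htmem c).mp hc)
  -- the pieces
  set A : EuclideanSpace ℝ (Fin N) → Set (EuclideanSpace ℝ (Fin N)) :=
    fun c => Metric.ball c (r/2) ∩ Ω with hA
  have hAopen : ∀ c, IsOpen (A c) := fun c => Metric.isOpen_ball.inter hΩopen
  have hAmeas : ∀ c, MeasurableSet (A c) := fun c => (hAopen c).measurableSet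
  have hAsub : ∀ c, A c ⊆ Ω := fun c => Set.inter_subset_right
  have hAne : ∀ c ∈ t, c ∈ A c := fun c hc =>
    ⟨Metric.mem_ball_self (by positivity), htΩ c hc⟩
  have hAcover : Ω = ⋃ c ∈ t, A c := by
    apply Set.Subset.antisymm
    · intro x hx
      have hx2 := hbcov (subset_closure hx)
      obtain ⟨c, hc, hxc⟩ := Set.mem_iUnion₂.mp hx2
      exact Set.mem_biUnion ((htmem c).mpr hc) ⟨hxc, hx⟩
    · exact Set.iUnion₂_subset fun c _ => hAsub c
  have htne : t.Nonempty := by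
    obtain ⟨x, hx⟩ := hΩne
    rw [hAcover] at hx
    obtain ⟨c, hc, _⟩ := Set.mem_iUnion₂.mp hx
    exact ⟨c, hc⟩
  obtain ⟨c₀, hc₀⟩ := htne
  -- positivity of measures
  have hΩfin : volume Ω < ⊤ := hΩbdd.measure_lt_top
  have hApos : ∀ c ∈ t, 0 < (volume (A c)).toReal := by
    intro c hc
    have h1 : 0 < volume (A c) := (hAopen c).measure_pos volume ⟨c, hAne c hc⟩
    have h2 : volume (A c) < ⊤ := lt_of_le_of_lt (measure_mono (hAsub c)) hΩfin
    exact ENNReal.toReal_pos h1.ne' h2.ne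
  -- adjacency relation and connectivity of the cover graph
  set R : EuclideanSpace ℝ (Fin N) → EuclideanSpace ℝ (Fin N) → Prop :=
    fun c d => c ∈ t ∧ d ∈ t ∧ (A c ∩ A d).Nonempty with hR
  have hconn : ∀ c ∈ t, Relation.ReflTransGen R c₀ c := by
    intro c hc
    by_contra hcon
    set S : Set (EuclideanSpace ℝ (Fin N)) :=
      {d ∈ (t : Set (EuclideanSpace ℝ (Fin N))) | Relation.ReflTransGen R c₀ d} with hS
    set U : Set (EuclideanSpace ℝ (Fin N)) := ⋃ d ∈ S, A d with hU
    set V : Set (EuclideanSpace ℝ (Fin N)) :=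
      ⋃ d ∈ ((t : Set (EuclideanSpace ℝ (Fin N))) \ S), A d with hV
    have hUopen : IsOpen U := isOpen_biUnion fun d _ => hAopen d
    have hVopen : IsOpen V := isOpen_biUnion fun d _ => hAopen d
    have hsub : Ω ⊆ U ∪ V := by
      intro x hx
      rw [hAcover] at hx
      obtain ⟨d, hd, hxd⟩ := Set.mem_iUnion₂.mp hx
      by_cases hdS : d ∈ S
      · exact Or.inl (Set.mem_biUnion hdS hxd)
      · exact Or.inr (Set.mem_biUnion ⟨hd, hdS⟩ hxd)
    have hUne : (Ω ∩ U).Nonempty := by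
      refine ⟨c₀, hAsub c₀ (hAne c₀ hc₀), ?_⟩
      exact Set.mem_biUnion ⟨hc₀, Relation.ReflTransGen.refl⟩ (hAne c₀ hc₀)
    have hVne : (Ω ∩ V).Nonempty := by
      refine ⟨c, hAsub c (hAne c hc), ?_⟩
      exact Set.mem_biUnion ⟨hc, fun hcs => hcon hcs.2⟩ (hAne c hc)
    obtain ⟨z, _, hzU, hzV⟩ := hΩconn.isPreconnected U V hUopen hVopen hsub hUne hVne
    obtain ⟨d₁, hd₁S, hzd₁⟩ := Set.mem_iUnion₂.mp hzU
    obtain ⟨d₂, hd₂, hzd₂⟩ := Set.mem_iUnion₂.mp hzV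
    have hR12 : R d₁ d₂ := ⟨hd₁S.1, hd₂.1, ⟨z, hzd₁, hzd₂⟩⟩
    exact hd₂.2 ⟨hd₂.1, hd₁S.2.tail hR12⟩
  -- choose paths
  have hpath : ∀ c : EuclideanSpace ℝ (Fin N), ∃ l : List (EuclideanSpace ℝ (Fin N)), c ∈ t →
      (List.Chain R c₀ l ∧ (c₀ :: l).getLast (List.cons_ne_nil _ _) = c) := by
    intro c
    by_cases hc : c ∈ t
    · obtain ⟨l, hl1, hl2⟩ := List.exists_isChain_cons_of_relationReflTransGen (hconn c hc)
      exact ⟨l, fun _ => ⟨hl1, hl2⟩⟩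
    · exact ⟨[], fun h => absurd h hc⟩
  choose L hL using hpath
  set n : EuclideanSpace ℝ (Fin N) → ℕ := fun c => (L c).length with hn
  set a : EuclideanSpace ℝ (Fin N) → ℝ := fun c => (volume (A c)).toReal with ha
  set w : EuclideanSpace ℝ (Fin N) → EuclideanSpace ℝ (Fin N) → ℝ :=
    fun c d => (volume (A c ∩ A d)).toReal with hw
  set e : ℝ := ∑ c ∈ t, ∑ d ∈ t,
    (if (A c ∩ A d).Nonempty then (2 / w c d) * (1/(2 * a c) + 1/(2 * a d)) else 0) with he
  have hterm0 : ∀ c d : EuclideanSpace ℝ (Fin N),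
      0 ≤ (if (A c ∩ A d).Nonempty then (2 / w c d) * (1/(2 * a c) + 1/(2 * a d)) else 0) := by
    intro c d
    by_cases h : (A c ∩ A d).Nonempty
    · rw [if_pos h]
      have h1 : 0 ≤ w c d := ENNReal.toReal_nonneg
      have h2 : 0 ≤ a c := ENNReal.toReal_nonneg
      have h3 : 0 ≤ a d := ENNReal.toReal_nonneg
      positivity
    · rw [if_neg h]
  have he0 : 0 ≤ e := Finset.sum_nonneg fun c _ => Finset.sum_nonneg fun d _ => hterm0 c d
  have hedge_le : ∀ c ∈ t, ∀ d ∈ t, (A c ∩ A d).Nonempty →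
      (2 / w c d) * (1/(2 * a c) + 1/(2 * a d)) ≤ e := by
    intro c hc d hd hcd
    have h1 : (if (A c ∩ A d).Nonempty then (2 / w c d) * (1/(2 * a c) + 1/(2 * a d)) else 0)
        ≤ ∑ d' ∈ t, (if (A c ∩ A d').Nonempty then (2 / w c d') * (1/(2 * a c) + 1/(2 * a d')) else 0) :=
      Finset.single_le_sum (fun d' _ => hterm0 c d') hd
    have h2 : ∑ d' ∈ t, (if (A c ∩ A d').Nonempty then (2 / w c d') * (1/(2 * a c) + 1/(2 * a d')) else 0) ≤ e :=
      Finset.single_le_sum (f := fun c' => ∑ d' ∈ t,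
        (if (A c' ∩ A d').Nonempty then (2 / w c' d') * (1/(2 * a c') + 1/(2 * a d')) else 0))
        (fun c' _ => Finset.sum_nonneg fun d' _ => hterm0 c' d') hc
    rw [if_pos hcd] at h1
    linarith
  set K : ℝ := ∑ c ∈ t, (1 / a c + 2 * (n c : ℝ)^2 * e * a c) with hK
  have hK0 : 0 < K := by
    refine Finset.sum_pos (fun c hc => ?_) ⟨c₀, hc₀⟩
    have h1 : 0 < a c := hApos c hc
    have h2 : 0 ≤ 2 * (n c : ℝ)^2 * e * a c :=
      mul_nonneg (mul_nonneg (by positivity) he0) h1.le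
    have h3 : 0 < 1 / a c := one_div_pos.mpr h1
    linarith
  refine ⟨J 0 / (4 * K), div_pos hJ0 (by linarith), ?_⟩
  intro f hf hfmean
  haveI hfinΩ : IsFiniteMeasure (volume.restrict Ω) :=
    ⟨by rwa [Measure.restrict_apply_univ]⟩
  have hf1 : Integrable f (volume.restrict Ω) := hf.integrable (by norm_num)
  have hf2 : Integrable (fun x => f x ^ 2) (volume.restrict Ω) := by
    have h := memLp_one_iff_integrable.mp (hf.smul hf
      (hpqr := ⟨by rw [ENNReal.inv_two_add_inv_two, inv_one]⟩))
    exact h.congr (Filter.Eventually.of_forall (fun x => by simp [smul_eq_mul, sq]))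
  set m : EuclideanSpace ℝ (Fin N) → ℝ := fun c => (∫ x in A c, f x) / a c with hm
  set V : EuclideanSpace ℝ (Fin N) → ℝ := fun c => ∫ x in A c, (f x - m c)^2 with hV
  set q : EuclideanSpace ℝ (Fin N) × EuclideanSpace ℝ (Fin N) → ℝ :=
    Set.indicator {z : EuclideanSpace ℝ (Fin N) × EuclideanSpace ℝ (Fin N) | dist z.1 z.2 < r}
      (fun z => (f z.1 - f z.2)^2) with hq
  set Q : ℝ := ∫ z, q z ∂((volume.restrict Ω).prod (volume.restrict Ω)) with hQ
  have hq0 : ∀ z, 0 ≤ q z := fun z => Set.indicator_nonneg (fun z _ => sq_nonneg _) z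
  have hQ0 : 0 ≤ Q := integral_nonneg hq0
  -- integrability on the product
  have hIcross : Integrable (fun z : EuclideanSpace ℝ (Fin N) × EuclideanSpace ℝ (Fin N) =>
      f z.1 * f z.2) ((volume.restrict Ω).prod (volume.restrict Ω)) := hf1.mul_prod hf1
  have hIfst : Integrable (fun z : EuclideanSpace ℝ (Fin N) × EuclideanSpace ℝ (Fin N) =>
      f z.1 ^ 2) ((volume.restrict Ω).prod (volume.restrict Ω)) := by
    simpa using hf2.mul_prod (integrable_const (1:ℝ))
  have hIsnd : Integrable (fun z : EuclideanSpace ℝ (Fin N) × EuclideanSpace ℝ (Fin N) =>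
      f z.2 ^ 2) ((volume.restrict Ω).prod (volume.restrict Ω)) := by
    simpa using (integrable_const (1:ℝ)).mul_prod hf2
  have hIsq : Integrable (fun z : EuclideanSpace ℝ (Fin N) × EuclideanSpace ℝ (Fin N) =>
      (f z.1 - f z.2)^2) ((volume.restrict Ω).prod (volume.restrict Ω)) := by
    have h : (fun z : EuclideanSpace ℝ (Fin N) × EuclideanSpace ℝ (Fin N) => (f z.1 - f z.2)^2)
        = fun z => (f z.1^2 + f z.2^2) - 2*(f z.1 * f z.2) := funext fun z => by ring
    rw [h]; exact (hIfst.add hIsnd).sub (hIcross.const_mul _)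
  have hJmeas : AEStronglyMeasurable (fun z : EuclideanSpace ℝ (Fin N) × EuclideanSpace ℝ (Fin N) =>
      J (z.1 - z.2)) ((volume.restrict Ω).prod (volume.restrict Ω)) :=
    (hJcont.comp (continuous_fst.sub continuous_snd)).aestronglyMeasurable
  have hJbdd : ∃ Cb, ∀ z : EuclideanSpace ℝ (Fin N) × EuclideanSpace ℝ (Fin N),
      ‖J (z.1 - z.2)‖ ≤ Cb :=
    ⟨Jmax, fun z => by rw [Real.norm_of_nonneg (hJnonneg _)]; exact hJmax _⟩
  have hIJsq : Integrable (fun z : EuclideanSpace ℝ (Fin N) × EuclideanSpace ℝ (Fin N) =>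
      J (z.1 - z.2) * (f z.2 - f z.1)^2) ((volume.restrict Ω).prod (volume.restrict Ω)) := by
    refine Integrable.bdd_mul ?_ hJmeas (Filter.Eventually.of_forall hJbdd.choose_spec)
    have h : (fun z : EuclideanSpace ℝ (Fin N) × EuclideanSpace ℝ (Fin N) => (f z.2 - f z.1)^2)
        = fun z => (f z.1 - f z.2)^2 := funext fun z => by ring
    rw [h]; exact hIsq
  have hSmeas : MeasurableSet {z : EuclideanSpace ℝ (Fin N) × EuclideanSpace ℝ (Fin N) |
      dist z.1 z.2 < r} :=
    (isOpen_lt (continuous_fst.dist continuous_snd) continuous_const).measurableSet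
  have hqint : Integrable q ((volume.restrict Ω).prod (volume.restrict Ω)) := by
    refine hIsq.mono' (hIsq.aestronglyMeasurable.indicator hSmeas) ?_
    refine Filter.Eventually.of_forall (fun z => ?_)
    rw [Real.norm_of_nonneg (hq0 z)]
    by_cases hz : z ∈ {z : EuclideanSpace ℝ (Fin N) × EuclideanSpace ℝ (Fin N) | dist z.1 z.2 < r}
    · rw [hq, Set.indicator_of_mem hz]
    · rw [hq, Set.indicator_of_notMem hz]; exact sq_nonneg _
  -- step 1: rewrite the right-hand side as a symmetric double integral
  have hbase : Integrable (fun z : EuclideanSpace ℝ (Fin N) × EuclideanSpace ℝ (Fin N) =>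
      (f z.2 - f z.1) * f z.1) ((volume.restrict Ω).prod (volume.restrict Ω)) := by
    have h : (fun z : EuclideanSpace ℝ (Fin N) × EuclideanSpace ℝ (Fin N) =>
        (f z.2 - f z.1) * f z.1) = fun z => f z.1 * f z.2 - f z.1^2 := funext fun z => by ring
    rw [h]; exact hIcross.sub hIfst
  have hbase2 : Integrable (fun z : EuclideanSpace ℝ (Fin N) × EuclideanSpace ℝ (Fin N) =>
      (f z.1 - f z.2) * f z.2) ((volume.restrict Ω).prod (volume.restrict Ω)) := by
    have h : (fun z : EuclideanSpace ℝ (Fin N) × EuclideanSpace ℝ (Fin N) =>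
        (f z.1 - f z.2) * f z.2) = fun z => f z.1 * f z.2 - f z.2^2 := funext fun z => by ring
    rw [h]; exact hIcross.sub hIsnd
  have hGint : Integrable (fun z : EuclideanSpace ℝ (Fin N) × EuclideanSpace ℝ (Fin N) =>
      J (z.1 - z.2) * ((f z.2 - f z.1) * f z.1)) ((volume.restrict Ω).prod (volume.restrict Ω)) :=
    Integrable.bdd_mul hbase hJmeas (Filter.Eventually.of_forall hJbdd.choose_spec)
  have hGint2 : Integrable (fun z : EuclideanSpace ℝ (Fin N) × EuclideanSpace ℝ (Fin N) =>
      J (z.1 - z.2) * ((f z.1 - f z.2) * f z.2)) ((volume.restrict Ω).prod (volume.restrict Ω)) :=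
    Integrable.bdd_mul hbase2 hJmeas (Filter.Eventually.of_forall hJbdd.choose_spec)
  have hJflip : ∀ z : EuclideanSpace ℝ (Fin N) × EuclideanSpace ℝ (Fin N),
      J (z.2 - z.1) = J (z.1 - z.2) := by
    intro z
    rw [← neg_sub z.1 z.2, hJeven]
  have hRHS : ∫ x in Ω, (-(∫ y in Ω, J (x - y) * (f y - f x))) * f x
      = (1/2) * ∫ z, J (z.1 - z.2) * (f z.2 - f z.1)^2
          ∂((volume.restrict Ω).prod (volume.restrict Ω)) := by
    have step1 : ∀ x, (-(∫ y in Ω, J (x - y) * (f y - f x))) * f x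
        = ∫ y in Ω, -(J (x - y) * ((f y - f x) * f x)) := by
      intro x
      calc (-(∫ y in Ω, J (x - y) * (f y - f x))) * f x
          = -((∫ y in Ω, J (x - y) * (f y - f x)) * f x) := by ring
        _ = -(∫ y in Ω, J (x - y) * (f y - f x) * f x) := by rw [integral_mul_const]
        _ = -(∫ y in Ω, J (x - y) * ((f y - f x) * f x)) := by simp only [mul_assoc]
        _ = ∫ y in Ω, -(J (x - y) * ((f y - f x) * f x)) := (integral_neg _).symm
    have step2 : ∫ x in Ω, (-(∫ y in Ω, J (x - y) * (f y - f x))) * f x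
        = ∫ z, -(J (z.1 - z.2) * ((f z.2 - f z.1) * f z.1))
            ∂((volume.restrict Ω).prod (volume.restrict Ω)) := by
      simp only [step1]
      exact integral_integral (f := fun x y => -(J (x - y) * ((f y - f x) * f x))) hGint.neg
    have hswap := integral_prod_swap (μ := volume.restrict Ω) (ν := volume.restrict Ω)
      (fun z : EuclideanSpace ℝ (Fin N) × EuclideanSpace ℝ (Fin N) =>
        -(J (z.1 - z.2) * ((f z.2 - f z.1) * f z.1)))
    have hswap2 : ∫ z, -(J (z.1 - z.2) * ((f z.1 - f z.2) * f z.2))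
          ∂((volume.restrict Ω).prod (volume.restrict Ω))
        = ∫ z, -(J (z.1 - z.2) * ((f z.2 - f z.1) * f z.1))
            ∂((volume.restrict Ω).prod (volume.restrict Ω)) := by
      rw [← hswap]
      apply integral_congr_ae
      refine Filter.Eventually.of_forall (fun z => ?_)
      simp only [Prod.fst_swap, Prod.snd_swap, Prod.snd, Prod.fst]
      rw [hJflip z]
    have hadd : ∫ z, (-(J (z.1 - z.2) * ((f z.2 - f z.1) * f z.1))
          + -(J (z.1 - z.2) * ((f z.1 - f z.2) * f z.2)))
          ∂((volume.restrict Ω).prod (volume.restrict Ω))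
        = ∫ z, J (z.1 - z.2) * (f z.2 - f z.1)^2
            ∂((volume.restrict Ω).prod (volume.restrict Ω)) := by
      apply integral_congr_ae
      refine Filter.Eventually.of_forall (fun z => ?_)
      ring
    have hGn : Integrable (fun z : EuclideanSpace ℝ (Fin N) × EuclideanSpace ℝ (Fin N) =>
        -(J (z.1 - z.2) * ((f z.2 - f z.1) * f z.1)))
        ((volume.restrict Ω).prod (volume.restrict Ω)) := hGint.neg
    have hG2n : Integrable (fun z : EuclideanSpace ℝ (Fin N) × EuclideanSpace ℝ (Fin N) =>
        -(J (z.1 - z.2) * ((f z.1 - f z.2) * f z.2)))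
        ((volume.restrict Ω).prod (volume.restrict Ω)) := hGint2.neg
    rw [integral_add hGn hG2n] at hadd
    rw [step2]
    linarith [hswap2, hadd]
  -- step 2: lower bound by the near-diagonal quadratic form
  have hlow : (J 0 / 2) * Q ≤ ∫ z, J (z.1 - z.2) * (f z.2 - f z.1)^2
      ∂((volume.restrict Ω).prod (volume.restrict Ω)) := by
    have hconst : ∫ z, (J 0 / 2) * q z ∂((volume.restrict Ω).prod (volume.restrict Ω))
        = (J 0/2) * Q := integral_const_mul _ _
    rw [← hconst]
    refine integral_mono (hqint.const_mul _) hIJsq (fun z => ?_)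
    by_cases hz : z ∈ {z : EuclideanSpace ℝ (Fin N) × EuclideanSpace ℝ (Fin N) | dist z.1 z.2 < r}
    · rw [hq, Set.indicator_of_mem hz]
      have h1 : J 0 / 2 ≤ J (z.1 - z.2) := hrJ _ (by
        rw [dist_zero_right, ← dist_eq_norm]; exact hz)
      have h2 : (f z.1 - f z.2)^2 = (f z.2 - f z.1)^2 := by ring
      rw [h2]
      exact mul_le_mul_of_nonneg_right h1 (sq_nonneg _)
    · rw [hq, Set.indicator_of_notMem hz, mul_zero]
      exact mul_nonneg (hJnonneg _) (sq_nonneg _)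
  -- integrability of shifted squares on subsets
  have hIres : ∀ (k : ℝ) (s : Set (EuclideanSpace ℝ (Fin N))), s ⊆ Ω →
      IntegrableOn (fun x => (f x - k)^2) s volume := by
    intro k s hs
    have h : (fun x => (f x - k)^2) = fun x => (f x^2 - 2*k*f x) + k^2 := funext fun x => by ring
    rw [h]
    have h1 : IntegrableOn f s volume := MeasureTheory.IntegrableOn.mono_set hf1 hs
    have h2 : IntegrableOn (fun x => f x^2) s volume := MeasureTheory.IntegrableOn.mono_set hf2 hs
    have h3 : IntegrableOn (fun x => f x^2 - 2*k*f x) s volume := h2.sub (h1.const_mul _)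
    exact h3.add ((integrableOn_const_iff (C := k^2)).mpr (Or.inr (lt_of_le_of_lt (measure_mono hs) hΩfin)))
  have hV0 : ∀ c, 0 ≤ V c := fun c => integral_nonneg (fun x => sq_nonneg _)
  -- step 3 : local variance controlled by Q
  have hVQ : ∀ c ∈ t, 2 * a c * V c ≤ Q := by
    intro c hc
    have hfin : volume (A c) < ⊤ := lt_of_le_of_lt (measure_mono (hAsub c)) hΩfin
    haveI : IsFiniteMeasure (volume.restrict (A c)) :=
      ⟨by rw [Measure.restrict_apply_univ]; exact hfin⟩
    have hfc1 : Integrable f (volume.restrict (A c)) :=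
      MeasureTheory.IntegrableOn.mono_set hf1 (hAsub c)
    have hfc2 : Integrable (fun x => f x^2) (volume.restrict (A c)) :=
      MeasureTheory.IntegrableOn.mono_set hf2 (hAsub c)
    have hprod := prod_var (volume.restrict (A c)) f hfc1 hfc2
    rw [Measure.restrict_apply_univ] at hprod
    have hVc2 : V c = (∫ x, f x^2 ∂(volume.restrict (A c)))
        - 2*(m c)*(∫ x, f x ∂(volume.restrict (A c))) + (m c)^2 * a c := by
      have h := var_expand (volume.restrict (A c)) f (m c) hfc1 hfc2
      rw [Measure.restrict_apply_univ] at h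
      exact h
    have hmc : m c * a c = ∫ x, f x ∂(volume.restrict (A c)) := by
      rw [hm]
      exact div_mul_cancel₀ _ (hApos c hc).ne'
    have key : 2 * a c * V c
        = 2*(a c)*(∫ x, f x^2 ∂(volume.restrict (A c)))
          - 2*(∫ x, f x ∂(volume.restrict (A c)))^2 := by
      linear_combination (2 * a c) * hVc2
        + (2 * m c * a c - 2 * (∫ x, f x ∂(volume.restrict (A c)))) * hmc
    have hrr : volume.restrict (A c) = (volume.restrict Ω).restrict (A c) := by
      rw [Measure.restrict_restrict (hAmeas c), Set.inter_eq_self_of_subset_left (hAsub c)]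
    have hpr : (volume.restrict (A c)).prod (volume.restrict (A c))
        = ((volume.restrict Ω).prod (volume.restrict Ω)).restrict ((A c) ×ˢ (A c)) := by
      rw [hrr, Measure.prod_restrict]
    have hqeq : ∫ z, (f z.1 - f z.2)^2 ∂((volume.restrict (A c)).prod (volume.restrict (A c)))
        = ∫ z in (A c) ×ˢ (A c), q z ∂((volume.restrict Ω).prod (volume.restrict Ω)) := by
      rw [hpr]
      refine setIntegral_congr_fun ((hAmeas c).prod (hAmeas c)) (fun z hz => ?_)
      have hd1 : dist z.1 c < r/2 := hz.1.1
      have hd2 : dist c z.2 < r/2 := by rw [dist_comm]; exact hz.2.1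
      have hd : dist z.1 z.2 < r :=
        lt_of_le_of_lt (dist_triangle z.1 c z.2) (by linarith)
      exact (Set.indicator_of_mem
        (show z ∈ {p : EuclideanSpace ℝ (Fin N) × EuclideanSpace ℝ (Fin N) | dist p.1 p.2 < r}
          from hd) (fun p => (f p.1 - f p.2)^2)).symm
    have hle : ∫ z in (A c) ×ˢ (A c), q z ∂((volume.restrict Ω).prod (volume.restrict Ω)) ≤ Q :=
      setIntegral_le_integral hqint (Filter.Eventually.of_forall hq0)
    rw [key, ← hprod, hqeq]
    exact hle
  -- step 4 : adjacent averages are close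
  have hedge : ∀ c d, R c d → (m c - m d)^2 ≤ e * Q := by
    rintro c d ⟨hct, hdt, hWne⟩
    have hWopen : IsOpen (A c ∩ A d) := (hAopen c).inter (hAopen d)
    have hWsub : A c ∩ A d ⊆ Ω := Set.Subset.trans Set.inter_subset_left (hAsub c)
    have hWpos : 0 < w c d := by
      have h1 : 0 < volume (A c ∩ A d) := hWopen.measure_pos volume hWne
      have h2 : volume (A c ∩ A d) < ⊤ := lt_of_le_of_lt (measure_mono hWsub) hΩfin
      exact ENNReal.toReal_pos h1.ne' h2.ne
    haveI : IsFiniteMeasure (volume.restrict (A c ∩ A d)) :=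
      ⟨by rw [Measure.restrict_apply_univ]; exact lt_of_le_of_lt (measure_mono hWsub) hΩfin⟩
    have hint1 : IntegrableOn (fun x => (f x - m c)^2) (A c) volume := hIres (m c) _ (hAsub c)
    have hint2 : IntegrableOn (fun x => (f x - m d)^2) (A d) volume := hIres (m d) _ (hAsub d)
    have hint1' : IntegrableOn (fun x => (f x - m c)^2) (A c ∩ A d) volume :=
      hint1.mono_set Set.inter_subset_left
    have hint2' : IntegrableOn (fun x => (f x - m d)^2) (A c ∩ A d) volume :=
      hint2.mono_set Set.inter_subset_right
    have hintsum : Integrable (fun x => 2*(f x - m c)^2 + 2*(f x - m d)^2)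
        (volume.restrict (A c ∩ A d)) := (hint1'.const_mul 2).add (hint2'.const_mul 2)
    have hconst : ∫ x in A c ∩ A d, ((m c - m d)^2 : ℝ) ∂volume = (m c - m d)^2 * w c d := by
      rw [setIntegral_const, smul_eq_mul, mul_comm, measureReal_def]
    have hmono : ∫ x in A c ∩ A d, ((m c - m d)^2 : ℝ) ∂volume
        ≤ ∫ x in A c ∩ A d, (2*(f x - m c)^2 + 2*(f x - m d)^2) ∂volume := by
      refine integral_mono (integrable_const _) hintsum (fun x => ?_)
      nlinarith [sq_nonneg (2*f x - m c - m d)]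
    have hsplit : ∫ x in A c ∩ A d, (2*(f x - m c)^2 + 2*(f x - m d)^2) ∂volume
        = 2 * (∫ x in A c ∩ A d, (f x - m c)^2 ∂volume)
          + 2 * (∫ x in A c ∩ A d, (f x - m d)^2 ∂volume) := by
      rw [integral_add (hint1'.const_mul 2) (hint2'.const_mul 2), integral_const_mul,
        integral_const_mul]
    have hsub1 : ∫ x in A c ∩ A d, (f x - m c)^2 ∂volume ≤ V c :=
      setIntegral_mono_set hint1 (Filter.Eventually.of_forall (fun x => sq_nonneg _))
        (Set.inter_subset_left).eventuallyLE
    have hsub2 : ∫ x in A c ∩ A d, (f x - m d)^2 ∂volume ≤ V d :=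
      setIntegral_mono_set hint2 (Filter.Eventually.of_forall (fun x => sq_nonneg _))
        (Set.inter_subset_right).eventuallyLE
    have hw' : (m c - m d)^2 * w c d ≤ 2 * V c + 2 * V d := by
      rw [← hconst]
      refine le_trans hmono ?_
      rw [hsplit]
      linarith
    have hac := hApos c hct
    have had := hApos d hdt
    have h7 : 2 * V c ≤ Q / a c := by
      rw [le_div_iff₀ hac]
      calc 2 * V c * a c = 2 * a c * V c := by ring
        _ ≤ Q := hVQ c hct
    have h8 : 2 * V d ≤ Q / a d := by
      rw [le_div_iff₀ had]
      calc 2 * V d * a d = 2 * a d * V d := by ring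
        _ ≤ Q := hVQ d hdt
    have h5 : (m c - m d)^2 ≤ (2 * V c + 2 * V d) / w c d := by
      rw [le_div_iff₀ hWpos]; exact hw'
    have h6 : (2 * V c + 2 * V d) / w c d ≤ ((2 / w c d) * (1/(2*a c) + 1/(2*a d))) * Q := by
      rw [div_le_iff₀ hWpos]
      have heq : ((2 / w c d) * (1/(2*a c) + 1/(2*a d))) * Q * w c d = Q/a c + Q/a d := by
        field_simp
      rw [heq]
      linarith
    exact le_trans h5 (h6.trans (mul_le_mul_of_nonneg_right (hedge_le c hct d hdt hWne) hQ0))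
  -- step 5 : along paths
  have heQ0 : 0 ≤ e * Q := mul_nonneg he0 hQ0
  have hstep : ∀ x y, R x y → |m x - m y| ≤ Real.sqrt (e * Q) := by
    intro x y hxy
    rw [← Real.sqrt_sq_eq_abs]
    exact Real.sqrt_le_sqrt (hedge x y hxy)
  have hlist : ∀ (l : List (EuclideanSpace ℝ (Fin N))) (x : EuclideanSpace ℝ (Fin N)),
      List.Chain R x l → |m x - m ((x :: l).getLast (List.cons_ne_nil _ _))|
        ≤ (l.length : ℝ) * Real.sqrt (e * Q) := by
    intro l
    induction l with
    | nil => intro x _; simp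
    | cons bb l' ih =>
      intro x hchain
      change List.IsChain R (x :: bb :: l') at hchain; rw [List.chain_cons] at hchain
      have h1 := hstep x bb hchain.1
      have h2 := ih bb hchain.2
      rw [List.getLast_cons (List.cons_ne_nil _ _)]
      calc |m x - m ((bb :: l').getLast (List.cons_ne_nil _ _))|
          ≤ |m x - m bb| + |m bb - m ((bb :: l').getLast (List.cons_ne_nil _ _))| :=
            abs_sub_le _ _ _
        _ ≤ Real.sqrt (e*Q) + (l'.length : ℝ) * Real.sqrt (e*Q) := add_le_add h1 h2
        _ = ((bb :: l').length : ℝ) * Real.sqrt (e*Q) := by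
            rw [List.length_cons]; push_cast; ring
  have hpathb : ∀ c ∈ t, (m c - m c₀)^2 ≤ (n c:ℝ)^2 * (e * Q) := by
    intro c hc
    obtain ⟨hch, hlast⟩ := hL c hc
    have h1 := hlist (L c) c₀ hch
    rw [hlast] at h1
    have h2 : |m c - m c₀| ≤ (n c : ℝ) * Real.sqrt (e * Q) := by
      rw [abs_sub_comm]; exact h1
    have h3 : (m c - m c₀)^2 = |m c - m c₀|^2 := (sq_abs _).symm
    rw [h3]
    calc |m c - m c₀|^2 ≤ ((n c:ℝ) * Real.sqrt (e*Q))^2 := by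
          exact pow_le_pow_left₀ (abs_nonneg _) h2 2
      _ = (n c:ℝ)^2 * (e*Q) := by rw [mul_pow, Real.sq_sqrt heQ0]
  -- step 6 : assembling
  have hmean2 : ∫ x in Ω, f x ^ 2 ≤ ∫ x in Ω, (f x - m c₀)^2 := by
    have h := var_expand (volume.restrict Ω) f (m c₀) hf1 hf2
    rw [Measure.restrict_apply_univ] at h
    rw [h, hfmean]
    have h1 := sq_nonneg (m c₀)
    have h2 : (0:ℝ) ≤ (volume Ω).toReal := ENNReal.toReal_nonneg
    nlinarith
  have hcover_int : ∫ x in Ω, (f x - m c₀)^2 ≤ ∑ c ∈ t, ∫ x in A c, (f x - m c₀)^2 := by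
    have hΩint : IntegrableOn (fun x => (f x - m c₀)^2) (⋃ c ∈ t, A c) volume :=
      hAcover ▸ hIres (m c₀) Ω subset_rfl
    have h := setIntegral_finset_biUnion_le volume t A (fun x => (f x - m c₀)^2)
      (fun x => sq_nonneg _) (fun c _ => hAmeas c) hΩint
    calc ∫ x in Ω, (f x - m c₀)^2 = ∫ x in (⋃ c ∈ t, A c), (f x - m c₀)^2 := by rw [← hAcover]
      _ ≤ ∑ c ∈ t, ∫ x in A c, (f x - m c₀)^2 := h
  have hperc : ∀ c ∈ t, ∫ x in A c, (f x - m c₀)^2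
      ≤ Q * (1 / a c + 2 * (n c:ℝ)^2 * e * a c) := by
    intro c hc
    haveI : IsFiniteMeasure (volume.restrict (A c)) :=
      ⟨by rw [Measure.restrict_apply_univ]
          exact lt_of_le_of_lt (measure_mono (hAsub c)) hΩfin⟩
    have hint1 : IntegrableOn (fun x => (f x - m c)^2) (A c) volume := hIres (m c) _ (hAsub c)
    have hintsum : Integrable (fun x => 2*(f x - m c)^2 + 2*(m c - m c₀)^2)
        (volume.restrict (A c)) := (hint1.const_mul 2).add (integrable_const _)
    have hmono : ∫ x in A c, (f x - m c₀)^2 ∂volume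
        ≤ ∫ x in A c, (2*(f x - m c)^2 + 2*(m c - m c₀)^2) ∂volume := by
      refine integral_mono (hIres (m c₀) _ (hAsub c)) hintsum (fun x => ?_)
      nlinarith [sq_nonneg (f x - 2*m c + m c₀)]
    have hsplit : ∫ x in A c, (2*(f x - m c)^2 + 2*(m c - m c₀)^2) ∂volume
        = 2 * V c + 2*(m c - m c₀)^2 * a c := by
      rw [integral_add (hint1.const_mul 2) (integrable_const _), integral_const_mul,
        setIntegral_const, smul_eq_mul, measureReal_def]
      ring
    have hac := hApos c hc
    have h1 : 2 * V c ≤ Q / a c := by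
      rw [le_div_iff₀ hac]
      calc 2 * V c * a c = 2 * a c * V c := by ring
        _ ≤ Q := hVQ c hc
    have h2 := hpathb c hc
    calc ∫ x in A c, (f x - m c₀)^2 ≤ 2 * V c + 2*(m c - m c₀)^2 * a c := by
          rw [← hsplit]; exact hmono
      _ ≤ Q / a c + 2*((n c:ℝ)^2 * (e*Q)) * a c := by nlinarith [hac.le]
      _ = Q * (1 / a c + 2 * (n c:ℝ)^2 * e * a c) := by field_simp
  have hsum : ∫ x in Ω, f x^2 ≤ Q * K := by
    calc ∫ x in Ω, f x^2 ≤ ∫ x in Ω, (f x - m c₀)^2 := hmean2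
      _ ≤ ∑ c ∈ t, ∫ x in A c, (f x - m c₀)^2 := hcover_int
      _ ≤ ∑ c ∈ t, Q * (1 / a c + 2 * (n c:ℝ)^2 * e * a c) := Finset.sum_le_sum hperc
      _ = Q * K := by rw [hK, Finset.mul_sum]
  have hRfinal : (J 0/4) * Q ≤ ∫ x in Ω, (-(∫ y in Ω, J (x - y) * (f y - f x))) * f x := by
    rw [hRHS]; linarith [hlow]
  have hCpos : (0:ℝ) ≤ J 0 / (4*K) := le_of_lt (div_pos hJ0 (by linarith))
  have hCK : J 0/(4*K) * (Q*K) = (J 0/4)*Q := by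
    field_simp
  calc (J 0/(4*K)) * ∫ x in Ω, f x^2 ≤ (J 0/(4*K)) * (Q*K) :=
        mul_le_mul_of_nonneg_left hsum hCpos
    _ = (J 0/4)*Q := hCK
    _ ≤ _ := hRfinal
end
end

section
/- If (λ, φ) is a principal eigenpair of −L (for any parameters D > 0, σ > 0, k ≥ 0), then −max_{(t,x) ∈ [0,T] × cl(Ω)} a(t,x) ≤ λ ≤ −min_{(t,x) ∈ [0,T] × cl(Ω)} a(t,x). -/
open MeasureTheory Filter Topology

theorem eigenvalue_bounds_by_sup_inf_of_a
    (N : ℕ) (hN : 1 ≤ N)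
    (Ω : Set (EuclideanSpace ℝ (Fin N)))
    (hΩne : Ω.Nonempty) (hΩopen : IsOpen Ω) (hΩbdd : Bornology.IsBounded Ω)
    (hΩconn : IsConnected Ω)
    (J : EuclideanSpace ℝ (Fin N) → ℝ)
    (hJcont : Continuous J) (hJnonneg : ∀ x, 0 ≤ J x)
    (γ : ℝ) (hγ : 0 < γ)
    (hJsupp : Function.support J ⊆ Metric.ball (0 : EuclideanSpace ℝ (Fin N)) γ)
    (hJ0 : 0 < J 0) (hJint : ∫ x, J x = 1)
    (T : ℝ) (hT : 0 < T)
    (a : ℝ → EuclideanSpace ℝ (Fin N) → ℝ)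
    (hacont : Continuous fun p : ℝ × EuclideanSpace ℝ (Fin N) => a p.1 p.2)
    (haper : ∀ t x, a (t + T) x = a t x)
    (D σ k : ℝ) (hD : 0 < D) (hσ : 0 < σ) (hk : 0 ≤ k)
    (lam : ℝ) (φ : ℝ → EuclideanSpace ℝ (Fin N) → ℝ)
    (heig : isPEigenpair Ω J a T D σ k lam φ) :
    -(sSup ((fun p : ℝ × EuclideanSpace ℝ (Fin N) => a p.1 p.2) ''
        (Set.Icc 0 T ×ˢ closure Ω))) ≤ lam ∧
      lam ≤ -(sInf ((fun p : ℝ × EuclideanSpace ℝ (Fin N) => a p.1 p.2) ''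
        (Set.Icc 0 T ×ˢ closure Ω))) := by

  obtain ⟨⟨⟨hcont, hC1, hper⟩, hpos⟩, heqn⟩ := heig
  have hclΩ : IsCompact (closure Ω) := hΩbdd.isCompact_closure
  have hKcomp : IsCompact (Set.Icc (0:ℝ) T ×ˢ closure Ω) := isCompact_Icc.prod hclΩ
  obtain ⟨x₀, hx₀⟩ := hΩne
  have hx₀cl : x₀ ∈ closure Ω := subset_closure hx₀
  have hKne : (Set.Icc (0:ℝ) T ×ˢ closure Ω).Nonempty :=
    ⟨(0, x₀), Set.mem_prod.2 ⟨Set.left_mem_Icc.2 hT.le, hx₀cl⟩⟩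
  have hφK : ContinuousOn (fun p : ℝ × EuclideanSpace ℝ (Fin N) => φ p.1 p.2)
      (Set.Icc (0:ℝ) T ×ˢ closure Ω) :=
    hcont.mono (fun p hp => ⟨Set.mem_univ _, hp.2⟩)
  have haimg : IsCompact ((fun p : ℝ × EuclideanSpace ℝ (Fin N) => a p.1 p.2) ''
      (Set.Icc (0:ℝ) T ×ˢ closure Ω)) := hKcomp.image hacont
  have hbddAbove := haimg.bddAbove
  have hbddBelow := haimg.bddBelow
  have hcpos : 0 < D / σ ^ ((N : ℝ) + k) := div_pos hD (Real.rpow_pos_of_pos hσ _)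
  constructor
  · -- max point argument
    obtain ⟨p₀, hp₀K, hp₀max⟩ := hKcomp.exists_isMaxOn hKne hφK
    have hp₀cl : p₀.2 ∈ closure Ω := hp₀K.2
    have hglob : ∀ t : ℝ, ∀ y ∈ closure Ω, φ t y ≤ φ p₀.1 p₀.2 := by
      intro t y hy
      have hperiodic : Function.Periodic (fun s => φ s y) T := fun s => hper s y
      obtain ⟨t', ht', heqt⟩ := hperiodic.exists_mem_Ico₀ hT t
      have : φ t y = φ t' y := heqt
      rw [this]
      have hm : (t', y) ∈ Set.Icc (0:ℝ) T ×ˢ closure Ω :=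
        Set.mem_prod.2 ⟨⟨ht'.1, ht'.2.le⟩, hy⟩
      exact hp₀max hm
    have hloc : IsLocalMax (fun s => φ s p₀.2) p₀.1 :=
      Filter.Eventually.of_forall (fun s => hglob s p₀.2 hp₀cl)
    have hderiv : deriv (fun s => φ s p₀.2) p₀.1 = 0 := hloc.deriv_eq_zero
    have hint : (∫ y in Ω, J (σ⁻¹ • (p₀.2 - y)) * (φ p₀.1 y - φ p₀.1 p₀.2)) ≤ 0 := by
      refine setIntegral_nonpos hΩopen.measurableSet (fun y hy => ?_)
      exact mul_nonpos_of_nonneg_of_nonpos (hJnonneg _)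
        (sub_nonpos.2 (hglob p₀.1 y (subset_closure hy)))
    have heq0 := heqn p₀.1 p₀.2 hp₀cl
    simp only [nlOp, hderiv] at heq0
    have hφpos : 0 < φ p₀.1 p₀.2 := hpos p₀.1 p₀.2 hp₀cl
    have hprod : 0 ≤ (a p₀.1 p₀.2 + lam) * φ p₀.1 p₀.2 := by
      nlinarith [mul_nonpos_of_nonneg_of_nonpos hcpos.le hint]
    have h1 : 0 ≤ a p₀.1 p₀.2 + lam := by
      by_contra h
      push_neg at h
      nlinarith
    have hle : a p₀.1 p₀.2 ≤ sSup ((fun p : ℝ × EuclideanSpace ℝ (Fin N) => a p.1 p.2) ''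
        (Set.Icc (0:ℝ) T ×ˢ closure Ω)) := le_csSup hbddAbove ⟨p₀, hp₀K, rfl⟩
    linarith
  · -- min point argument
    obtain ⟨p₀, hp₀K, hp₀min⟩ := hKcomp.exists_isMinOn hKne hφK
    have hp₀cl : p₀.2 ∈ closure Ω := hp₀K.2
    have hglob : ∀ t : ℝ, ∀ y ∈ closure Ω, φ p₀.1 p₀.2 ≤ φ t y := by
      intro t y hy
      have hperiodic : Function.Periodic (fun s => φ s y) T := fun s => hper s y
      obtain ⟨t', ht', heqt⟩ := hperiodic.exists_mem_Ico₀ hT t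
      have : φ t y = φ t' y := heqt
      rw [this]
      have hm : (t', y) ∈ Set.Icc (0:ℝ) T ×ˢ closure Ω :=
        Set.mem_prod.2 ⟨⟨ht'.1, ht'.2.le⟩, hy⟩
      exact hp₀min hm
    have hloc : IsLocalMin (fun s => φ s p₀.2) p₀.1 :=
      Filter.Eventually.of_forall (fun s => hglob s p₀.2 hp₀cl)
    have hderiv : deriv (fun s => φ s p₀.2) p₀.1 = 0 := hloc.deriv_eq_zero
    have hint : 0 ≤ (∫ y in Ω, J (σ⁻¹ • (p₀.2 - y)) * (φ p₀.1 y - φ p₀.1 p₀.2)) := by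
      refine setIntegral_nonneg hΩopen.measurableSet (fun y hy => ?_)
      exact mul_nonneg (hJnonneg _)
        (sub_nonneg.2 (hglob p₀.1 y (subset_closure hy)))
    have heq0 := heqn p₀.1 p₀.2 hp₀cl
    simp only [nlOp, hderiv] at heq0
    have hφpos : 0 < φ p₀.1 p₀.2 := hpos p₀.1 p₀.2 hp₀cl
    have hprod : (a p₀.1 p₀.2 + lam) * φ p₀.1 p₀.2 ≤ 0 := by
      nlinarith [mul_nonneg hcpos.le hint]
    have h1 : a p₀.1 p₀.2 + lam ≤ 0 := by
      by_contra h
      push_neg at h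
      nlinarith
    have hle : sInf ((fun p : ℝ × EuclideanSpace ℝ (Fin N) => a p.1 p.2) ''
        (Set.Icc (0:ℝ) T ×ˢ closure Ω)) ≤ a p₀.1 p₀.2 := csInf_le hbddBelow ⟨p₀, hp₀K, rfl⟩
    linarith
end
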